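/- arXiv:math/9811100 — 4 statements merged into one kernel-verified Lean document; each statement's English description precedes it below -/
import Mathlib

section
/- Let n ≥ 1 and let x be an invertible n×n real matrix. Then all minors of x are nonnegative if and only if x lies in the closure, inside the group of invertible n×n real matrices, of the set of totally positive matrices; equivalently, x is the limit of a sequence of invertible matrices all of whose minors are positive. -/
/-- A square real matrix is totally nonnegative if every minor (determinant of a
square submatrix selected by strictly increasing row and column indices) is nonnegative. -/
def TotallyNonneg {n : ℕ} (x : Matrix (Fin n) (Fin n) ℝ) : Prop :=
  ∀ (k : ℕ) (f g : Fin k → Fin n), StrictMono f → StrictMono g →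
    0 ≤ (x.submatrix f g).det

/-- A square real matrix is totally positive if every minor is positive. -/
def TotallyPos {n : ℕ} (x : Matrix (Fin n) (Fin n) ℝ) : Prop :=
  ∀ (k : ℕ) (f g : Fin k → Fin n), StrictMono f → StrictMono g →
    0 < (x.submatrix f g).det


open Finset Matrix Equiv

variable {R : Type*} [CommRing R]

noncomputable def monoEnum {n k : ℕ} (s : {s : Finset (Fin n) // s.card = k}) : Fin k → Fin n :=
  s.1.orderEmbOfFin s.2

lemma monoEnum_strictMono {n k : ℕ} (s : {s : Finset (Fin n) // s.card = k}) :
    StrictMono (monoEnum s) := (s.1.orderEmbOfFin s.2).strictMono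

lemma monoEnum_injective {n k : ℕ} (s : {s : Finset (Fin n) // s.card = k}) :
    Function.Injective (monoEnum s) := (monoEnum_strictMono s).injective

lemma monoEnum_mem {n k : ℕ} (s : {s : Finset (Fin n) // s.card = k}) (i : Fin k) :
    monoEnum s i ∈ s.1 := Finset.orderEmbOfFin_mem _ _ _

lemma cb1 {k n : ℕ} (A : Matrix (Fin k) (Fin n) R) (B : Matrix (Fin n) (Fin k) R) :
    (A * B).det = ∑ p : Fin k → Fin n, (∏ i, B (p i) i) * (A.submatrix id p).det := by
  rw [det_apply']
  simp only [Matrix.mul_apply, Finset.prod_univ_sum, Fintype.piFinset_univ, Finset.mul_sum]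
  rw [Finset.sum_comm]
  refine Finset.sum_congr rfl fun p _ => ?_
  rw [det_apply', Finset.mul_sum]
  refine Finset.sum_congr rfl fun σ _ => ?_
  rw [Finset.prod_mul_distrib]
  simp only [Matrix.submatrix_apply, id_eq]
  ring

noncomputable def imgOf {n k : ℕ} (p : {p : Fin k → Fin n // Function.Injective p}) :
    {s : Finset (Fin n) // s.card = k} :=
  ⟨Finset.univ.image p.1, by
    rw [Finset.card_image_of_injective _ p.2, Finset.card_univ, Fintype.card_fin]⟩

noncomputable def permOf {n k : ℕ} (p : {p : Fin k → Fin n // Function.Injective p}) :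
    Equiv.Perm (Fin k) :=
  Equiv.ofBijective
    (fun i => ((imgOf p).1.orderIsoOfFin (imgOf p).2).symm
      ⟨p.1 i, Finset.mem_image_of_mem p.1 (Finset.mem_univ i)⟩)
    (by
      rw [← Finite.injective_iff_bijective]
      intro a b hab
      have := congrArg (((imgOf p).1.orderIsoOfFin (imgOf p).2)) hab
      simp only [OrderIso.apply_symm_apply, Subtype.mk.injEq] at this
      exact p.2 (congrArg Subtype.val this))

lemma monoEnum_permOf {n k : ℕ} (p : {p : Fin k → Fin n // Function.Injective p}) (i : Fin k) :
    monoEnum (imgOf p) (permOf p i) = p.1 i := by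
  simp only [monoEnum, permOf, Equiv.ofBijective_apply, ← Finset.coe_orderIsoOfFin_apply]
  simp

noncomputable def injEquiv {n k : ℕ} :
    ({s : Finset (Fin n) // s.card = k} × Equiv.Perm (Fin k)) ≃
      {p : Fin k → Fin n // Function.Injective p} where
  toFun q := ⟨monoEnum q.1 ∘ q.2, (monoEnum_injective q.1).comp q.2.injective⟩
  invFun p := (imgOf p, permOf p)
  left_inv := by
    rintro ⟨s, τ⟩
    set p : {p : Fin k → Fin n // Function.Injective p} :=
      ⟨monoEnum s ∘ τ, (monoEnum_injective s).comp τ.injective⟩ with hp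
    have himg : (imgOf p).1 = s.1 := by
      apply Finset.eq_of_subset_of_card_le
      · intro a ha
        rcases Finset.mem_image.1 ha with ⟨i, _, rfl⟩
        exact monoEnum_mem s (τ i)
      · rw [s.2, (imgOf p).2]
    have hmono : monoEnum (imgOf p) = monoEnum s := by
      unfold monoEnum
      rw [Finset.orderEmbOfFin_unique (f := ((imgOf p).1.orderEmbOfFin (imgOf p).2)) s.2
        (fun i => himg ▸ Finset.orderEmbOfFin_mem _ _ _) ((imgOf p).1.orderEmbOfFin (imgOf p).2).strictMono]
    refine Prod.ext (Subtype.ext himg) ?_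
    ext i
    have h1 : monoEnum (imgOf p) (permOf p i) = monoEnum s (τ i) := monoEnum_permOf p i
    rw [hmono] at h1
    exact congrArg Fin.val (monoEnum_injective s h1)
  right_inv := fun p => Subtype.ext (funext fun i => monoEnum_permOf p i)

theorem cauchy_binet {k n : ℕ} (A : Matrix (Fin k) (Fin n) R) (B : Matrix (Fin n) (Fin k) R) :
    (A * B).det = ∑ s : {s : Finset (Fin n) // s.card = k},
      (A.submatrix id (monoEnum s)).det * (B.submatrix (monoEnum s) id).det := by
  classical
  rw [cb1]
  have hzero : ∀ p : Fin k → Fin n,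
      (∏ i, B (p i) i) * (A.submatrix id p).det ≠ 0 → Function.Injective p := by
    intro p h
    by_contra hni
    apply h
    obtain ⟨a, b, hab, hne⟩ : ∃ a b, p a = p b ∧ a ≠ b := by
      rw [Function.Injective] at hni
      push_neg at hni
      exact ⟨_, _, hni.choose_spec.choose_spec.1, hni.choose_spec.choose_spec.2⟩
    have : (A.submatrix id p).det = 0 :=
      Matrix.det_zero_of_column_eq hne fun i => by simp [Matrix.submatrix_apply, hab]
    rw [this, mul_zero]
  rw [← Finset.sum_filter_of_ne (p := fun p => Function.Injective p)
    (fun p _ h => hzero p h)]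
  rw [Finset.sum_subtype (p := fun p : Fin k → Fin n => Function.Injective p)
    (Finset.univ.filter fun p => Function.Injective p)
    (by simp) (fun p => (∏ i, B (p i) i) * (A.submatrix id p).det)]
  rw [← Equiv.sum_comp (injEquiv (n := n) (k := k))
    (fun p => (∏ i, B (p.1 i) i) * (A.submatrix id p.1).det)]
  rw [Fintype.sum_prod_type]
  refine Finset.sum_congr rfl fun s _ => ?_
  -- inner sum over permutations
  have hsub : ∀ τ : Equiv.Perm (Fin k),
      A.submatrix id (monoEnum s ∘ τ) = (A.submatrix id (monoEnum s)).submatrix id τ := by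
    intro τ; rw [Matrix.submatrix_submatrix]; rfl
  simp only [injEquiv, Equiv.coe_fn_mk, Function.comp_apply]
  calc ∑ τ : Equiv.Perm (Fin k), (∏ i, B ((monoEnum s ∘ τ) i) i) *
        (A.submatrix id (monoEnum s ∘ τ)).det
      = ∑ τ : Equiv.Perm (Fin k), (A.submatrix id (monoEnum s)).det *
        ((Equiv.Perm.sign τ : ℤ) * ∏ i, B (monoEnum s (τ i)) i) := by
        refine Finset.sum_congr rfl fun τ _ => ?_
        rw [hsub τ, Matrix.det_permute']
        simp only [Function.comp_apply]
        ring
    _ = (A.submatrix id (monoEnum s)).det * (B.submatrix (monoEnum s) id).det := by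
        rw [← Finset.mul_sum]
        congr 1
        rw [det_apply']
        refine Finset.sum_congr rfl fun τ _ => ?_
        simp [Matrix.submatrix_apply]

open Finset Matrix

/-- positivity of the Cauchy determinant, by induction. -/
lemma cauchy_det_pos : ∀ (k : ℕ) (x y : Fin k → ℝ), StrictMono x → StrictMono y →
    (∀ i j, 0 < x i + y j) → 0 < (Matrix.of fun i j => (x i + y j)⁻¹).det
  | 0, x, y, _, _, _ => by simp [Matrix.det_fin_zero]
  | (k+1), x, y, hx, hy, hpos => by
    have hne : ∀ i j, x i + y j ≠ 0 := fun i j => (hpos i j).ne'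
    set C : Matrix (Fin (k+1)) (Fin (k+1)) ℝ := Matrix.of fun i j => (x i + y j)⁻¹ with hC
    -- Step 1: subtract row 0 from the other rows
    set B1 : Matrix (Fin (k+1)) (Fin (k+1)) ℝ := Matrix.of fun i j =>
      if i = 0 then (x 0 + y j)⁻¹
      else (x 0 - x i) * ((x i + y j)⁻¹ * (x 0 + y j)⁻¹) with hB1
    have h1 : C.det = B1.det := by
      apply Matrix.det_eq_of_forall_row_eq_smul_add_const
        (fun i => if i = 0 then 0 else 1) 0 (by simp)
      intro i j
      by_cases hi : i = 0
      · simp [hC, hB1, hi]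
      · simp only [hC, hB1, Matrix.of_apply, hi, if_neg hi, ite_false, if_true]
        have h0j := hne 0 j
        have hij := hne i j
        field_simp
        ring
    -- Step 2: pull out the column factors (x 0 + y j)⁻¹
    set B2 : Matrix (Fin (k+1)) (Fin (k+1)) ℝ := Matrix.of fun i j =>
      if i = 0 then 1 else (x 0 - x i) * (x i + y j)⁻¹ with hB2
    have h2 : B1.det = (∏ j, (x 0 + y j)⁻¹) * B2.det := by
      rw [← Matrix.det_mul_row (fun j => (x 0 + y j)⁻¹) B2]
      congr 1
      ext i j
      by_cases hi : i = 0 <;> simp [hB1, hB2, hi] <;> ring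
    -- Step 3: subtract column 0 from the other columns
    set B3 : Matrix (Fin (k+1)) (Fin (k+1)) ℝ := Matrix.of fun i j =>
      if i = 0 then (if j = 0 then 1 else 0)
      else (x 0 - x i) * (if j = 0 then (x i + y 0)⁻¹
        else (y 0 - y j) * ((x i + y j)⁻¹ * (x i + y 0)⁻¹)) with hB3
    have h3 : B2.det = B3.det := by
      rw [← Matrix.det_transpose B2, ← Matrix.det_transpose B3]
      apply Matrix.det_eq_of_forall_row_eq_smul_add_const
        (fun j => if j = 0 then 0 else 1) 0 (by simp)
      intro j i
      by_cases hj : j = 0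
      · simp [hB2, hB3, hj]
      · by_cases hi : i = 0
        · simp [hB2, hB3, hi, hj]
        · simp only [hB2, hB3, Matrix.transpose_apply, Matrix.of_apply, if_neg hi, if_neg hj,
            ite_false, if_true]
          have h0j := hne i j
          have hij := hne i 0
          field_simp
          ring
    -- Step 4: expand along the first row
    have h4 : B3.det = (B3.submatrix Fin.succ Fin.succ).det := by
      rw [Matrix.det_succ_row_zero]
      rw [Finset.sum_eq_single 0]
      · simp [hB3, Fin.succAbove_zero]
      · intro j _ hj
        simp [hB3, hj]
      · simp
    -- Step 5: factor the remaining matrix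
    have h5 : (B3.submatrix Fin.succ Fin.succ).det =
        (∏ i : Fin k, ((x 0 - x i.succ) * (x i.succ + y 0)⁻¹)) *
        ((∏ j : Fin k, (y 0 - y j.succ)) *
          (Matrix.of fun i j : Fin k => (x i.succ + y j.succ)⁻¹).det) := by
      rw [← Matrix.det_mul_row (fun j : Fin k => (y 0 - y j.succ))
        (Matrix.of fun i j : Fin k => (x i.succ + y j.succ)⁻¹)]
      rw [← Matrix.det_mul_column (fun i : Fin k => (x 0 - x i.succ) * (x i.succ + y 0)⁻¹)]
      congr 1
      ext i j
      simp only [hB3, Matrix.submatrix_apply, Matrix.of_apply, Fin.succ_ne_zero, ite_false]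
      ring
    have hIH : 0 < (Matrix.of fun i j : Fin k => (x i.succ + y j.succ)⁻¹).det :=
      cauchy_det_pos k (x ∘ Fin.succ) (y ∘ Fin.succ) (hx.comp Fin.strictMono_succ)
        (hy.comp Fin.strictMono_succ) (fun i j => hpos i.succ j.succ)
    rw [h1, h2, h3, h4, h5]
    have hp1 : 0 < ∏ j, (x 0 + y j)⁻¹ :=
      Finset.prod_pos fun j _ => inv_pos.2 (hpos 0 j)
    have hp2 : 0 < (∏ i : Fin k, ((x 0 - x i.succ) * (x i.succ + y 0)⁻¹)) *
        ∏ j : Fin k, (y 0 - y j.succ) := by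
      rw [← Finset.prod_mul_distrib]
      refine Finset.prod_pos fun i _ => ?_
      have hxi : x 0 - x i.succ < 0 := by
        simp only [sub_neg]
        exact hx (Fin.succ_pos i)
      have hyi : y 0 - y i.succ < 0 := by
        simp only [sub_neg]
        exact hy (Fin.succ_pos i)
      have : 0 < (x i.succ + y 0)⁻¹ := inv_pos.2 (hpos i.succ 0)
      exact mul_pos_of_neg_of_neg (mul_neg_of_neg_of_pos hxi this) hyi
    calc (0:ℝ) < (∏ j, (x 0 + y j)⁻¹) * (((∏ i : Fin k, ((x 0 - x i.succ) * (x i.succ + y 0)⁻¹)) *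
          ∏ j : Fin k, (y 0 - y j.succ)) *
          (Matrix.of fun i j : Fin k => (x i.succ + y j.succ)⁻¹).det) :=
        mul_pos hp1 (mul_pos hp2 hIH)
      _ = _ := by ring

open Finset Matrix Filter Topology

noncomputable def MQ (n : ℕ) (q : ℝ) : Matrix (Fin n) (Fin n) ℝ :=
  Matrix.of fun i j => (2 * (q ^ (i : ℕ) * q ^ (j : ℕ))) *
    (q ^ (2 * (i : ℕ)) + q ^ (2 * (j : ℕ)))⁻¹

lemma MQ_tendsto (n : ℕ) : Tendsto (fun q : ℝ => MQ n q) atTop (𝓝 1) := by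
  refine tendsto_pi_nhds.2 ?_
  intro i
  rw [tendsto_pi_nhds]
  intro j
  by_cases hij : i = j
  · subst hij
    have h1 : (1 : Matrix (Fin n) (Fin n) ℝ) i i = 1 := Matrix.one_apply_eq i
    rw [h1]
    apply Tendsto.congr' (f₁ := fun _ => (1:ℝ))
    · filter_upwards [eventually_gt_atTop (0:ℝ)] with q hq
      have hqi : (0:ℝ) < q ^ (2 * (i : ℕ)) := pow_pos hq _
      show (1:ℝ) = MQ n q i i
      simp only [MQ, Matrix.of_apply]
      rw [← pow_add]
      field_simp
      ring
    · exact tendsto_const_nhds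
  · have h1 : (1 : Matrix (Fin n) (Fin n) ℝ) i j = 0 := Matrix.one_apply_ne hij
    rw [h1]
    have key : ∀ q : ℝ, 1 ≤ q → 0 ≤ MQ n q i j ∧ MQ n q i j ≤ 2 / q := by
      intro q hq
      have hq0 : (0:ℝ) < q := lt_of_lt_of_le one_pos hq
      have hD : (0:ℝ) < q ^ (2 * (i : ℕ)) + q ^ (2 * (j : ℕ)) :=
        add_pos (pow_pos hq0 _) (pow_pos hq0 _)
      have hent : MQ n q i j = (2 * q ^ ((i : ℕ) + (j : ℕ))) /
          (q ^ (2 * (i : ℕ)) + q ^ (2 * (j : ℕ))) := by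
        simp only [MQ, Matrix.of_apply, div_eq_mul_inv, pow_add]
      constructor
      · rw [hent]
        positivity
      · rw [hent, div_le_div_iff₀ hD hq0]
        have hexp : (i : ℕ) + (j : ℕ) + 1 ≤ 2 * max (i : ℕ) (j : ℕ) := by
          have : (i : ℕ) ≠ (j : ℕ) := fun h => hij (Fin.ext h)
          omega
        have h2 : q ^ ((i : ℕ) + (j : ℕ) + 1) ≤ q ^ (2 * max (i : ℕ) (j : ℕ)) :=
          pow_le_pow_right₀ hq hexp
        have h3 : q ^ (2 * max (i : ℕ) (j : ℕ)) ≤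
            q ^ (2 * (i : ℕ)) + q ^ (2 * (j : ℕ)) := by
          rcases max_cases (i : ℕ) (j : ℕ) with ⟨h, _⟩ | ⟨h, _⟩ <;> rw [h] <;>
            [skip; skip] <;> nlinarith [pow_pos hq0 (2 * (i:ℕ)), pow_pos hq0 (2 * (j:ℕ))]
        calc 2 * q ^ ((i:ℕ) + (j:ℕ)) * q = 2 * q ^ ((i:ℕ) + (j:ℕ) + 1) := by ring
          _ ≤ 2 * q ^ (2 * max (i : ℕ) (j : ℕ)) := by linarith
          _ ≤ (q ^ (2*(i:ℕ)) + q ^ (2*(j:ℕ))) * 2 := by linarith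
          _ = 2 * (q ^ (2*(i:ℕ)) + q ^ (2*(j:ℕ))) := by ring
    apply tendsto_of_tendsto_of_tendsto_of_le_of_le' (g := fun _ => (0:ℝ))
      (h := fun q : ℝ => 2 / q) tendsto_const_nhds
    · have : Tendsto (fun q : ℝ => q⁻¹) atTop (𝓝 0) := tendsto_inv_atTop_zero
      have h2 := this.const_mul (2:ℝ)
      simpa [div_eq_mul_inv] using h2
    · filter_upwards [eventually_ge_atTop (1:ℝ)] with q hq
      exact (key q hq).1
    · filter_upwards [eventually_ge_atTop (1:ℝ)] with q hq
      exact (key q hq).2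

lemma MQ_totallyPos {n : ℕ} {q : ℝ} (hq : 1 < q) : TotallyPos (MQ n q) := by
  intro k f g hf hg
  have hq0 : (0:ℝ) < q := lt_trans one_pos hq
  set C : Matrix (Fin k) (Fin k) ℝ := Matrix.of fun i j =>
    ((fun i : Fin k => q ^ (2 * ((f i : ℕ)))) i + (fun j : Fin k => q ^ (2 * ((g j : ℕ)))) j)⁻¹
    with hCdef
  set B : Matrix (Fin k) (Fin k) ℝ := Matrix.of fun i j => q ^ ((g j : ℕ)) * C i j with hBdef
  have heq : (MQ n q).submatrix f g = Matrix.of fun i j => (2 * q ^ ((f i : ℕ))) * B i j := by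
    ext i j
    simp only [MQ, Matrix.submatrix_apply, Matrix.of_apply, hBdef, hCdef]
    ring
  rw [heq, Matrix.det_mul_column (fun i => 2 * q ^ ((f i : ℕ))) B, hBdef,
    Matrix.det_mul_row (fun j => q ^ ((g j : ℕ))) C]
  have hc : 0 < C.det := by
    rw [hCdef]
    apply cauchy_det_pos
    · intro a b hab
      exact pow_lt_pow_right₀ hq (by
        have : (f a : ℕ) < (f b : ℕ) := hf hab
        omega)
    · intro a b hab
      exact pow_lt_pow_right₀ hq (by
        have : (g a : ℕ) < (g b : ℕ) := hg hab
        omega)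
    · intro i j
      exact add_pos (pow_pos hq0 _) (pow_pos hq0 _)
  refine mul_pos (Finset.prod_pos fun i _ => by positivity)
    (mul_pos (Finset.prod_pos fun i _ => by positivity) hc)

lemma exists_minor_ne_zero {n k : ℕ} (x : Matrix (Fin n) (Fin n) ℝ) (hx : IsUnit x)
    (f : Fin k → Fin n) (hf : Function.Injective f) :
    ∃ s : {s : Finset (Fin n) // s.card = k}, (x.submatrix f (monoEnum s)).det ≠ 0 := by
  obtain ⟨u, hu⟩ := hx
  have hxy : x * (↑u⁻¹ : Matrix (Fin n) (Fin n) ℝ) = 1 := by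
    rw [← hu]; exact u.mul_inv
  by_contra h
  push_neg at h
  have h1 : ((x * (↑u⁻¹ : Matrix (Fin n) (Fin n) ℝ)).submatrix f f).det = 1 := by
    rw [hxy, Matrix.submatrix_one f hf, Matrix.det_one]
  rw [Matrix.submatrix_mul x _ f id f Function.bijective_id, cauchy_binet] at h1
  have h2 : ∀ s : {s : Finset (Fin n) // s.card = k},
      ((x.submatrix f id).submatrix id (monoEnum s)).det = 0 := by
    intro s
    have : (x.submatrix f id).submatrix id (monoEnum s) = x.submatrix f (monoEnum s) := by
      rw [Matrix.submatrix_submatrix]; rfl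
    rw [this]
    exact h s
  rw [Finset.sum_eq_zero (fun s _ => by rw [h2 s, zero_mul])] at h1
  exact one_ne_zero h1.symm

lemma totallyNonneg_mul_totallyPos {n : ℕ} {x M : Matrix (Fin n) (Fin n) ℝ}
    (hTN : TotallyNonneg x) (hx : IsUnit x) (hM : TotallyPos M) : TotallyPos (x * M) := by
  intro k f g hf hg
  rw [Matrix.submatrix_mul x M f id g Function.bijective_id, cauchy_binet]
  have he1 : ∀ s : {s : Finset (Fin n) // s.card = k},
      (x.submatrix f id).submatrix id (monoEnum s) = x.submatrix f (monoEnum s) := fun s => by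
    rw [Matrix.submatrix_submatrix]; rfl
  have he2 : ∀ s : {s : Finset (Fin n) // s.card = k},
      (M.submatrix id g).submatrix (monoEnum s) id = M.submatrix (monoEnum s) g := fun s => by
    rw [Matrix.submatrix_submatrix]; rfl
  obtain ⟨s₀, hs₀⟩ := exists_minor_ne_zero x hx f hf.injective
  refine Finset.sum_pos' (fun s _ => ?_) ⟨s₀, Finset.mem_univ _, ?_⟩
  · rw [he1 s, he2 s]
    exact mul_nonneg (hTN k f (monoEnum s) hf (monoEnum_strictMono s))
      (le_of_lt (hM k (monoEnum s) g (monoEnum_strictMono s) hg))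
  · rw [he1 s₀, he2 s₀]
    exact mul_pos (lt_of_le_of_ne (hTN k f (monoEnum s₀) hf (monoEnum_strictMono s₀)) (Ne.symm hs₀))
      (hM k (monoEnum s₀) g (monoEnum_strictMono s₀) hg)

/-- An invertible matrix is totally nonnegative iff it lies in the closure of the
set of totally positive matrices. -/
theorem stmt1 (n : ℕ) (hn : 1 ≤ n) (x : Matrix (Fin n) (Fin n) ℝ) (hx : IsUnit x) :
    TotallyNonneg x ↔ x ∈ closure {y : Matrix (Fin n) (Fin n) ℝ | TotallyPos y} := by
  constructor
  · intro hTN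
    have hcont : Continuous fun M : Matrix (Fin n) (Fin n) ℝ => x * M :=
      Continuous.matrix_mul continuous_const continuous_id
    have htd : Tendsto (fun q : ℝ => x * MQ n q) atTop (𝓝 x) := by
      have := (hcont.tendsto (1 : Matrix (Fin n) (Fin n) ℝ)).comp (MQ_tendsto n)
      simpa [Function.comp_def] using this
    refine mem_closure_of_tendsto htd ?_
    filter_upwards [eventually_gt_atTop (1:ℝ)] with q hq
    exact totallyNonneg_mul_totallyPos hTN hx (MQ_totallyPos hq)
  · intro h k f g hf hg
    have hcont : Continuous fun y : Matrix (Fin n) (Fin n) ℝ => (y.submatrix f g).det :=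
      (continuous_id.matrix_submatrix f g).matrix_det
    have hsub : closure {y : Matrix (Fin n) (Fin n) ℝ | TotallyPos y} ⊆
        {y | 0 ≤ (y.submatrix f g).det} :=
      closure_minimal (fun y hy => (hy k f g hf hg).le)
        (isClosed_le continuous_const hcont)
    exact hsub h
end

section
/- Let n ≥ 2 and let x be an invertible totally nonnegative n×n real matrix. Then x is oscillatory (i.e., some positive integer power of x is totally positive) if and only if x_{i,i+1} > 0 and x_{i+1,i} > 0 for every i ∈ {1, …, n−1}. -/
/-- A matrix is oscillatory if some positive integer power of it is totally positive. -/
def Oscillatory {n : ℕ} (x : Matrix (Fin n) (Fin n) ℝ) : Prop :=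
  ∃ m : ℕ, 0 < m ∧ TotallyPos (x ^ m)

open Finset Function Equiv Matrix

namespace GK

variable {n k : ℕ}

lemma sm_one {N : ℕ} (i : Fin N) : StrictMono (fun _ : Fin 1 => i) := by
  intro a b hab
  have : a.1 < b.1 := hab
  omega

lemma sm_two {N : ℕ} {i j : Fin N} (h : i < j) : StrictMono ![i, j] := by
  intro a b hab
  have hab' : a.1 < b.1 := hab
  have ha2 := a.2
  have hb2 := b.2
  have ha : a = 0 := by
    apply Fin.ext; simp only [Fin.val_zero]; omega
  have hb : b = 1 := by
    apply Fin.ext; simp only [Fin.val_one]; omega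
  subst ha; subst hb
  simpa using h

lemma det_sub_two {N : ℕ} (A : Matrix (Fin N) (Fin N) ℝ) (i j a b : Fin N) :
    (A.submatrix ![i, j] ![a, b]).det = A i a * A j b - A i b * A j a := by
  rw [Matrix.det_fin_two]; simp

lemma entry_nonneg {A : Matrix (Fin n) (Fin n) ℝ} (h : TotallyNonneg A) (i j : Fin n) :
    0 ≤ A i j := by
  have := h 1 (fun _ => i) (fun _ => j) (sm_one i) (sm_one j)
  rwa [Matrix.det_fin_one] at this

lemma tnn_two {A : Matrix (Fin n) (Fin n) ℝ} (h : TotallyNonneg A) {i j a b : Fin n}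
    (hij : i < j) (hab : a < b) : A i b * A j a ≤ A i a * A j b := by
  have := h 2 ![i, j] ![a, b] (sm_two hij) (sm_two hab)
  rw [det_sub_two] at this
  linarith

lemma det_nonneg {A : Matrix (Fin n) (Fin n) ℝ} (h : TotallyNonneg A) : 0 ≤ A.det := by
  have := h n id id strictMono_id strictMono_id
  rwa [Matrix.submatrix_id_id] at this

lemma det_pos {A : Matrix (Fin n) (Fin n) ℝ} (hu : IsUnit A) (h : TotallyNonneg A) :
    0 < A.det := by
  rcases (det_nonneg h).lt_or_eq with h' | h'
  · exact h'
  · exact absurd ((Matrix.isUnit_iff_isUnit_det A).mp hu) (by simp [← h'])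

lemma tnn_transpose {A : Matrix (Fin n) (Fin n) ℝ} (h : TotallyNonneg A) :
    TotallyNonneg Aᵀ := by
  intro k f g hf hg
  have : (Aᵀ.submatrix f g) = (A.submatrix g f)ᵀ := by
    ext i j; simp [Matrix.submatrix_apply, Matrix.transpose_apply]
  rw [this, Matrix.det_transpose]
  exact h k g f hg hf

lemma isUnit_transpose {A : Matrix (Fin n) (Fin n) ℝ} (h : IsUnit A) : IsUnit Aᵀ := by
  rw [Matrix.isUnit_iff_isUnit_det] at h ⊢
  rwa [Matrix.det_transpose]

/-- reversal of a matrix -/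
def rv (A : Matrix (Fin n) (Fin n) ℝ) : Matrix (Fin n) (Fin n) ℝ :=
  A.submatrix Fin.rev Fin.rev

/-- reversal of an index map -/
def frev (f : Fin k → Fin n) : Fin k → Fin n := fun i => Fin.rev (f (Fin.rev i))

lemma frev_strictMono {f : Fin k → Fin n} (hf : StrictMono f) : StrictMono (frev f) := by
  intro a b hab
  show Fin.rev (f (Fin.rev a)) < Fin.rev (f (Fin.rev b))
  rw [Fin.rev_lt_rev]
  exact hf (Fin.rev_lt_rev.mpr hab)

lemma minor_rv (A : Matrix (Fin n) (Fin n) ℝ) (f g : Fin k → Fin n) :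
    ((rv A).submatrix f g).det = (A.submatrix (frev f) (frev g)).det := by
  have h1 : A.submatrix (frev f) (frev g) =
      ((rv A).submatrix f g).submatrix (Fin.revPerm : Equiv.Perm (Fin k)) Fin.revPerm := by
    ext i j
    rfl
  rw [h1, Matrix.det_submatrix_equiv_self]

lemma frev_frev (f : Fin k → Fin n) : frev (frev f) = f := by
  funext i
  show Fin.rev (Fin.rev (f (Fin.rev (Fin.rev i)))) = f i
  rw [Fin.rev_rev, Fin.rev_rev]

lemma rv_rv (A : Matrix (Fin n) (Fin n) ℝ) : rv (rv A) = A := by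
  ext i j
  show A (Fin.rev (Fin.rev i)) (Fin.rev (Fin.rev j)) = A i j
  rw [Fin.rev_rev, Fin.rev_rev]

lemma minor_rv' (A : Matrix (Fin n) (Fin n) ℝ) (f g : Fin k → Fin n) :
    (A.submatrix f g).det = ((rv A).submatrix (frev f) (frev g)).det := by
  rw [minor_rv, frev_frev, frev_frev]

lemma tnn_rv {A : Matrix (Fin n) (Fin n) ℝ} (h : TotallyNonneg A) : TotallyNonneg (rv A) := by
  intro k f g hf hg
  rw [minor_rv]
  exact h k (frev f) (frev g) (frev_strictMono hf) (frev_strictMono hg)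

lemma det_rv (A : Matrix (Fin n) (Fin n) ℝ) : (rv A).det = A.det := by
  have : rv A = A.submatrix (Fin.revPerm : Equiv.Perm (Fin n)) Fin.revPerm := rfl
  rw [this, Matrix.det_submatrix_equiv_self]

lemma isUnit_rv {A : Matrix (Fin n) (Fin n) ℝ} (h : IsUnit A) : IsUnit (rv A) := by
  rw [Matrix.isUnit_iff_isUnit_det] at h ⊢
  rwa [det_rv]


variable {n k : ℕ}

instance : DecidablePred (@StrictMono (Fin k) (Fin n) _ _) := fun f =>
  decidable_of_iff (∀ a b : Fin k, a < b → f a < f b) Iff.rfl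

local notation "ε " σ:arg => ((Equiv.Perm.sign σ : ℤ) : ℝ)

theorem cb_aux {M : Matrix (Fin k) (Fin n) ℝ} {N : Matrix (Fin n) (Fin k) ℝ}
    {p : Fin k → Fin n} (H : ¬Injective p) :
    (∑ σ : Perm (Fin k), ε σ * ∏ x, M (σ x) (p x) * N (p x) x) = 0 := by
  obtain ⟨i, j, hpij, hij⟩ : ∃ i j, p i = p j ∧ i ≠ j := by
    rw [Injective] at H
    push_neg at H
    obtain ⟨a, b, h1, h2⟩ := H
    exact ⟨a, b, h1, h2⟩
  exact
    sum_involution (fun σ _ => σ * Equiv.swap i j)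
      (fun σ _ => by
        have : (∏ x, M (σ x) (p x)) = ∏ x, M ((σ * Equiv.swap i j) x) (p x) :=
          Fintype.prod_equiv (Equiv.swap i j) _ _ (by simp [Equiv.apply_swap_eq_self hpij])
        simp [this, Equiv.Perm.sign_swap hij, -Equiv.Perm.sign_swap', prod_mul_distrib])
      (fun σ _ _ => (not_congr Equiv.mul_swap_eq_iff).mpr hij) (fun _ _ => mem_univ _)
      fun σ _ => Equiv.mul_swap_involutive i j σ

/-- The pairing equivalence: (strictly monotone map, permutation) ≃ injective map. -/
noncomputable def monoPerm : {s : Fin k → Fin n // StrictMono s} × Perm (Fin k) ≃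
    {p : Fin k → Fin n // Injective p} := by
  apply Equiv.ofBijective (fun x => ⟨x.1.1 ∘ x.2, x.1.2.injective.comp x.2.injective⟩)
  constructor
  · rintro ⟨⟨s, hs⟩, τ⟩ ⟨⟨s', hs'⟩, τ'⟩ h
    simp only [Prod.mk.injEq, Subtype.mk.injEq] at h ⊢
    have him : Finset.image s univ = Finset.image s' univ := by
      have h1 : Finset.image (s ∘ τ) univ = Finset.image (s' ∘ τ') univ := by rw [h]
      rwa [← Finset.image_image (g := s), ← Finset.image_image (g := s'),
        Finset.image_univ_equiv, Finset.image_univ_equiv] at h1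
    have hcard : (Finset.image s univ).card = k := by
      rw [Finset.card_image_of_injective _ hs.injective, card_univ, Fintype.card_fin]
    have hcard' : (Finset.image s' univ).card = k := by
      rw [Finset.card_image_of_injective _ hs'.injective, card_univ, Fintype.card_fin]
    have hs1 : s = (Finset.image s univ).orderEmbOfFin hcard :=
      Finset.orderEmbOfFin_unique hcard (fun x => Finset.mem_image_of_mem _ (mem_univ x)) hs
    have hs2 : s' = (Finset.image s univ).orderEmbOfFin hcard := by
      refine Finset.orderEmbOfFin_unique hcard (fun x => ?_) hs'
      rw [him]; exact Finset.mem_image_of_mem _ (mem_univ x)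
    have hss' : s = s' := hs1.trans hs2.symm
    subst hss'
    exact ⟨rfl, Equiv.ext fun i => hs.injective (congrFun h i)⟩
  · rintro ⟨p, hp⟩
    have hS : (Finset.image p univ).card = k := by
      rw [Finset.card_image_of_injective _ hp, card_univ, Fintype.card_fin]
    set S := Finset.image p univ with hSdef
    have hmem : ∀ i, p i ∈ S := fun i => Finset.mem_image_of_mem _ (mem_univ i)
    let ψ := S.orderIsoOfFin hS
    let t : Fin k → Fin k := fun i => ψ.symm ⟨p i, hmem i⟩
    have htinj : Injective t := by
      intro a b hab
      have := congrArg (fun z => (ψ z : Fin n)) hab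
      simp only [t, OrderIso.apply_symm_apply] at this
      exact hp this
    let τ : Perm (Fin k) := Equiv.ofBijective t ((Finite.injective_iff_bijective).mp htinj)
    refine ⟨⟨⟨S.orderEmbOfFin hS, (S.orderEmbOfFin hS).strictMono⟩, τ⟩, ?_⟩
    apply Subtype.ext
    funext i
    show S.orderEmbOfFin hS (ψ.symm ⟨p i, hmem i⟩) = p i
    rw [← Finset.coe_orderIsoOfFin_apply]
    show ((ψ (ψ.symm ⟨p i, hmem i⟩)) : Fin n) = p i
    rw [OrderIso.apply_symm_apply]

theorem cauchyBinet (P : Matrix (Fin k) (Fin n) ℝ) (Q : Matrix (Fin n) (Fin k) ℝ) :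
    det (P * Q) = ∑ s : {s : Fin k → Fin n // StrictMono s},
      det (P.submatrix id s.1) * det (Q.submatrix s.1 id) := by
  have step1 : ∀ {m : ℕ} (M : Matrix (Fin k) (Fin m) ℝ) (N : Matrix (Fin m) (Fin k) ℝ),
      det (M * N) = ∑ p : Fin k → Fin m, ∑ σ : Perm (Fin k),
        ε σ * ∏ i, M (σ i) (p i) * N (p i) i := by
    intro m M N
    simp only [det_apply', mul_apply, prod_univ_sum, mul_sum, Fintype.piFinset_univ]
    rw [Finset.sum_comm]
  have square : ∀ (M : Matrix (Fin k) (Fin k) ℝ) (N : Matrix (Fin k) (Fin k) ℝ),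
      (∑ τ : Perm (Fin k), ∑ σ : Perm (Fin k),
        ε σ * ∏ i, M (σ i) (τ i) * N (τ i) i) = det (M * N) := by
    intro M N
    rw [step1 M N]
    symm
    calc (∑ p : Fin k → Fin k, ∑ σ : Perm (Fin k), ε σ * ∏ i, M (σ i) (p i) * N (p i) i)
        = ∑ p : Fin k → Fin k with Bijective p, ∑ σ : Perm (Fin k),
            ε σ * ∏ i, M (σ i) (p i) * N (p i) i := by
          refine (sum_subset (filter_subset _ _) fun f _ hbij ↦ Matrix.det_mul_aux ?_).symm
          simpa only [true_and, mem_filter, mem_univ] using hbij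
      _ = ∑ τ : Perm (Fin k), ∑ σ : Perm (Fin k), ε σ * ∏ i, M (σ i) (τ i) * N (τ i) i :=
          sum_bij (fun p h ↦ Equiv.ofBijective p (mem_filter.1 h).2) (fun _ _ ↦ mem_univ _)
            (fun _ _ _ _ h ↦ by injection h)
            (fun b _ ↦ ⟨b, mem_filter.2 ⟨mem_univ _, b.bijective⟩, coe_fn_injective rfl⟩)
            fun _ _ ↦ rfl
  rw [step1 P Q]
  have h2 : (∑ p : Fin k → Fin n, ∑ σ : Perm (Fin k), ε σ * ∏ i, P (σ i) (p i) * Q (p i) i)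
      = ∑ p : Fin k → Fin n with Injective p, ∑ σ : Perm (Fin k),
          ε σ * ∏ i, P (σ i) (p i) * Q (p i) i := by
    refine (sum_subset (filter_subset _ _) fun f _ hinj ↦ cb_aux ?_).symm
    simpa only [true_and, mem_filter, mem_univ] using hinj
  rw [h2]
  rw [Finset.sum_subtype (filter (fun p => Injective p) univ)
      (p := fun p : Fin k → Fin n => Injective p)
      (by intro x; simp) (fun p => ∑ σ : Perm (Fin k), ε σ * ∏ i, P (σ i) (p i) * Q (p i) i)]
  rw [← Equiv.sum_comp monoPerm
      (fun q : {p : Fin k → Fin n // Injective p} =>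
        ∑ σ : Perm (Fin k), ε σ * ∏ i, P (σ i) (q.1 i) * Q (q.1 i) i)]
  rw [Fintype.sum_prod_type]
  refine Finset.sum_congr rfl fun s _ => ?_
  have hmp : ∀ τ : Perm (Fin k), (monoPerm (s, τ)).1 = s.1 ∘ τ := fun τ => rfl
  simp_rw [hmp]
  have hsq := square (P.submatrix id s.1) (Q.submatrix s.1 id)
  rw [Matrix.det_mul] at hsq
  rw [← hsq]
  refine Finset.sum_congr rfl fun τ _ => Finset.sum_congr rfl fun σ _ => ?_
  simp [Matrix.submatrix_apply, Function.comp_apply]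

variable {n k : ℕ}

/-- Schur complement with respect to the (0,0) entry. -/
noncomputable def sc (A : Matrix (Fin (n + 1)) (Fin (n + 1)) ℝ) : Matrix (Fin n) (Fin n) ℝ :=
  fun i j => A i.succ j.succ - A i.succ 0 / A 0 0 * A 0 j.succ

lemma cons_strictMono {f : Fin k → Fin n} (hf : StrictMono f) :
    StrictMono (Fin.cons 0 (Fin.succ ∘ f) : Fin (k + 1) → Fin (n + 1)) := by
  intro a b hab
  induction b using Fin.cases with
  | zero => exact absurd hab (by simp)
  | succ b =>
    induction a using Fin.cases with
    | zero =>
      simp only [Fin.cons_zero, Fin.cons_succ, Function.comp_apply]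
      exact Fin.succ_pos _
    | succ a =>
      simp only [Fin.cons_succ, Function.comp_apply, Fin.succ_lt_succ_iff]
      exact hf (Fin.succ_lt_succ_iff.mp hab)

/-- Sylvester-type identity for the Schur complement: bordered minors of `A`
are `A 0 0` times minors of `sc A`. -/
theorem sylvester (A : Matrix (Fin (n + 1)) (Fin (n + 1)) ℝ) (hA : A 0 0 ≠ 0)
    (f g : Fin k → Fin n) :
    (A.submatrix (Fin.cons 0 (Fin.succ ∘ f)) (Fin.cons 0 (Fin.succ ∘ g))).det
      = A 0 0 * ((sc A).submatrix f g).det := by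
  set M := A.submatrix (Fin.cons 0 (Fin.succ ∘ f)) (Fin.cons 0 (Fin.succ ∘ g)) with hM
  -- the elimination matrix
  set L : Matrix (Fin (k + 1)) (Fin (k + 1)) ℝ :=
    fun i j => if i = j then 1 else if j = 0 then -(M i 0 / M 0 0) else 0 with hL
  have hLtri : L.BlockTriangular OrderDual.toDual := by
    intro i j hij
    have h1 : ¬(i = j) := by
      intro h; subst h; exact lt_irrefl _ hij
    have h2 : ¬(j = 0) := by
      intro h; subst h; exact absurd hij (by simp [Fin.le_zero_iff.symm]; exact Fin.zero_le i)
    simp [hL, h1, h2]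
  have hLdet : L.det = 1 := by
    rw [Matrix.det_of_lowerTriangular L hLtri]
    apply Finset.prod_eq_one
    intro i _
    simp [hL]
  have hLM : (L * M).det = M.det := by rw [Matrix.det_mul, hLdet, one_mul]
  -- compute L * M
  have hprod : ∀ j, (L * M) 0 j = M 0 j := by
    intro j
    rw [Matrix.mul_apply]
    rw [Finset.sum_eq_single 0]
    · simp [hL]
    · intro b _ hb
      have h1 : ¬((0 : Fin (k+1)) = b) := fun h => hb h.symm
      simp [hL, h1, hb]
    · simp
  have hprod2 : ∀ (i : Fin k) (j : Fin (k + 1)),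
      (L * M) i.succ j = M i.succ j - M i.succ 0 / M 0 0 * M 0 j := by
    intro i j
    rw [Matrix.mul_apply]
    rw [Finset.sum_eq_add_of_mem 0 i.succ (by simp) (by simp) (Ne.symm (Fin.succ_ne_zero i))]
    · simp [hL, Fin.succ_ne_zero, (Fin.succ_ne_zero i).symm]
      ring
    · intro c _ hc
      rcases hc with ⟨hc0, hcs⟩
      have h1 : ¬(i.succ = c) := fun h => hcs h.symm
      simp [hL, h1, hc0]
  -- now expand the determinant of L * M along the first column
  have hM00 : M 0 0 = A 0 0 := by simp [hM]
  rw [← hLM, Matrix.det_succ_column_zero]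
  rw [Finset.sum_eq_single 0]
  · rw [hprod]
    have hsub : (L * M).submatrix (Fin.succAbove 0) Fin.succ = (sc A).submatrix f g := by
      ext i j
      rw [Matrix.submatrix_apply, Fin.succAbove_zero, hprod2]
      simp [hM, sc, Matrix.submatrix_apply, Fin.cons_succ, Fin.cons_zero]
    rw [hsub]
    simp [hM00, hM]
  · intro b _ hb
    induction b using Fin.cases with
    | zero => exact absurd rfl hb
    | succ b =>
      rw [hprod2, hM00]
      have h0 : M b.succ 0 - M b.succ 0 / A 0 0 * A 0 0 = 0 := by
        field_simp
        ring
      rw [h0]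
      ring
  · simp

/-! ### Cauchy–Binet corollaries -/

theorem cauchyBinet_sub {N : ℕ} (A B : Matrix (Fin N) (Fin N) ℝ) (f g : Fin k → Fin N) :
    ((A * B).submatrix f g).det = ∑ s : {s : Fin k → Fin N // StrictMono s},
      (A.submatrix f s.1).det * (B.submatrix s.1 g).det := by
  have h1 : (A * B).submatrix f g = (A.submatrix f id) * (B.submatrix id g) := by
    ext i j
    simp [Matrix.mul_apply, Matrix.submatrix_apply]
  rw [h1, cauchyBinet]
  refine Finset.sum_congr rfl fun s _ => ?_
  congr 1 <;> · congr 1; ext i j; simp [Matrix.submatrix_apply]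

lemma tnn_mul {N : ℕ} {A B : Matrix (Fin N) (Fin N) ℝ}
    (hA : TotallyNonneg A) (hB : TotallyNonneg B) : TotallyNonneg (A * B) := by
  intro k f g hf hg
  rw [cauchyBinet_sub]
  apply Finset.sum_nonneg
  intro s _
  exact mul_nonneg (hA k f s.1 hf s.2) (hB k s.1 g s.2 hg)

lemma tnn_pow {N : ℕ} {A : Matrix (Fin N) (Fin N) ℝ} (hA : TotallyNonneg A)
    {m : ℕ} (hm : 1 ≤ m) : TotallyNonneg (A ^ m) := by
  induction m with
  | zero => omega
  | succ m IH =>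
    rcases Nat.eq_or_lt_of_le hm with h | h
    · rw [← h, pow_one]; exact hA
    · rw [pow_succ]
      exact tnn_mul (IH (by omega)) hA

lemma cb_lower_bound {N : ℕ} {A B : Matrix (Fin N) (Fin N) ℝ}
    (hA : TotallyNonneg A) (hB : TotallyNonneg B) {f g h : Fin k → Fin N}
    (hf : StrictMono f) (hg : StrictMono g) (hh : StrictMono h) :
    (A.submatrix f h).det * (B.submatrix h g).det ≤ ((A * B).submatrix f g).det := by
  rw [cauchyBinet_sub]
  exact Finset.single_le_sum (f := fun s : {s : Fin k → Fin N // StrictMono s} =>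
      (A.submatrix f s.1).det * (B.submatrix s.1 g).det)
    (fun s _ => mul_nonneg (hA k f s.1 hf s.2) (hB k s.1 g s.2 hg))
    (Finset.mem_univ ⟨h, hh⟩)

/-! ### Good matrices -/

/-- invertible, totally nonnegative, with positive sub- and superdiagonal -/
structure Good {N : ℕ} (A : Matrix (Fin N) (Fin N) ℝ) : Prop where
  inv : IsUnit A
  tnn : TotallyNonneg A
  band : ∀ i j : Fin N, (j : ℕ) = (i : ℕ) + 1 → 0 < A i j ∧ 0 < A j i

lemma Good.transpose {N : ℕ} {A : Matrix (Fin N) (Fin N) ℝ} (h : Good A) : Good Aᵀ :=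
  ⟨isUnit_transpose h.inv, tnn_transpose h.tnn,
    fun i j hij => ⟨(h.band i j hij).2, (h.band i j hij).1⟩⟩

lemma Good.rv {N : ℕ} {A : Matrix (Fin N) (Fin N) ℝ} (h : Good A) : Good (rv A) := by
  refine ⟨isUnit_rv h.inv, tnn_rv h.tnn, fun i j hij => ?_⟩
  have h1 : (i.rev : ℕ) = (j.rev : ℕ) + 1 := by
    have hi := i.2; have hj := j.2
    simp only [Fin.val_rev]
    omega
  have := h.band j.rev i.rev h1
  exact ⟨this.2, this.1⟩

/-! ### positivity of A 0 0 -/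

lemma a00_pos {N : ℕ} {A : Matrix (Fin (N + 1)) (Fin (N + 1)) ℝ}
    (hu : IsUnit A) (h : TotallyNonneg A) : 0 < A 0 0 := by
  rcases (entry_nonneg h 0 0).lt_or_eq with h' | h'
  · exact h'
  have hdet : A.det ≠ 0 := by
    have := (Matrix.isUnit_iff_isUnit_det A).mp hu
    exact this.ne_zero
  by_cases hrow : ∀ t, A 0 t = 0
  · exact absurd (Matrix.det_eq_zero_of_row_eq_zero 0 hrow) hdet
  push_neg at hrow
  obtain ⟨t, ht⟩ := hrow
  have ht0 : t ≠ 0 := by rintro rfl; exact ht h'.symm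
  have htpos : 0 < A 0 t := (entry_nonneg h 0 t).lt_of_ne (Ne.symm ht)
  have hcol : ∀ s, A s 0 = 0 := by
    intro s
    rcases eq_or_ne s 0 with rfl | hs
    · exact h'.symm
    · have hs' : (0 : Fin (N+1)) < s := Fin.pos_of_ne_zero hs
      have ht' : (0 : Fin (N+1)) < t := Fin.pos_of_ne_zero ht0
      have := tnn_two h hs' ht'
      -- A 0 t * A s 0 ≤ A 0 0 * A s t = 0
      have h2 : A 0 t * A s 0 ≤ 0 := by
        calc A 0 t * A s 0 ≤ A 0 0 * A s t := this
        _ = 0 := by rw [← h']; ring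
      have h3 : 0 ≤ A 0 t * A s 0 := mul_nonneg (entry_nonneg h 0 t) (entry_nonneg h s 0)
      have h4 : A 0 t * A s 0 = 0 := le_antisymm h2 h3
      rcases mul_eq_zero.mp h4 with h5 | h5
      · exact absurd h5 htpos.ne'
      · exact h5
  exact absurd (Matrix.det_eq_zero_of_column_eq_zero 0 hcol) hdet

/-! ### Schur complement is invertible and totally nonnegative -/

lemma cons_zero_succ_eq_castLE {m : ℕ} (hkm : k ≤ m) :
    (Fin.cons 0 (Fin.succ ∘ Fin.castLE hkm) : Fin (k + 1) → Fin (m + 1))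
      = Fin.castLE (by omega) := by
  funext i
  induction i using Fin.cases with
  | zero => rfl
  | succ i => rfl

lemma sc_det {N : ℕ} {A : Matrix (Fin (N + 1)) (Fin (N + 1)) ℝ} (hA : A 0 0 ≠ 0) :
    A.det = A 0 0 * (sc A).det := by
  have := sylvester A hA id id
  have h1 : (Fin.cons 0 (Fin.succ ∘ (id : Fin N → Fin N)) : Fin (N+1) → Fin (N+1)) = id := by
    funext i
    induction i using Fin.cases with
    | zero => rfl
    | succ i => rfl
  rw [h1] at this
  simpa [Matrix.submatrix_id_id] using this

lemma sc_isUnit {N : ℕ} {A : Matrix (Fin (N + 1)) (Fin (N + 1)) ℝ}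
    (hu : IsUnit A) (h0 : A 0 0 ≠ 0) : IsUnit (sc A) := by
  rw [Matrix.isUnit_iff_isUnit_det, isUnit_iff_ne_zero]
  have hdet : A.det ≠ 0 := ((Matrix.isUnit_iff_isUnit_det A).mp hu).ne_zero
  rw [sc_det h0] at hdet
  intro h
  rw [h, mul_zero] at hdet
  exact hdet rfl

lemma sc_tnn {N : ℕ} {A : Matrix (Fin (N + 1)) (Fin (N + 1)) ℝ}
    (h : TotallyNonneg A) (h0 : 0 < A 0 0) : TotallyNonneg (sc A) := by
  intro k f g hf hg
  have := h (k + 1) _ _ (cons_strictMono hf) (cons_strictMono hg)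
  rw [sylvester A h0.ne' f g] at this
  nlinarith [this]

/-! ### Leading principal minors of an invertible TNN matrix are positive -/

lemma tnn_sub {N m : ℕ} {A : Matrix (Fin N) (Fin N) ℝ} (h : TotallyNonneg A)
    {e : Fin m → Fin N} (he : StrictMono e) : TotallyNonneg (A.submatrix e e) := by
  intro k f g hf hg
  rw [Matrix.submatrix_submatrix]
  exact h k (e ∘ f) (e ∘ g) (he.comp hf) (he.comp hg)

theorem leading_pos : ∀ {N : ℕ} (A : Matrix (Fin N) (Fin N) ℝ), IsUnit A → TotallyNonneg A →
    ∀ (k : ℕ) (h : k ≤ N), 0 < (A.submatrix (Fin.castLE h) (Fin.castLE h)).det := by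
  intro N
  induction N with
  | zero =>
    intro A hu htnn k h
    have hk : k = 0 := by omega
    subst hk
    simp [Matrix.det_fin_zero]
  | succ N IH =>
    intro A hu htnn k h
    match k with
    | 0 => simp [Matrix.det_fin_zero]
    | k + 1 =>
      have hk : k ≤ N := by omega
      have h00 : 0 < A 0 0 := a00_pos hu htnn
      have hsyl := sylvester A h00.ne' (Fin.castLE hk) (Fin.castLE hk)
      rw [cons_zero_succ_eq_castLE hk] at hsyl
      have hBu : IsUnit (sc A) := sc_isUnit hu h00.ne'
      have hBt : TotallyNonneg (sc A) := sc_tnn htnn h00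
      have hpos := IH (sc A) hBu hBt k hk
      have : (A.submatrix (Fin.castLE h) (Fin.castLE h)).det
          = A 0 0 * ((sc A).submatrix (Fin.castLE hk) (Fin.castLE hk)).det := hsyl
      rw [this]
      positivity

lemma tail_exists {N k : ℕ} (f : Fin (k + 1) → Fin (N + 1)) (hf : StrictMono f)
    (hf0 : f 0 = 0) :
    ∃ f' : Fin k → Fin N, StrictMono f' ∧ f = Fin.cons 0 (Fin.succ ∘ f') := by
  have hne : ∀ i : Fin k, f i.succ ≠ 0 := by
    intro i h
    have := hf (Fin.succ_pos i)
    rw [hf0, h] at this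
    exact lt_irrefl _ this
  refine ⟨fun i => (f i.succ).pred (hne i), ?_, ?_⟩
  · intro a b hab
    have h1 : f a.succ < f b.succ := hf (Fin.succ_lt_succ_iff.mpr hab)
    have ha := (f a.succ).2
    simp only [Fin.lt_iff_val_lt_val, Fin.coe_pred]
    have h2 : (f a.succ : ℕ) < (f b.succ : ℕ) := h1
    have h3 : (f a.succ  : ℕ) ≠ 0 := fun hh => hne a (Fin.ext hh)
    omega
  · funext i
    induction i using Fin.cases with
    | zero => simpa using hf0
    | succ i => simp [Fin.succ_pred]

/-- If the first row/column index is 0, peel it off with the Schur complement. -/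
lemma principal_zero_case {N k : ℕ} (A : Matrix (Fin (N + 1)) (Fin (N + 1)) ℝ)
    (hu : IsUnit A) (htnn : TotallyNonneg A) (f : Fin (k + 1) → Fin (N + 1))
    (hf : StrictMono f) (hf0 : f 0 = 0)
    (IH : ∀ (B : Matrix (Fin N) (Fin N) ℝ), IsUnit B → TotallyNonneg B →
      ∀ (g : Fin k → Fin N), StrictMono g → 0 < (B.submatrix g g).det) :
    0 < (A.submatrix f f).det := by
  obtain ⟨f', hf', hff⟩ := tail_exists f hf hf0
  have h00 : 0 < A 0 0 := a00_pos hu htnn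
  rw [hff, sylvester A h00.ne' f' f']
  have := IH (sc A) (sc_isUnit hu h00.ne') (sc_tnn htnn h00) f' hf'
  positivity

theorem principal_pos : ∀ {N : ℕ} (A : Matrix (Fin N) (Fin N) ℝ), IsUnit A → TotallyNonneg A →
    ∀ {k : ℕ} (f : Fin k → Fin N), StrictMono f → 0 < (A.submatrix f f).det := by
  intro N
  induction N with
  | zero =>
    intro A hu htnn k f hf
    match k with
    | 0 => simp [Matrix.det_fin_zero]
    | k + 1 => exact (f 0).elim0
  | succ N IH =>
    intro A hu htnn k f hf
    match k with
    | 0 => simp [Matrix.det_fin_zero]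
    | k + 1 =>
      by_cases hfl : f (Fin.last k) = Fin.last N
      · -- use the reversal
        rw [minor_rv' A f f]
        have hfr0 : frev f 0 = 0 := by
          show Fin.rev (f (Fin.rev 0)) = 0
          rw [Fin.rev_zero, hfl, Fin.rev_last]
        exact principal_zero_case (rv A) (isUnit_rv hu) (tnn_rv htnn) (frev f)
          (frev_strictMono hf) hfr0 (fun B hB1 hB2 g hg => IH B hB1 hB2 g hg)
      · -- restrict to the leading principal block
        have hlt : ∀ i, (f i : ℕ) < N := by
          intro i
          have h1 : f i ≤ f (Fin.last k) := hf.monotone (Fin.le_last i)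
          have h2 : (f (Fin.last k) : ℕ) < N + 1 := (f (Fin.last k)).2
          have h3 : (f (Fin.last k) : ℕ) ≠ N := by
            intro hc
            exact hfl (Fin.ext (by simpa using hc))
          have h4 : (f i : ℕ) ≤ (f (Fin.last k) : ℕ) := h1
          omega
        set f'' : Fin (k + 1) → Fin N := fun i => ⟨f i, hlt i⟩ with hf''def
        have hNle : N ≤ N + 1 := by omega
        have hsub : A.submatrix f f
            = (A.submatrix (Fin.castLE hNle) (Fin.castLE hNle)).submatrix f'' f'' := by
          ext i j
          simp only [Matrix.submatrix_apply, hf''def]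
          congr 1 <;> exact Fin.ext rfl
        have hlead := leading_pos A hu htnn N hNle
        have hAu' : IsUnit (A.submatrix (Fin.castLE hNle) (Fin.castLE hNle)) := by
          rw [Matrix.isUnit_iff_isUnit_det, isUnit_iff_ne_zero]
          exact hlead.ne'
        have hAt' : TotallyNonneg (A.submatrix (Fin.castLE hNle) (Fin.castLE hNle)) :=
          tnn_sub htnn (Fin.strictMono_castLE hNle)
        have hf''m : StrictMono f'' := by
          intro a b hab
          have : (f a : ℕ) < (f b : ℕ) := hf hab
          exact this
        rw [hsub]
        exact IH _ hAu' hAt' f'' hf''m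

/-! ### more helpers -/

lemma minor_transpose {N : ℕ} (A : Matrix (Fin N) (Fin N) ℝ) (f g : Fin k → Fin N) :
    (A.submatrix f g).det = (Aᵀ.submatrix g f).det := by
  have : (Aᵀ.submatrix g f) = (A.submatrix f g)ᵀ := by
    ext i j; simp [Matrix.submatrix_apply, Matrix.transpose_apply]
  rw [this, Matrix.det_transpose]

lemma pair_comp {α β : Type*} (h : α → β) (x y : α) : h ∘ ![x, y] = ![h x, h y] := by
  funext i
  fin_cases i <;> rfl

lemma frev_pair {N : ℕ} (a b : Fin N) : frev ![a, b] = ![Fin.rev b, Fin.rev a] := by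
  funext i
  fin_cases i <;> rfl

lemma diag_pos {N : ℕ} {A : Matrix (Fin N) (Fin N) ℝ} (hu : IsUnit A)
    (htnn : TotallyNonneg A) (i : Fin N) : 0 < A i i := by
  have := principal_pos A hu htnn (fun _ : Fin 1 => i) (sm_one i)
  rwa [Matrix.det_fin_one] at this

lemma Good.lead {N : ℕ} {A : Matrix (Fin (N + 1)) (Fin (N + 1)) ℝ} (h : Good A) :
    Good (A.submatrix (Fin.castLE (Nat.le_succ N)) (Fin.castLE (Nat.le_succ N))) := by
  refine ⟨?_, tnn_sub h.tnn (Fin.strictMono_castLE _), ?_⟩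
  · rw [Matrix.isUnit_iff_isUnit_det, isUnit_iff_ne_zero]
    exact (leading_pos A h.inv h.tnn N (Nat.le_succ N)).ne'
  · intro i j hij
    exact h.band (Fin.castLE _ i) (Fin.castLE _ j) (by simpa using hij)

lemma Good.trail {N : ℕ} {A : Matrix (Fin (N + 1)) (Fin (N + 1)) ℝ} (h : Good A) :
    Good (A.submatrix Fin.succ Fin.succ) := by
  refine ⟨?_, tnn_sub h.tnn (Fin.strictMono_succ), ?_⟩
  · rw [Matrix.isUnit_iff_isUnit_det, isUnit_iff_ne_zero]
    exact (principal_pos A h.inv h.tnn Fin.succ Fin.strictMono_succ).ne'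
  · intro i j hij
    exact h.band i.succ j.succ (by simp [Fin.val_succ]; omega)

/-! ### the corner case of the key lemma -/

lemma K2corner {N : ℕ} {A : Matrix (Fin (N + 1)) (Fin (N + 1)) ℝ} (hA : Good A)
    (r l : Fin (N + 1)) (hr : (r : ℕ) + 2 = N + 1) (hl : (l : ℕ) + 1 = N + 1)
    (hr0 : (0 : ℕ) < r) :
    0 < (A.submatrix ![0, r] ![0, l]).det := by
  have hN : 3 ≤ N + 1 := by omega
  have h0r : (0 : Fin (N + 1)) < r := hr0
  have hrl : r < l := by
    simp only [Fin.lt_iff_val_lt_val]; omega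
  have h0l : (0 : Fin (N + 1)) < l := lt_trans h0r hrl
  have hD0 : 0 ≤ (A.submatrix ![0, r] ![0, l]).det :=
    hA.tnn 2 ![0, r] ![0, l] (sm_two h0r) (sm_two h0l)
  rcases hD0.lt_or_eq with h | hD
  · exact h
  exfalso
  rw [det_sub_two] at hD
  -- hD : 0 = A 0 0 * A r l - A 0 l * A r 0
  have h00 : 0 < A 0 0 := diag_pos hA.inv hA.tnn 0
  have hband : 0 < A r l := (hA.band r l (by omega)).1
  have hcross : 0 < A 0 l * A r 0 := by nlinarith
  have hAl : 0 < A 0 l := by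
    rcases (entry_nonneg hA.tnn 0 l).lt_or_eq with h | h
    · exact h
    · rw [← h] at hcross; nlinarith
  have hAr : 0 < A r 0 := by
    rcases (entry_nonneg hA.tnn r 0).lt_or_eq with h | h
    · exact h
    · rw [← h] at hcross; nlinarith
  -- every column is proportional
  have claim : ∀ t : Fin (N + 1), A 0 0 * A r t = A 0 t * A r 0 := by
    intro t
    rcases eq_or_ne t 0 with rfl | ht0
    · ring
    rcases eq_or_ne t l with rfl | htl
    · linarith
    have h0t : (0 : Fin (N + 1)) < t := Fin.pos_of_ne_zero ht0
    have htl' : t < l := by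
      have h1 := t.2
      have h2 : (t : ℕ) ≠ (l : ℕ) := fun hc => htl (Fin.ext hc)
      simp only [Fin.lt_iff_val_lt_val]
      omega
    have hm1 : 0 ≤ A 0 0 * A r t - A 0 t * A r 0 := by
      have := hA.tnn 2 ![0, r] ![0, t] (sm_two h0r) (sm_two h0t)
      rwa [det_sub_two] at this
    have hm2 : 0 ≤ A 0 t * A r l - A 0 l * A r t := by
      have := hA.tnn 2 ![0, r] ![t, l] (sm_two h0r) (sm_two htl')
      rwa [det_sub_two] at this
    -- A 0 l * (m1) + A 0 0 * (m2) = A 0 t * (A 0 0 * A r l - A 0 l * A r 0) = 0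
    have e1 : A 0 t * (A 0 0 * A r l - A 0 l * A r 0) = 0 := by rw [← hD]; ring
    nlinarith [mul_nonneg hAl.le hm1, mul_nonneg h00.le hm2, e1, hAl, h00]
  -- rows 0 and r are proportional, contradicting invertibility
  set c : ℝ := A r 0 / A 0 0 with hc
  have hrow : ∀ t, A r t = c * A 0 t := by
    intro t
    rw [hc]
    field_simp
    nlinarith [claim t]
  have hrne : r ≠ 0 := h0r.ne'
  have hzero : A r + (-c) • A 0 = 0 := by
    funext t
    simp [hrow t]
  have hdet0 : A.det = 0 := by
    rw [← Matrix.det_updateRow_add_smul_self A hrne (-c), hzero]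
    exact Matrix.det_eq_zero_of_row_eq_zero r (fun j => by simp)
  exact (det_pos hA.inv hA.tnn).ne' hdet0

/-! ### key lemma, 2x2 case -/

theorem K2up : ∀ {N : ℕ} {A : Matrix (Fin N) (Fin N) ℝ}, Good A →
    ∀ (a b c : Fin N), a < b → (c : ℕ) = (b : ℕ) + 1 →
    0 < (A.submatrix ![a, b] ![a, c]).det := by
  intro N
  induction N with
  | zero => intro A hA a b c hab hc; exact a.elim0
  | succ N IH =>
    intro A hA a b c hab hc
    have hbc : b < c := by simp only [Fin.lt_iff_val_lt_val]; omega
    have hac : a < c := lt_trans hab hbc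
    by_cases hcN : (c : ℕ) < N
    · -- restrict to leading block
      have hlt : ∀ x : Fin (N + 1), (x : ℕ) ≤ (c : ℕ) → (x : ℕ) < N := fun x hx => by omega
      set a' : Fin N := ⟨a, hlt a hac.le⟩
      set b' : Fin N := ⟨b, hlt b hbc.le⟩
      set c' : Fin N := ⟨c, hlt c le_rfl⟩
      have hsub : A.submatrix ![a, b] ![a, c]
          = (A.submatrix (Fin.castLE (Nat.le_succ N)) (Fin.castLE (Nat.le_succ N))).submatrix
              ![a', b'] ![a', c'] := by
        rw [Matrix.submatrix_submatrix, pair_comp, pair_comp]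
        congr 1 <;> (congr 1 <;> exact Fin.ext rfl)
      rw [hsub]
      exact IH hA.lead a' b' c' hab (by simpa using hc)
    · by_cases ha1 : 1 ≤ (a : ℕ)
      · -- restrict to trailing block
        have hc2 := c.2
        set a' : Fin N := ⟨(a : ℕ) - 1, by omega⟩ with ha'
        set b' : Fin N := ⟨(b : ℕ) - 1, by omega⟩ with hb'
        set c' : Fin N := ⟨(c : ℕ) - 1, by omega⟩ with hc'
        have hsa : a'.succ = a := Fin.ext (by simp [ha', Fin.val_succ]; omega)
        have hsb : b'.succ = b := Fin.ext (by simp [hb', Fin.val_succ]; omega)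
        have hsc : c'.succ = c := Fin.ext (by simp [hc', Fin.val_succ]; omega)
        have hsub : A.submatrix ![a, b] ![a, c]
            = (A.submatrix Fin.succ Fin.succ).submatrix ![a', b'] ![a', c'] := by
          rw [Matrix.submatrix_submatrix, pair_comp, pair_comp, hsa, hsb, hsc]
        rw [hsub]
        refine IH hA.trail a' b' c' ?_ ?_
        · have : (a : ℕ) < (b : ℕ) := hab
          show (a' : ℕ) < (b' : ℕ)
          simp only [ha', hb']; omega
        · show (c' : ℕ) = (b' : ℕ) + 1
          simp only [hb', hc']; omega
      · -- corner case
        have ha0 : a = 0 := by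
          apply Fin.ext
          simp only [Fin.val_zero]
          omega
        have hcN' : (c : ℕ) = N := by
          have := c.2; omega
        have hb2 : (b : ℕ) + 2 = N + 1 := by omega
        have hb0 : (0 : ℕ) < b := by
          have : (a : ℕ) < (b : ℕ) := hab
          omega
        rw [ha0]
        exact K2corner hA b c hb2 (by omega) hb0

/-! ### Schur complement of a Good matrix is Good -/

lemma sc_transpose {N : ℕ} (A : Matrix (Fin (N + 1)) (Fin (N + 1)) ℝ) :
    sc Aᵀ = (sc A)ᵀ := by
  ext i j
  simp only [sc, Matrix.transpose_apply]
  ring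

lemma sc_super {N : ℕ} {A : Matrix (Fin (N + 1)) (Fin (N + 1)) ℝ} (hA : Good A)
    (i j : Fin N) (hij : (j : ℕ) = (i : ℕ) + 1) : 0 < sc A i j := by
  have h00 : 0 < A 0 0 := a00_pos hA.inv hA.tnn
  have h2 := K2up hA 0 i.succ j.succ (Fin.succ_pos i)
    (by simp only [Fin.val_succ]; omega)
  rw [det_sub_two] at h2
  have h3 : A 0 0 * sc A i j = A 0 0 * A i.succ j.succ - A 0 j.succ * A i.succ 0 := by
    simp only [sc]
    field_simp
  by_contra hneg
  push_neg at hneg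
  nlinarith [mul_nonneg h00.le (neg_nonneg.mpr hneg)]

lemma Good.sc {N : ℕ} {A : Matrix (Fin (N + 1)) (Fin (N + 1)) ℝ} (hA : Good A) :
    Good (GK.sc A) := by
  have h00 : 0 < A 0 0 := a00_pos hA.inv hA.tnn
  refine ⟨sc_isUnit hA.inv h00.ne', sc_tnn hA.tnn h00, fun i j hij => ?_⟩
  refine ⟨sc_super hA i j hij, ?_⟩
  have := sc_super hA.transpose i j hij
  rwa [sc_transpose, Matrix.transpose_apply] at this

/-! ### general key lemma: single-shift quasi-principal minors are positive -/

/-- The Schur-reduction step for the key lemma. -/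
lemma KGen_schur {N K : ℕ} (A : Matrix (Fin (N + 1)) (Fin (N + 1)) ℝ) (hA : Good A)
    (f g : Fin (K + 1) → Fin (N + 1)) (hf : StrictMono f) (hg : StrictMono g)
    (j : Fin (K + 1)) (hj : j ≠ 0)
    (hs1 : ∀ t, t ≠ j → g t = f t) (hs2 : (g j : ℕ) = (f j : ℕ) + 1)
    (hf0 : f 0 = 0)
    (IH : ∀ (B : Matrix (Fin N) (Fin N) ℝ), Good B →
      ∀ (f' g' : Fin K → Fin N), StrictMono f' → StrictMono g' → ∀ (j' : Fin K),
      (∀ t, t ≠ j' → g' t = f' t) → ((g' j' : ℕ) = (f' j' : ℕ) + 1) →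
      0 < (B.submatrix f' g').det) :
    0 < (A.submatrix f g).det := by
  have h00 : 0 < A 0 0 := a00_pos hA.inv hA.tnn
  have hg0 : g 0 = 0 := by rw [hs1 0 (fun h => hj h.symm), hf0]
  obtain ⟨f', hf', hff⟩ := tail_exists f hf hf0
  obtain ⟨g', hg', hgg⟩ := tail_exists g hg hg0
  have hfs : ∀ t : Fin K, f t.succ = (f' t).succ := by
    intro t; rw [hff]; rfl
  have hgs : ∀ t : Fin K, g t.succ = (g' t).succ := by
    intro t; rw [hgg]; rfl
  set j' : Fin K := j.pred hj with hj'
  have hj's : j'.succ = j := Fin.succ_pred j hj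
  have ht1 : ∀ t, t ≠ j' → g' t = f' t := by
    intro t ht
    have hts : t.succ ≠ j := by
      intro hc
      apply ht
      rw [hj']
      subst hc
      exact (Fin.pred_succ t).symm
    have := hs1 t.succ hts
    rw [hfs, hgs] at this
    exact Fin.succ_injective _ this
  have ht2 : (g' j' : ℕ) = (f' j' : ℕ) + 1 := by
    have h1 : g j'.succ = (g' j').succ := hgs j'
    have h2 : f j'.succ = (f' j').succ := hfs j'
    rw [hj's] at h1 h2
    have hv1 : (g j : ℕ) = (g' j' : ℕ) + 1 := by rw [h1]; simp [Fin.val_succ]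
    have hv2 : (f j : ℕ) = (f' j' : ℕ) + 1 := by rw [h2]; simp [Fin.val_succ]
    omega
  rw [hff, hgg, sylvester A h00.ne' f' g']
  have := IH (GK.sc A) hA.sc f' g' hf' hg' j' ht1 ht2
  positivity

theorem KGen : ∀ {N : ℕ} {A : Matrix (Fin N) (Fin N) ℝ}, Good A →
    ∀ {k : ℕ} (f g : Fin k → Fin N), StrictMono f → StrictMono g → ∀ (j : Fin k),
    (∀ t, t ≠ j → g t = f t) → ((g j : ℕ) = (f j : ℕ) + 1) →
    0 < (A.submatrix f g).det := by
  intro N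
  induction N with
  | zero => intro A hA k f g hf hg j hs1 hs2; exact (f j).elim0
  | succ N IH =>
    intro A hA k f g hf hg j hs1 hs2
    match k with
    | 0 => exact j.elim0
    | 1 =>
      -- a single band entry
      have : (A.submatrix f g).det = A (f 0) (g 0) := Matrix.det_fin_one _
      rw [this]
      have hj0 : j = 0 := Subsingleton.elim j 0
      rw [hj0] at hs2
      exact (hA.band (f 0) (g 0) hs2).1
    | K + 2 =>
      have hfg_le : ∀ t, (f t : ℕ) ≤ (g t : ℕ) := by
        intro t
        rcases eq_or_ne t j with rfl | ht
        · omega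
        · rw [hs1 t ht]
      by_cases hgN : (g (Fin.last (K + 1)) : ℕ) < N
      · -- restrict to the leading block
        have hlt : ∀ t, (g t : ℕ) < N := by
          intro t
          have : g t ≤ g (Fin.last (K + 1)) := hg.monotone (Fin.le_last t)
          have : (g t : ℕ) ≤ (g (Fin.last (K + 1)) : ℕ) := this
          omega
        have hltf : ∀ t, (f t : ℕ) < N := fun t => lt_of_le_of_lt (hfg_le t) (hlt t)
        set F : Fin (K + 2) → Fin N := fun t => ⟨f t, hltf t⟩ with hF
        set G : Fin (K + 2) → Fin N := fun t => ⟨g t, hlt t⟩ with hG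
        have hsub : A.submatrix f g
            = (A.submatrix (Fin.castLE (Nat.le_succ N)) (Fin.castLE (Nat.le_succ N))).submatrix
                F G := by
          ext s t
          simp only [Matrix.submatrix_apply]
          congr 1 <;> exact Fin.ext rfl
        rw [hsub]
        refine IH hA.lead F G ?_ ?_ j ?_ ?_
        · intro s t hst; exact (show (f s : ℕ) < (f t : ℕ) from hf hst)
        · intro s t hst; exact (show (g s : ℕ) < (g t : ℕ) from hg hst)
        · intro t ht
          have := hs1 t ht
          apply Fin.ext
          simp only [hF, hG]
          rw [this]
        · exact hs2
      · by_cases hf1 : 1 ≤ (f 0 : ℕ)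
        · -- restrict to the trailing block
          have hge : ∀ t, 1 ≤ (f t : ℕ) := by
            intro t
            have : f 0 ≤ f t := hf.monotone (Fin.zero_le t)
            have : (f 0 : ℕ) ≤ (f t : ℕ) := this
            omega
          have hgeg : ∀ t, 1 ≤ (g t : ℕ) := fun t => le_trans (hge t) (hfg_le t)
          have hfb : ∀ t, (f t : ℕ) - 1 < N := by intro t; have := (f t).2; omega
          have hgb : ∀ t, (g t : ℕ) - 1 < N := by intro t; have := (g t).2; omega
          set F : Fin (K + 2) → Fin N := fun t => ⟨(f t : ℕ) - 1, hfb t⟩ with hF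
          set G : Fin (K + 2) → Fin N := fun t => ⟨(g t : ℕ) - 1, hgb t⟩ with hG
          have hfF : f = Fin.succ ∘ F := by
            funext t
            apply Fin.ext
            simp only [Function.comp_apply, Fin.val_succ, hF]
            have := hge t
            omega
          have hgG : g = Fin.succ ∘ G := by
            funext t
            apply Fin.ext
            simp only [Function.comp_apply, Fin.val_succ, hG]
            have := hgeg t
            omega
          have hsub : A.submatrix f g
              = (A.submatrix Fin.succ Fin.succ).submatrix F G := by
            rw [Matrix.submatrix_submatrix, ← hfF, ← hgG]
          rw [hsub]
          refine IH hA.trail F G ?_ ?_ j ?_ ?_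
          · intro s t hst
            have h1 : (f s : ℕ) < (f t : ℕ) := hf hst
            have := hge s
            show (f s : ℕ) - 1 < (f t : ℕ) - 1
            omega
          · intro s t hst
            have h1 : (g s : ℕ) < (g t : ℕ) := hg hst
            have := hgeg s
            show (g s : ℕ) - 1 < (g t : ℕ) - 1
            omega
          · intro t ht
            apply Fin.ext
            show (g t : ℕ) - 1 = (f t : ℕ) - 1
            rw [hs1 t ht]
          · show (g j : ℕ) - 1 = (f j : ℕ) - 1 + 1
            have := hge j
            omega
        · -- corner situation: f 0 = 0 and g last = N
          have hf0 : f 0 = 0 := by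
            apply Fin.ext
            simp only [Fin.val_zero]
            omega
          have hglast : (g (Fin.last (K + 1)) : ℕ) = N := by
            have := (g (Fin.last (K + 1))).2
            omega
          by_cases hj : j ≠ 0
          · exact KGen_schur A hA f g hf hg j hj hs1 hs2 hf0
              (fun B hB f' g' hf' hg' j' a b => IH hB f' g' hf' hg' j' a b)
          · push_neg at hj
            subst hj
            -- reversal + transpose
            have hN1 : 1 ≤ N := by
              have h1 := hs2
              have h2 := (g 0).2
              rw [hf0] at h1
              simp only [Fin.val_zero] at h1
              omega
            have heq : (A.submatrix f g).det = (((rv A)ᵀ).submatrix (frev g) (frev f)).det := by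
              rw [minor_rv' A f g, minor_transpose]
            rw [heq]
            have hX : Good ((rv A)ᵀ) := hA.rv.transpose
            refine KGen_schur ((rv A)ᵀ) hX (frev g) (frev f) (frev_strictMono hg)
              (frev_strictMono hf) (Fin.last (K + 1)) (Fin.ext_iff.not.mpr (by
                simp [Fin.val_last])) ?_ ?_ ?_
              (fun B hB f' g' hf' hg' j' a b => IH hB f' g' hf' hg' j' a b)
            · -- ∀ t ≠ last, frev f t = frev g t
              intro t ht
              show Fin.rev (f (Fin.rev t)) = Fin.rev (g (Fin.rev t))
              have hrt : Fin.rev t ≠ 0 := by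
                intro hc
                apply ht
                have := congrArg Fin.rev hc
                rw [Fin.rev_rev] at this
                rw [this, Fin.rev_zero]
              rw [hs1 (Fin.rev t) hrt]
            · -- values at last
              show (Fin.rev (f (Fin.rev (Fin.last (K + 1)))) : ℕ)
                  = (Fin.rev (g (Fin.rev (Fin.last (K + 1)))) : ℕ) + 1
              rw [Fin.rev_last]
              rw [hf0]
              have h1 : (g 0 : ℕ) = 1 := by
                rw [hf0] at hs2
                simpa using hs2
              simp only [Fin.val_rev]
              omega
            · -- (frev g) 0 = 0
              show Fin.rev (g (Fin.rev 0)) = 0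
              rw [Fin.rev_zero]
              apply Fin.ext
              simp only [Fin.val_rev, Fin.val_zero]
              omega

/-! ### walks between index maps -/

def fdist {N k : ℕ} (f g : Fin k → Fin N) : ℕ :=
  ∑ t, ((f t : ℕ) - (g t : ℕ) + ((g t : ℕ) - (f t : ℕ)))

lemma fdist_eq_zero {N k : ℕ} {f g : Fin k → Fin N} (h : fdist f g = 0) : f = g := by
  rw [fdist, Finset.sum_eq_zero_iff] at h
  funext t
  have := h t (mem_univ t)
  exact Fin.ext (by omega)

lemma fdist_self {N k : ℕ} (f : Fin k → Fin N) : fdist f f = 0 := by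
  simp [fdist]

lemma step_exists {N k : ℕ} {A : Matrix (Fin N) (Fin N) ℝ} (hA : Good A)
    {f g : Fin k → Fin N} (hf : StrictMono f) (hg : StrictMono g) (hne : f ≠ g) :
    ∃ h : Fin k → Fin N, StrictMono h ∧ 0 < (A.submatrix f h).det ∧
      fdist h g + 1 = fdist f g := by
  by_cases hS : (univ.filter (fun t => f t < g t)).Nonempty
  · -- move the largest index that must go up
    set t₀ := (univ.filter (fun t => f t < g t)).max' hS with ht₀
    have ht₀mem : f t₀ < g t₀ := by
      have := (univ.filter (fun t => f t < g t)).max'_mem hS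
      simp only [mem_filter] at this
      exact this.2
    have ht₀max : ∀ t, t₀ < t → ¬(f t < g t) := by
      intro t ht hc
      have : t ∈ univ.filter (fun t => f t < g t) := by simp [hc]
      have := Finset.le_max' _ t this
      omega
    have hlt : (f t₀ : ℕ) + 1 < N := by
      have h1 : (f t₀ : ℕ) < (g t₀ : ℕ) := ht₀mem
      have := (g t₀).2
      omega
    set v : Fin N := ⟨(f t₀ : ℕ) + 1, hlt⟩ with hv
    set h : Fin k → Fin N := Function.update f t₀ v with hh
    have hht : h t₀ = v := Function.update_self t₀ v f
    have hhno : ∀ t, t ≠ t₀ → h t = f t := fun t ht => Function.update_of_ne ht v f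
    have hmono : StrictMono h := by
      intro a b hab
      rcases eq_or_ne a t₀ with rfl | ha
      · rw [hht, hhno b (by exact fun hc => absurd (hc ▸ hab) (lt_irrefl _))]
        have hb : ¬(f b < g b) := ht₀max b hab
        have h1 : g t₀ < g b := hg hab
        show (v : ℕ) < (f b : ℕ)
        have h2 : (g t₀ : ℕ) < (g b : ℕ) := h1
        have h3 : (g b : ℕ) ≤ (f b : ℕ) := by
          by_contra hc
          exact hb (by omega)
        have h4 : (f t₀ : ℕ) < (g t₀ : ℕ) := ht₀mem
        simp only [hv]
        omega
      · rcases eq_or_ne b t₀ with rfl | hb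
        · rw [hht, hhno a ha]
          have : (f a : ℕ) < (f t₀ : ℕ) := hf hab
          show (f a : ℕ) < (v : ℕ)
          simp only [hv]
          omega
        · rw [hhno a ha, hhno b hb]
          exact hf hab
    refine ⟨h, hmono, ?_, ?_⟩
    · exact KGen hA f h hf hmono t₀ hhno (by rw [hht])
    · rw [fdist, fdist, ← Finset.add_sum_erase _ _ (mem_univ t₀),
        ← Finset.add_sum_erase _ _ (mem_univ t₀)]
      have he : ∀ t ∈ univ.erase t₀,
          ((h t : ℕ) - (g t : ℕ) + ((g t : ℕ) - (h t : ℕ)))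
            = ((f t : ℕ) - (g t : ℕ) + ((g t : ℕ) - (f t : ℕ))) := by
        intro t ht
        rw [hhno t (Finset.ne_of_mem_erase ht)]
      rw [Finset.sum_congr rfl he]
      have h1 : (h t₀ : ℕ) = (f t₀ : ℕ) + 1 := by rw [hht]
      have h2 : (f t₀ : ℕ) < (g t₀ : ℕ) := ht₀mem
      omega
  · -- move the smallest index that must go down
    have hT : (univ.filter (fun t => g t < f t)).Nonempty := by
      by_contra hc
      apply hne
      funext t
      have h1 : ¬(f t < g t) := by
        intro hl
        exact hS ⟨t, by simp [hl]⟩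
      have h2 : ¬(g t < f t) := by
        intro hl
        exact hc ⟨t, by simp [hl]⟩
      have := le_antisymm (not_lt.mp h1) (not_lt.mp h2)
      exact this.symm ▸ rfl
    set t₀ := (univ.filter (fun t => g t < f t)).min' hT with ht₀
    have ht₀mem : g t₀ < f t₀ := by
      have := (univ.filter (fun t => g t < f t)).min'_mem hT
      simp only [mem_filter] at this
      exact this.2
    have ht₀min : ∀ t, t < t₀ → ¬(g t < f t) := by
      intro t ht hc
      have : t ∈ univ.filter (fun t => g t < f t) := by simp [hc]
      have := Finset.min'_le _ t this
      omega
    have hpos : 1 ≤ (f t₀ : ℕ) := by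
      have : (g t₀ : ℕ) < (f t₀ : ℕ) := ht₀mem
      omega
    have hlt : (f t₀ : ℕ) - 1 < N := by
      have := (f t₀).2
      omega
    set v : Fin N := ⟨(f t₀ : ℕ) - 1, hlt⟩ with hv
    set h : Fin k → Fin N := Function.update f t₀ v with hh
    have hht : h t₀ = v := Function.update_self t₀ v f
    have hhno : ∀ t, t ≠ t₀ → h t = f t := fun t ht => Function.update_of_ne ht v f
    have hmono : StrictMono h := by
      intro a b hab
      rcases eq_or_ne b t₀ with rfl | hb
      · rw [hht, hhno a (by exact fun hc => absurd (hc ▸ hab) (lt_irrefl _))]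
        have hb' : ¬(g a < f a) := ht₀min a hab
        have h1 : g a < g t₀ := hg hab
        have h2 : (g t₀ : ℕ) < (f t₀ : ℕ) := ht₀mem
        have h3 : (f a : ℕ) ≤ (g a : ℕ) := not_lt.mp hb'
        have h4 : (g a : ℕ) < (g t₀ : ℕ) := h1
        show (f a : ℕ) < (v : ℕ)
        simp only [hv]
        omega
      · rcases eq_or_ne a t₀ with rfl | ha
        · rw [hht, hhno b hb]
          have : (f t₀ : ℕ) < (f b : ℕ) := hf hab
          show (v : ℕ) < (f b : ℕ)
          simp only [hv]
          omega
        · rw [hhno a ha, hhno b hb]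
          exact hf hab
    refine ⟨h, hmono, ?_, ?_⟩
    · rw [minor_transpose]
      refine KGen hA.transpose h f hmono hf t₀ (fun t ht => (hhno t ht).symm) ?_
      rw [hht]
      simp only [hv]
      omega
    · rw [fdist, fdist, ← Finset.add_sum_erase _ _ (mem_univ t₀),
        ← Finset.add_sum_erase _ _ (mem_univ t₀)]
      have he : ∀ t ∈ univ.erase t₀,
          ((h t : ℕ) - (g t : ℕ) + ((g t : ℕ) - (h t : ℕ)))
            = ((f t : ℕ) - (g t : ℕ) + ((g t : ℕ) - (f t : ℕ))) := by
        intro t ht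
        rw [hhno t (Finset.ne_of_mem_erase ht)]
      rw [Finset.sum_congr rfl he]
      have h1 : (h t₀ : ℕ) = (f t₀ : ℕ) - 1 := by rw [hht]
      have h2 : (g t₀ : ℕ) < (f t₀ : ℕ) := ht₀mem
      omega

theorem walk {N : ℕ} {A : Matrix (Fin N) (Fin N) ℝ} (hA : Good A) :
    ∀ m : ℕ, 1 ≤ m → ∀ {k : ℕ} (f g : Fin k → Fin N), StrictMono f → StrictMono g →
      fdist f g ≤ m → 0 < ((A ^ m).submatrix f g).det := by
  intro m
  induction m with
  | zero => omega
  | succ m IHm =>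
    intro _ k f g hf hg hd
    rcases Nat.eq_zero_or_pos m with rfl | hm
    · rw [pow_one]
      by_cases hfg : f = g
      · subst hfg
        exact principal_pos A hA.inv hA.tnn f hf
      · obtain ⟨h, hh, hpos, hdist⟩ := step_exists hA hf hg hfg
        have : h = g := fdist_eq_zero (by omega)
        subst this
        exact hpos
    · have hATm : TotallyNonneg (A ^ m) := tnn_pow hA.tnn hm
      have hpow : A ^ (m + 1) = A * A ^ m := by
        rw [pow_succ']
      rw [hpow]
      by_cases hfg : f = g
      · subst hfg
        have h1 : 0 < (A.submatrix f f).det := principal_pos A hA.inv hA.tnn f hf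
        have h2 := IHm hm f f hf hf (by rw [fdist_self]; omega)
        have h3 := cb_lower_bound hA.tnn hATm hf hf hf
        exact lt_of_lt_of_le (mul_pos h1 h2) h3
      · obtain ⟨h, hh, hpos, hdist⟩ := step_exists hA hf hg hfg
        have h2 := IHm hm h g hh hg (by omega)
        have h3 := cb_lower_bound hA.tnn hATm hf hg hh
        exact lt_of_lt_of_le (mul_pos hpos h2) h3

/-! ### forward direction -/

lemma pow_entry_nonneg {N : ℕ} {A : Matrix (Fin N) (Fin N) ℝ}
    (h : ∀ i j, 0 ≤ A i j) (m : ℕ) : ∀ i j, 0 ≤ (A ^ m) i j := by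
  induction m with
  | zero =>
    intro i j
    rw [pow_zero]
    rcases eq_or_ne i j with rfl | hij
    · simp [Matrix.one_apply]
    · simp [Matrix.one_apply, hij]
  | succ m IH =>
    intro i j
    rw [pow_succ, Matrix.mul_apply]
    exact Finset.sum_nonneg fun l _ => mul_nonneg (IH i l) (h l j)

lemma sq_zero {N : ℕ} {A : Matrix (Fin N) (Fin N) ℝ} (htnn : TotallyNonneg A)
    {i j : Fin N} (hij : (j : ℕ) = (i : ℕ) + 1) (h0 : A i j = 0) : (A * A) i j = 0 := by
  rw [Matrix.mul_apply]
  apply Finset.sum_eq_zero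
  intro l _
  have hnn := entry_nonneg htnn
  rcases lt_trichotomy ((l : ℕ)) ((i : ℕ)) with hl | hl | hl
  · -- l < i
    have hli : l < i := hl
    have hlj : l < j := by simp only [Fin.lt_iff_val_lt_val]; omega
    have := tnn_two htnn hli hlj
    -- A l j * A i l ≤ A l l * A i j = 0
    rw [h0, mul_zero] at this
    have h1 : 0 ≤ A i l * A l j := mul_nonneg (hnn i l) (hnn l j)
    nlinarith
  · -- l = i
    have hle : l = i := Fin.ext hl
    subst hle
    rw [h0, mul_zero]
  · rcases eq_or_ne ((l : ℕ)) ((j : ℕ)) with hlj | hlj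
    · have : l = j := Fin.ext hlj
      subst this
      rw [h0, zero_mul]
    · -- l > j
      have hjl : j < l := by simp only [Fin.lt_iff_val_lt_val]; omega
      have hil : i < l := by simp only [Fin.lt_iff_val_lt_val]; omega
      have := tnn_two htnn hil hjl
      -- A i l * A l j ≤ A i j * A l l = 0
      rw [h0, zero_mul] at this
      have h1 : 0 ≤ A i l * A l j := mul_nonneg (hnn i l) (hnn l j)
      nlinarith

lemma pow2_zero {N : ℕ} {A : Matrix (Fin N) (Fin N) ℝ} (htnn : TotallyNonneg A)
    {i j : Fin N} (hij : (j : ℕ) = (i : ℕ) + 1) (h0 : A i j = 0) (r : ℕ) :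
    (A ^ (2 ^ r)) i j = 0 := by
  induction r with
  | zero => simpa using h0
  | succ r IH =>
    have h1 : A ^ (2 ^ (r + 1)) = A ^ (2 ^ r) * A ^ (2 ^ r) := by
      rw [← pow_add]
      congr 1
      omega
    rw [h1]
    exact sq_zero (tnn_pow htnn (Nat.one_le_two_pow)) hij IH

theorem forward {N : ℕ} {A : Matrix (Fin N) (Fin N) ℝ} (hu : IsUnit A)
    (htnn : TotallyNonneg A) (hosc : Oscillatory A) :
    ∀ i j : Fin N, (j : ℕ) = (i : ℕ) + 1 → 0 < A i j := by
  intro i j hij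
  rcases (entry_nonneg htnn i j).lt_or_eq with h | h0
  · exact h
  exfalso
  replace h0 : A i j = 0 := h0.symm
  obtain ⟨m, hm, hTP⟩ := hosc
  have hmlt : m < 2 ^ m := Nat.lt_two_pow_self
  set t : ℕ := 2 ^ m - m with htdef
  have hsplit : A ^ (2 ^ m) = A ^ m * A ^ t := by
    rw [← pow_add]
    congr 1
    omega
  have hz : (A ^ (2 ^ m)) i j = 0 := pow2_zero htnn hij h0 m
  rw [hsplit, Matrix.mul_apply] at hz
  have hmpos : ∀ a b, 0 < (A ^ m) a b := by
    intro a b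
    have := hTP 1 (fun _ => a) (fun _ => b) (sm_one a) (sm_one b)
    rwa [Matrix.det_fin_one] at this
  have htnn' : ∀ a b, 0 ≤ (A ^ t) a b := pow_entry_nonneg (entry_nonneg htnn) t
  have hterms : ∀ l ∈ (univ : Finset (Fin N)), 0 ≤ (A ^ m) i l * (A ^ t) l j :=
    fun l _ => mul_nonneg (hmpos i l).le (htnn' l j)
  have hall : ∀ l ∈ (univ : Finset (Fin N)), (A ^ m) i l * (A ^ t) l j = 0 :=
    (Finset.sum_eq_zero_iff_of_nonneg hterms).mp hz
  -- but column j of A ^ t is nonzero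
  have hcol : ∃ l, (A ^ t) l j ≠ 0 := by
    by_contra hc
    push_neg at hc
    have hdet : (A ^ t).det = 0 := Matrix.det_eq_zero_of_column_eq_zero j hc
    have : IsUnit (A ^ t) := hu.pow t
    rw [Matrix.isUnit_iff_isUnit_det, isUnit_iff_ne_zero] at this
    exact this hdet
  obtain ⟨l, hl⟩ := hcol
  have := hall l (mem_univ l)
  rcases mul_eq_zero.mp this with hc | hc
  · exact (hmpos i l).ne' hc
  · exact hl hc

/-! ### final assembly -/

lemma tp_transpose {N : ℕ} {A : Matrix (Fin N) (Fin N) ℝ} (h : TotallyPos A) :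
    TotallyPos Aᵀ := by
  intro k f g hf hg
  rw [← minor_transpose]
  exact h k g f hg hf

lemma osc_transpose {N : ℕ} {A : Matrix (Fin N) (Fin N) ℝ} (h : Oscillatory A) :
    Oscillatory Aᵀ := by
  obtain ⟨m, hm, hTP⟩ := h
  exact ⟨m, hm, by rw [← Matrix.transpose_pow]; exact tp_transpose hTP⟩

theorem backward {N : ℕ} {A : Matrix (Fin N) (Fin N) ℝ} (hA : Good A) : Oscillatory A := by
  refine ⟨N * N + 1, by omega, ?_⟩
  intro k f g hf hg
  have hk : k ≤ N := by
    have := Fintype.card_le_of_injective f hf.injective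
    simpa using this
  have hdist : fdist f g ≤ N * N + 1 := by
    have h1 : fdist f g ≤ ∑ _t : Fin k, N := by
      apply Finset.sum_le_sum
      intro t _
      have := (f t).2
      have := (g t).2
      omega
    rw [Finset.sum_const, Finset.card_univ, Fintype.card_fin, smul_eq_mul] at h1
    have : k * N ≤ N * N := Nat.mul_le_mul_right N hk
    omega
  exact walk hA (N * N + 1) (by omega) f g hf hg hdist

end GK


/-- Gantmacher–Krein criterion: an invertible totally nonnegative matrix is
oscillatory iff all entries immediately above and below the main diagonal are positive. -/
theorem stmt4 (n : ℕ) (hn : 2 ≤ n) (x : Matrix (Fin n) (Fin n) ℝ)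
    (hx : IsUnit x) (htnn : TotallyNonneg x) :
    Oscillatory x ↔
      ∀ (i : ℕ) (h : i + 1 < n),
        0 < x ⟨i, by omega⟩ ⟨i + 1, h⟩ ∧ 0 < x ⟨i + 1, h⟩ ⟨i, by omega⟩ := by
  constructor
  · intro hosc i h
    constructor
    · exact GK.forward hx htnn hosc ⟨i, by omega⟩ ⟨i + 1, h⟩ rfl
    · have h1 := GK.forward (GK.isUnit_transpose hx) (GK.tnn_transpose htnn)
        (GK.osc_transpose hosc) ⟨i, by omega⟩ ⟨i + 1, h⟩ rfl
      simpa [Matrix.transpose_apply] using h1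
  · intro hband
    apply GK.backward
    refine ⟨hx, htnn, ?_⟩
    intro i j hij
    have hlt : (i : ℕ) + 1 < n := by
      have := j.2
      omega
    have hi' : i = ⟨(i : ℕ), by omega⟩ := Fin.ext rfl
    have hj' : j = ⟨(i : ℕ) + 1, hlt⟩ := Fin.ext hij
    have h2 := hband (i : ℕ) hlt
    rw [← hi', ← hj'] at h2
    exact h2
end

section
/- Let n ≥ 2. For i, j ∈ {1, …, n−1} and an n×n real matrix x, define the i-indicator minor Δ_{j→i}(x) as follows: if j ≥ i, Δ_{j→i}(x) is the determinant of the submatrix of x with row set {1, …, j+1} \ {i+1} and column set {1, …, j+1} \ {i}; if j < i, Δ_{j→i}(x) is the determinant of the submatrix with row set {1, …, j−1} ∪ {i} and column set {1, …, j−1} ∪ {i+1}. Let j, j′ : {1, …, n−1} → {1, …, n−1} be arbitrary functions. Then an invertible totally nonnegative n×n real matrix x is oscillatory if and only if Δ_{j(i)→i}(x) > 0 and Δ_{j′(i)→i}(xᵀ) > 0 for every i ∈ {1, …, n−1}. -/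
open Matrix

namespace Osc

variable {n : ℕ}

lemma tnn_transpose {x : Matrix (Fin n) (Fin n) ℝ} (h : TotallyNonneg x) :
    TotallyNonneg xᵀ := by
  intro k f g hf hg
  have : (xᵀ.submatrix f g) = (x.submatrix g f)ᵀ := rfl
  rw [this, det_transpose]
  exact h k g f hg hf

lemma tnn_entry {x : Matrix (Fin n) (Fin n) ℝ} (h : TotallyNonneg x) (i j : Fin n) :
    0 ≤ x i j := by
  have := h 1 (fun _ => i) (fun _ => j) (by intro a b hab; fin_cases a <;> fin_cases b <;> simp at hab)
    (by intro a b hab; fin_cases a <;> fin_cases b <;> simp at hab)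
  simpa [det_unique] using this

lemma tnn_det {x : Matrix (Fin n) (Fin n) ℝ} (h : TotallyNonneg x) : 0 ≤ x.det := by
  have := h n id id strictMono_id strictMono_id
  simpa using this

lemma tnn_submatrix {x : Matrix (Fin n) (Fin n) ℝ} (h : TotallyNonneg x) {m : ℕ}
    (f g : Fin m → Fin n) (hf : StrictMono f) (hg : StrictMono g) :
    TotallyNonneg (x.submatrix f g) := by
  intro k u v hu hv
  rw [submatrix_submatrix]
  exact h k _ _ (hf.comp hu) (hg.comp hv)

/-- 2×2 minors of a TNN matrix. -/
lemma minor2 {x : Matrix (Fin n) (Fin n) ℝ} (h : TotallyNonneg x)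
    {a b c d : Fin n} (hab : a < b) (hcd : c < d) :
    x a d * x b c ≤ x a c * x b d := by
  have hm : StrictMono (![a, b]) := by
    intro s t hst
    fin_cases s <;> fin_cases t <;> simp_all
  have hm' : StrictMono (![c, d]) := by
    intro s t hst
    fin_cases s <;> fin_cases t <;> simp_all
  have := h 2 ![a, b] ![c, d] hm hm'
  rw [det_fin_two] at this
  simp only [submatrix_apply] at this
  simp only [Matrix.cons_val_zero, Matrix.cons_val_one, Matrix.head_cons] at this
  linarith

/-- Schur complement of the (0,0) entry. -/
noncomputable def schur (x : Matrix (Fin (n+1)) (Fin (n+1)) ℝ) : Matrix (Fin n) (Fin n) ℝ :=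
  Matrix.of fun r c => x r.succ c.succ - x r.succ 0 * x 0 c.succ / x 0 0

/-- Bordered determinant formula: minors of the Schur complement. -/
lemma bord (x : Matrix (Fin (n+1)) (Fin (n+1)) ℝ) (hx : x 0 0 ≠ 0)
    {k : ℕ} (u v : Fin k → Fin n) :
    (x.submatrix (Fin.cons 0 (Fin.succ ∘ u)) (Fin.cons 0 (Fin.succ ∘ v))).det
      = x 0 0 * ((schur x).submatrix u v).det := by
  set M := x.submatrix (Fin.cons 0 (Fin.succ ∘ u)) (Fin.cons 0 (Fin.succ ∘ v)) with hM
  let e : Fin 1 ⊕ Fin k ≃ Fin (k+1) := finSumFinEquiv.trans (finCongr (Nat.add_comm 1 k))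
  have h1 : ∀ i : Fin 1, e (Sum.inl i) = 0 := by
    intro i
    simp [e, finCongr, Fin.ext_iff]
  have h2 : ∀ i : Fin k, e (Sum.inr i) = i.succ := by
    intro i
    simp [e, finCongr, Fin.ext_iff, Nat.add_comm]
  let A : Matrix (Fin 1) (Fin 1) ℝ := Matrix.of fun _ _ => x 0 0
  let B : Matrix (Fin 1) (Fin k) ℝ := Matrix.of fun _ c => x 0 (v c).succ
  let C : Matrix (Fin k) (Fin 1) ℝ := Matrix.of fun r _ => x (u r).succ 0
  let D : Matrix (Fin k) (Fin k) ℝ := Matrix.of fun r c => x (u r).succ (v c).succ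
  have hMe : M.submatrix e e = fromBlocks A B C D := by
    ext i j
    cases i with
    | inl i =>
      cases j with
      | inl j => simp [h1, hM, A]
      | inr j => simp [h1, h2, hM, B]
    | inr i =>
      cases j with
      | inl j => simp [h1, h2, hM, C]
      | inr j => simp [h2, hM, D]
  have hdet : M.det = (fromBlocks A B C D).det := by
    rw [← hMe, det_submatrix_equiv_self]
  have hAdet : A.det = x 0 0 := by simp [A, det_unique]
  have hAunit : IsUnit A.det := by rw [hAdet]; exact isUnit_iff_ne_zero.mpr hx
  have : Invertible A := A.invertibleOfIsUnitDet hAunit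
  rw [hdet, det_fromBlocks₁₁, hAdet]
  congr 1
  have hinv : (⅟A : Matrix (Fin 1) (Fin 1) ℝ) 0 0 = (x 0 0)⁻¹ := by
    have h := mul_invOf_self A
    have h00 := congrFun (congrFun h 0) 0
    simp only [Matrix.mul_apply, Finset.univ_unique, Finset.sum_singleton,
      Matrix.one_apply_eq] at h00
    have h00' : x 0 0 * (⅟A : Matrix (Fin 1) (Fin 1) ℝ) 0 0 = 1 := h00
    exact (inv_eq_of_mul_eq_one_right h00').symm
  congr 1
  ext r c
  simp only [Matrix.sub_apply, Matrix.mul_apply, Finset.univ_unique, Finset.sum_singleton]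
  simp [schur, D, C, B, hinv, div_eq_mul_inv, mul_comm, mul_assoc, mul_left_comm]
/-- window map -/
def win (a : ℕ) {k n : ℕ} (h : a + k ≤ n) : Fin k → Fin n := fun t => ⟨a + t, by omega⟩

lemma win_strictMono (a : ℕ) {k n : ℕ} (h : a + k ≤ n) : StrictMono (win a h) := by
  intro s t hst
  simp only [win, Fin.lt_def] at *
  omega

lemma cons_strictMono {k : ℕ} {u : Fin k → Fin n} (hu : StrictMono u) :
    StrictMono (Fin.cons 0 (Fin.succ ∘ u) : Fin (k+1) → Fin (n+1)) := by
  intro a b hab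
  induction a using Fin.cases with
  | zero =>
    induction b using Fin.cases with
    | zero => simp at hab
    | succ j => simp [Fin.succ_pos]
  | succ i =>
    induction b using Fin.cases with
    | zero => exact absurd hab (by simp [Fin.lt_def])
    | succ j =>
      have hij : i < j := by
        rwa [Fin.succ_lt_succ_iff] at hab
      simp only [Fin.cons_succ, Function.comp_apply]
      exact Fin.succ_lt_succ_iff.mpr (hu hij)


lemma x00_pos {n : ℕ} {x : Matrix (Fin (n+1)) (Fin (n+1)) ℝ}
    (h : TotallyNonneg x) (hd : 0 < x.det) : 0 < x 0 0 := by
  rcases (tnn_entry h 0 0).lt_or_eq with hpos | heq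
  · exact hpos
  by_cases hrow : ∃ l, x 0 l ≠ 0
  · obtain ⟨l, hl⟩ := hrow
    have hl0 : (0 : Fin (n+1)) < l := by
      rcases eq_or_ne l 0 with rfl | hne
      · exact absurd heq.symm hl
      · exact Fin.pos_iff_ne_zero.mpr hne
    have hcol : ∀ k, x k 0 = 0 := by
      intro k
      rcases eq_or_ne k 0 with rfl | hk
      · exact heq.symm
      have hk0 : (0 : Fin (n+1)) < k := Fin.pos_iff_ne_zero.mpr hk
      have hm := minor2 h hk0 hl0
      have h1 : x 0 l * x k 0 ≤ 0 := by
        calc x 0 l * x k 0 ≤ x 0 0 * x k l := hm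
        _ = 0 := by rw [← heq, zero_mul]
      have h2 : 0 ≤ x 0 l * x k 0 := mul_nonneg (tnn_entry h _ _) (tnn_entry h _ _)
      have h3 : x 0 l * x k 0 = 0 := le_antisymm h1 h2
      rcases mul_eq_zero.mp h3 with h' | h'
      · exact absurd h' hl
      · exact h'
    have : x.det = 0 := det_eq_zero_of_column_eq_zero 0 hcol
    rw [this] at hd; exact absurd hd (lt_irrefl 0)
  · push_neg at hrow
    have : x.det = 0 := det_eq_zero_of_row_eq_zero 0 hrow
    rw [this] at hd; exact absurd hd (lt_irrefl 0)

lemma schur_tnn {n : ℕ} {x : Matrix (Fin (n+1)) (Fin (n+1)) ℝ}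
    (h : TotallyNonneg x) (h0 : 0 < x 0 0) : TotallyNonneg (schur x) := by
  intro k u v hu hv
  have hb := bord x (ne_of_gt h0) u v
  have hnn := h (k+1) _ _ (cons_strictMono hu) (cons_strictMono hv)
  rw [hb] at hnn
  exact le_of_mul_le_mul_left (by simpa using hnn) h0

lemma cons_succ_eq_id {n : ℕ} : (Fin.cons 0 (Fin.succ ∘ id) : Fin (n+1) → Fin (n+1)) = id := by
  funext t
  induction t using Fin.cases with
  | zero => rfl
  | succ i => rfl

lemma schur_det {n : ℕ} {x : Matrix (Fin (n+1)) (Fin (n+1)) ℝ} (h0 : 0 < x 0 0) :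
    (schur x).det = x.det / x 0 0 := by
  have hb := bord x (ne_of_gt h0) (id : Fin n → Fin n) (id : Fin n → Fin n)
  rw [cons_succ_eq_id] at hb
  simp only [submatrix_id_id] at hb
  rw [hb]
  field_simp

lemma cons_win {n k : ℕ} (h : 0 + k ≤ n) (h' : 0 + (k+1) ≤ n + 1) :
    (Fin.cons 0 (Fin.succ ∘ win 0 h) : Fin (k+1) → Fin (n+1)) = win 0 h' := by
  funext t
  induction t using Fin.cases with
  | zero => simp [win, Fin.ext_iff]
  | succ i => simp [win, Fin.ext_iff]

lemma leadPos : ∀ n (x : Matrix (Fin n) (Fin n) ℝ), TotallyNonneg x → 0 < x.det →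
    ∀ k (h : 0 + k ≤ n), 0 < (x.submatrix (win 0 h) (win 0 h)).det := by
  intro n
  induction n with
  | zero =>
    intro x htnn hd k h
    have : k = 0 := by omega
    subst this
    simp [Matrix.det_isEmpty]
  | succ N ih =>
    intro x htnn hd k h
    rcases Nat.eq_zero_or_pos k with rfl | hk
    · have : IsEmpty (Fin 0) := inferInstance
      simp [Matrix.det_isEmpty]
    obtain ⟨k', rfl⟩ : ∃ k', k = k' + 1 := ⟨k - 1, by omega⟩
    have h0 : 0 < x 0 0 := x00_pos htnn hd
    have hytnn : TotallyNonneg (schur x) := schur_tnn htnn h0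
    have hydet : 0 < (schur x).det := by
      rw [schur_det h0]; positivity
    have hk' : 0 + k' ≤ N := by omega
    have := ih (schur x) hytnn hydet k' hk'
    have hb := bord x (ne_of_gt h0) (win 0 hk') (win 0 hk')
    rw [cons_win hk' h] at hb
    rw [hb]
    positivity


/-- Reversal of a matrix. -/
def revm {n : ℕ} (x : Matrix (Fin n) (Fin n) ℝ) : Matrix (Fin n) (Fin n) ℝ :=
  Matrix.of fun a b => x a.rev b.rev

lemma revm_minor {n k : ℕ} (x : Matrix (Fin n) (Fin n) ℝ) (f g : Fin k → Fin n) :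
    ((revm x).submatrix f g).det
      = (x.submatrix (Fin.rev ∘ f ∘ Fin.rev) (Fin.rev ∘ g ∘ Fin.rev)).det := by
  have : (revm x).submatrix f g = (x.submatrix (Fin.rev ∘ f) (Fin.rev ∘ g)) := rfl
  rw [this, ← det_submatrix_equiv_self (Fin.revPerm) (x.submatrix (Fin.rev ∘ f) (Fin.rev ∘ g))]
  rfl

lemma rev_comp_strictMono {n k : ℕ} {f : Fin k → Fin n} (hf : StrictMono f) :
    StrictMono (Fin.rev ∘ f ∘ Fin.rev) := by
  intro a b hab
  simp only [Function.comp_apply]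
  rw [Fin.rev_lt_rev]
  exact hf (Fin.rev_lt_rev.mpr hab)

lemma revm_tnn {n : ℕ} {x : Matrix (Fin n) (Fin n) ℝ} (h : TotallyNonneg x) :
    TotallyNonneg (revm x) := by
  intro k f g hf hg
  rw [revm_minor]
  exact h k _ _ (rev_comp_strictMono hf) (rev_comp_strictMono hg)

lemma revm_det {n : ℕ} (x : Matrix (Fin n) (Fin n) ℝ) : (revm x).det = x.det := by
  have : revm x = x.submatrix Fin.rev Fin.rev := rfl
  rw [this]
  exact det_submatrix_equiv_self Fin.revPerm x

/-- All contiguous principal minors of an invertible TNN matrix are positive. -/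
lemma contigPos {n : ℕ} {x : Matrix (Fin n) (Fin n) ℝ} (htnn : TotallyNonneg x)
    (hd : 0 < x.det) {a k : ℕ} (h : a + k ≤ n) :
    0 < (x.submatrix (win a h) (win a h)).det := by
  -- first: trailing principal minors
  have trail : ∀ (y : Matrix (Fin n) (Fin n) ℝ), TotallyNonneg y → 0 < y.det →
      ∀ (k : ℕ) (hk : (n - k) + k ≤ n), 0 < (y.submatrix (win (n-k) hk) (win (n-k) hk)).det := by
    intro y hy hyd k hk
    have hk0 : 0 + k ≤ n := by omega
    have := leadPos n (revm y) (revm_tnn hy) (by rw [revm_det]; exact hyd) k hk0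
    rw [revm_minor] at this
    have heq : (Fin.rev ∘ win 0 hk0 ∘ Fin.rev : Fin k → Fin n) = win (n-k) hk := by
      funext t
      simp only [Function.comp_apply, win, Fin.ext_iff, Fin.val_rev]
      omega
    rwa [heq] at this
  -- the window a..a+(n-a) gives trailing minor of size n-a
  have haa : a + (n-a) ≤ n := by omega
  have hna : (n - (n-a)) + (n-a) ≤ n := by omega
  have hxd' : 0 < (x.submatrix (win a haa) (win a haa)).det := by
    have hx := trail x htnn hd (n-a) hna
    have heq : win (n - (n-a)) hna = win a haa := by
      funext t
      simp only [win, Fin.ext_iff]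
      omega
    rwa [heq] at hx
  have htnn'' : TotallyNonneg (x.submatrix (win a haa) (win a haa)) :=
    tnn_submatrix htnn _ _ (win_strictMono _ _) (win_strictMono _ _)
  have hk'' : 0 + k ≤ n - a := by omega
  have hlp := leadPos (n-a) _ htnn'' hxd' k hk''
  rw [submatrix_submatrix] at hlp
  have heq : (win a haa ∘ win 0 hk'' : Fin k → Fin n) = win a h := by
    funext t
    simp only [Function.comp_apply, win, Fin.ext_iff]
    omega
  rwa [heq] at hlp


lemma diagPos {n : ℕ} {x : Matrix (Fin n) (Fin n) ℝ} (htnn : TotallyNonneg x)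
    (hd : 0 < x.det) (i : Fin n) : 0 < x i i := by
  have h : (i : ℕ) + 1 ≤ n := i.2
  have := contigPos htnn hd h
  have heq : x.submatrix (win (i:ℕ) h) (win (i:ℕ) h) = Matrix.of fun _ _ : Fin 1 => x i i := by
    ext s t
    have hw : ∀ u : Fin 1, win (i:ℕ) h u = i := by
      intro u
      simp only [win, Fin.ext_iff]
      omega
    simp [hw]
  rw [heq] at this
  simpa [det_unique] using this

/-- Zero propagation: a vanishing superdiagonal entry forces a zero block. -/
lemma prop_zero {n : ℕ} {x : Matrix (Fin n) (Fin n) ℝ} (htnn : TotallyNonneg x)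
    (hdiag : ∀ i, 0 < x i i) {a : ℕ} (ha : a + 1 < n)
    (h0 : x ⟨a, by omega⟩ ⟨a + 1, ha⟩ = 0) :
    ∀ k l : Fin n, (k : ℕ) ≤ a → a < (l : ℕ) → x k l = 0 := by
  have step1 : ∀ l : Fin n, a < (l : ℕ) → x ⟨a, by omega⟩ l = 0 := by
    intro l hl
    rcases eq_or_lt_of_le (show a + 1 ≤ (l:ℕ) by omega) with heq | hlt
    · have : l = ⟨a+1, ha⟩ := by simp [Fin.ext_iff]; omega
      rw [this]; exact h0
    · have hm := minor2 htnn (a := ⟨a, by omega⟩) (b := ⟨a+1, ha⟩)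
        (c := ⟨a+1, ha⟩) (d := l) (by simp [Fin.lt_def]) (by simp [Fin.lt_def]; omega)
      rw [h0, zero_mul] at hm
      have h2 : 0 ≤ x ⟨a, by omega⟩ l * x ⟨a+1, ha⟩ ⟨a+1, ha⟩ :=
        mul_nonneg (tnn_entry htnn _ _) (tnn_entry htnn _ _)
      have h3 : x ⟨a, by omega⟩ l * x ⟨a+1, ha⟩ ⟨a+1, ha⟩ = 0 := le_antisymm hm h2
      rcases mul_eq_zero.mp h3 with h' | h'
      · exact h'
      · exact absurd h' (ne_of_gt (hdiag _))
  intro k l hk hl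
  rcases eq_or_lt_of_le hk with heq | hlt
  · have : k = ⟨a, by omega⟩ := by simp [Fin.ext_iff]; omega
    rw [this]; exact step1 l hl
  · have hm := minor2 htnn (a := k) (b := ⟨a, by omega⟩) (c := ⟨a, by omega⟩) (d := l)
      (by simp [Fin.lt_def]; omega) (by simp [Fin.lt_def]; omega)
    rw [step1 l hl, mul_zero] at hm
    have h2 : 0 ≤ x k l * x ⟨a, by omega⟩ ⟨a, by omega⟩ :=
      mul_nonneg (tnn_entry htnn _ _) (tnn_entry htnn _ _)
    have h3 : x k l * x ⟨a, by omega⟩ ⟨a, by omega⟩ = 0 := le_antisymm hm h2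
    rcases mul_eq_zero.mp h3 with h' | h'
    · exact h'
    · exact absurd h' (ne_of_gt (hdiag _))


/-- Key base case: positivity of the minor with rows {0, N-1}, cols {0, N}. -/
lemma lemB {N : ℕ} (hN : 2 ≤ N) {x : Matrix (Fin (N+1)) (Fin (N+1)) ℝ}
    (htnn : TotallyNonneg x) (hd : 0 < x.det)
    (hsup : 0 < x ⟨N-1, by omega⟩ ⟨N, by omega⟩) :
    x 0 ⟨N, by omega⟩ * x ⟨N-1, by omega⟩ 0 < x 0 0 * x ⟨N-1, by omega⟩ ⟨N, by omega⟩ := by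
  have h0 : 0 < x 0 0 := x00_pos htnn hd
  have hle := minor2 htnn (a := (0 : Fin (N+1))) (b := ⟨N-1, by omega⟩)
      (c := (0 : Fin (N+1))) (d := ⟨N, by omega⟩)
      (by simp [Fin.lt_def]; omega) (by simp [Fin.lt_def]; omega)
  rcases lt_or_eq_of_le hle with hlt | heq
  · exact hlt
  exfalso
  -- the 2x2 minor vanishes; work with the Schur complement y
  set y := schur x with hy
  have hytnn : TotallyNonneg y := schur_tnn htnn h0
  have hydet : 0 < y.det := by rw [hy, schur_det h0]; positivity
  have hydiag : ∀ i, 0 < y i i := fun i => diagPos hytnn hydet i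
  have hsucc : ∀ (m : ℕ) (hm : m < N), Fin.succ (⟨m, hm⟩ : Fin N) = ⟨m+1, by omega⟩ := by
    intro m hm; simp [Fin.ext_iff]
  have hyent : y ⟨N-2, by omega⟩ ⟨N-2+1, by omega⟩ = 0 := by
    rw [hy]
    show x (Fin.succ ⟨N-2, by omega⟩) (Fin.succ ⟨N-2+1, by omega⟩)
      - x (Fin.succ ⟨N-2, by omega⟩) 0 * x 0 (Fin.succ ⟨N-2+1, by omega⟩) / x 0 0 = 0
    rw [hsucc, hsucc]
    have e1 : ((⟨N-2+1, by omega⟩ : Fin (N+1))) = ⟨N-1, by omega⟩ := by simp [Fin.ext_iff]; omega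
    have e2 : ((⟨N-2+1+1, by omega⟩ : Fin (N+1))) = ⟨N, by omega⟩ := by simp [Fin.ext_iff]; omega
    rw [e1, e2]
    field_simp
    linarith [heq]
  have hprop := prop_zero hytnn hydiag (a := N-2) (by omega) hyent
  -- key1 : for 1 ≤ s ≤ N-1, x00 * x s N = x s 0 * x 0 N
  have key1 : ∀ s : Fin (N+1), 1 ≤ (s:ℕ) → (s:ℕ) ≤ N-1 →
      x 0 0 * x s ⟨N, by omega⟩ = x s 0 * x 0 ⟨N, by omega⟩ := by
    intro s h1 h2
    have hr := hprop ⟨(s:ℕ)-1, by omega⟩ ⟨N-1, by omega⟩ (by simp; omega) (by simp; omega)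
    rw [hy] at hr
    have hs : Fin.succ (⟨(s:ℕ)-1, by omega⟩ : Fin N) = s := by simp [Fin.ext_iff]; omega
    have hc : Fin.succ (⟨N-1, by omega⟩ : Fin N) = ⟨N, by omega⟩ := by simp [Fin.ext_iff]; omega
    have hr2 : x (Fin.succ ⟨(s:ℕ)-1, by omega⟩) (Fin.succ ⟨N-1, by omega⟩)
        - x (Fin.succ ⟨(s:ℕ)-1, by omega⟩) 0 * x 0 (Fin.succ ⟨N-1, by omega⟩) / x 0 0 = 0 := hr
    rw [hs, hc] at hr2
    field_simp at hr2
    linarith [hr2]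
  have hNgt : 0 < x 0 ⟨N, by omega⟩ ∧ 0 < x ⟨N-1, by omega⟩ 0 := by
    have h1 := key1 ⟨N-1, by omega⟩ (by show 1 ≤ N-1; omega) (by show N-1 ≤ N-1; omega)
    have hpos : 0 < x ⟨N-1, by omega⟩ 0 * x 0 ⟨N, by omega⟩ := by
      rw [← h1]; positivity
    constructor
    · rcases (tnn_entry htnn 0 ⟨N, by omega⟩).lt_or_eq with h | h
      · exact h
      · rw [← h, mul_zero] at hpos; exact absurd hpos (lt_irrefl 0)
    · rcases (tnn_entry htnn ⟨N-1, by omega⟩ 0).lt_or_eq with h | h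
      · exact h
      · rw [← h, zero_mul] at hpos; exact absurd hpos (lt_irrefl 0)
  -- key2 : for 1 ≤ s,l ≤ N-1, x00 * x s l = x s 0 * x 0 l
  have key2 : ∀ s l : Fin (N+1), 1 ≤ (s:ℕ) → (s:ℕ) ≤ N-1 → 1 ≤ (l:ℕ) → (l:ℕ) ≤ N-1 →
      x 0 0 * x s l = x s 0 * x 0 l := by
    intro s l hs1 hs2 hl1 hl2
    have hge := minor2 htnn (a := (0:Fin (N+1))) (b := s) (c := (0:Fin (N+1))) (d := l)
      (by simp only [Fin.lt_def, Fin.val_zero, Fin.val_mk]; omega) (by simp only [Fin.lt_def, Fin.val_zero, Fin.val_mk]; omega)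
    have hle2 := minor2 htnn (a := (0:Fin (N+1))) (b := s) (c := l) (d := ⟨N, by omega⟩)
      (by simp only [Fin.lt_def, Fin.val_zero, Fin.val_mk]; omega) (by simp only [Fin.lt_def, Fin.val_zero, Fin.val_mk]; omega)
    -- hle2 : x 0 N * x s l ≤ x 0 l * x s N
    have hk1 := key1 s hs1 hs2
    -- x00 * x s N = x s 0 * x 0 N
    have hN0 := hNgt.1
    nlinarith [hge, hle2, hk1, h0, hN0, tnn_entry htnn s 0, tnn_entry htnn 0 l]
  -- rows 0 and 1 of x are proportional
  have hone : (1:ℕ) ≤ N - 1 := by omega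
  have rowprop : ∀ l : Fin (N+1), x 0 0 * x ⟨1, by omega⟩ l = x ⟨1, by omega⟩ 0 * x 0 l := by
    intro l
    rcases Nat.eq_zero_or_pos (l:ℕ) with hl0 | hl1
    · have : l = 0 := by simp only [Fin.ext_iff, Fin.val_zero]; omega
      rw [this]; ring
    rcases eq_or_lt_of_le (show (l:ℕ) ≤ N from by omega) with hlN | hlN
    · have : l = ⟨N, by omega⟩ := by simp [Fin.ext_iff]; omega
      rw [this]; exact key1 ⟨1, by omega⟩ (by simp) (by simp; omega)
    · exact key2 ⟨1, by omega⟩ l (by simp) (by simp; omega) hl1 (by omega)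
  -- hence det x = 0, contradiction
  have hne : (⟨1, by omega⟩ : Fin (N+1)) ≠ 0 := by simp [Fin.ext_iff]
  have hdet0 : x.det = 0 := by
    have hupd := det_updateRow_add_smul_self x hne (-(x ⟨1, by omega⟩ 0 / x 0 0))
    rw [← hupd]
    apply det_eq_zero_of_row_eq_zero ⟨1, by omega⟩
    intro l
    rw [updateRow_self]
    have := rowprop l
    simp only [Pi.add_apply, Pi.smul_apply, smul_eq_mul]
    field_simp
    linarith [this]
  rw [hdet0] at hd
  exact absurd hd (lt_irrefl 0)


/-- `f` and `g` differ in at most one position, and there by at most 1. -/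
def OneStep {k n : ℕ} (f g : Fin k → Fin n) : Prop :=
  (∀ t t', t ≠ t' → f t = g t ∨ f t' = g t') ∧
  (∀ t, (f t : ℕ) ≤ (g t : ℕ) + 1 ∧ (g t : ℕ) ≤ (f t : ℕ) + 1)

/-- positive super- and sub-diagonal entries. -/
def Bidiag {n : ℕ} (x : Matrix (Fin n) (Fin n) ℝ) : Prop :=
  ∀ i : ℕ, (h : i + 1 < n) → 0 < x ⟨i, by omega⟩ ⟨i+1, h⟩ ∧ 0 < x ⟨i+1, h⟩ ⟨i, by omega⟩

lemma bidiag_transpose {n : ℕ} {x : Matrix (Fin n) (Fin n) ℝ} (h : Bidiag x) : Bidiag xᵀ := by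
  intro i hi
  exact ⟨(h i hi).2, (h i hi).1⟩

lemma bidiag_window {n : ℕ} {x : Matrix (Fin n) (Fin n) ℝ} (h : Bidiag x)
    {a m : ℕ} (ham : a + m ≤ n) :
    Bidiag (x.submatrix (win a ham) (win a ham)) := by
  intro i hi
  have h1 := h (a + i) (by omega)
  constructor
  · have := h1.1
    convert this using 2 <;> simp [win, Fin.ext_iff, ← Nat.add_assoc]
  · have := h1.2
    convert this using 2 <;> simp [win, Fin.ext_iff, ← Nat.add_assoc]

lemma bidiag_revm {n : ℕ} {x : Matrix (Fin n) (Fin n) ℝ} (h : Bidiag x) : Bidiag (revm x) := by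
  intro i hi
  obtain ⟨hb1, hb2⟩ := h (n - i - 2) (by omega)
  have e1 : (⟨i, by omega⟩ : Fin n).rev = ⟨n-i-1, by omega⟩ := by
    simp only [Fin.ext_iff, Fin.val_rev]; omega
  have e2 : (⟨i+1, hi⟩ : Fin n).rev = ⟨n-i-2, by omega⟩ := by
    simp only [Fin.ext_iff, Fin.val_rev]; omega
  have e3 : (⟨n-i-2+1, by omega⟩ : Fin n) = ⟨n-i-1, by omega⟩ := by
    simp only [Fin.ext_iff]; omega
  rw [e3] at hb2 hb1
  constructor
  · show 0 < x (⟨i, by omega⟩ : Fin n).rev (⟨i+1, hi⟩ : Fin n).rev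
    rw [e1, e2]; exact hb2
  · show 0 < x (⟨i+1, hi⟩ : Fin n).rev (⟨i, by omega⟩ : Fin n).rev
    rw [e1, e2]; exact hb1


lemma fin_succ_mk {n : ℕ} (m : ℕ) (hm : m < n) :
    Fin.succ (⟨m, hm⟩ : Fin n) = ⟨m+1, by omega⟩ := by
  simp [Fin.ext_iff]

lemma strictMono_fin2 {m : ℕ} {f : Fin 2 → Fin m} (h : f 0 < f 1) : StrictMono f := by
  intro s t hst
  fin_cases s <;> fin_cases t
  · exact absurd hst (lt_irrefl _)
  · exact h
  · exact absurd hst (by decide)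
  · exact absurd hst (lt_irrefl _)

lemma core_top {M : ℕ}
    (ihM : ∀ (y : Matrix (Fin M) (Fin M) ℝ), TotallyNonneg y → 0 < y.det → Bidiag y →
      ∀ (k : ℕ) (f g : Fin k → Fin M), StrictMono f → StrictMono g → OneStep f g →
        0 < (y.submatrix f g).det)
    {x : Matrix (Fin (M+1)) (Fin (M+1)) ℝ}
    (htnn : TotallyNonneg x) (hd : 0 < x.det) (hbd : Bidiag x)
    {K : ℕ} {f g : Fin (K+1) → Fin (M+1)}
    (hf : StrictMono f) (hg : StrictMono g) (hos : OneStep f g)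
    (hf0 : f 0 = 0) (hg0 : g 0 = 0) :
    0 < (x.submatrix f g).det := by
  have h0 : 0 < x 0 0 := x00_pos htnn hd
  have hytnn : TotallyNonneg (schur x) := schur_tnn htnn h0
  have hydet : 0 < (schur x).det := by rw [schur_det h0]; positivity
  -- positivity of bordered 2x2 minors at distance ≤ 1
  have min2pos : ∀ r c : ℕ, (hr : r + 1 < M + 1) → (hc : c + 1 < M + 1) →
      (r = c + 1 ∨ c = r + 1) →
      x 0 ⟨c+1, hc⟩ * x ⟨r+1, hr⟩ 0 < x 0 0 * x ⟨r+1, hr⟩ ⟨c+1, hc⟩ := by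
    intro r c hr hc hrc
    by_cases hwin : r + 1 < M ∧ c + 1 < M
    · -- fits in the leading window of size M
      have hM0 : 0 + M ≤ M + 1 := by omega
      have htnn' : TotallyNonneg (x.submatrix (win 0 hM0) (win 0 hM0)) :=
        tnn_submatrix htnn _ _ (win_strictMono _ _) (win_strictMono _ _)
      have hd' : 0 < (x.submatrix (win 0 hM0) (win 0 hM0)).det := contigPos htnn hd hM0
      have hbd' : Bidiag (x.submatrix (win 0 hM0) (win 0 hM0)) := bidiag_window hbd hM0
      set f2 : Fin 2 → Fin M := ![⟨0, by omega⟩, ⟨r+1, hwin.1⟩] with hf2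
      set g2 : Fin 2 → Fin M := ![⟨0, by omega⟩, ⟨c+1, hwin.2⟩] with hg2
      have hf20 : f2 0 = ⟨0, by omega⟩ := rfl
      have hf21 : f2 1 = ⟨r+1, hwin.1⟩ := rfl
      have hg20 : g2 0 = ⟨0, by omega⟩ := rfl
      have hg21 : g2 1 = ⟨c+1, hwin.2⟩ := rfl
      have hf2m : StrictMono f2 := strictMono_fin2 (by rw [hf20, hf21]; simp [Fin.lt_def])
      have hg2m : StrictMono g2 := strictMono_fin2 (by rw [hg20, hg21]; simp [Fin.lt_def])
      have hos2 : OneStep f2 g2 := by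
        constructor
        · intro t t' htt
          by_cases ht : t = 0
          · left; rw [ht, hf20, hg20]
          · right
            have ht'0 : t' = 0 := by
              have h1 := t.isLt
              have h2 := t'.isLt
              have h3 : (t:ℕ) ≠ (t':ℕ) := fun hc => htt (Fin.ext hc)
              have h4 : (t:ℕ) ≠ 0 := fun hc => ht (Fin.ext hc)
              exact Fin.ext (by omega)
            rw [ht'0, hf20, hg20]
        · intro t
          by_cases ht : t = 0
          · rw [ht, hf20, hg20]
            exact ⟨by omega, by omega⟩
          · have ht1 : t = 1 := by
              have h1 := t.isLt
              have h4 : (t:ℕ) ≠ 0 := fun hc => ht (Fin.ext hc)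
              exact Fin.ext (by omega)
            rw [ht1, hf21, hg21]
            exact ⟨show r+1 ≤ (c+1)+1 by omega, show c+1 ≤ (r+1)+1 by omega⟩
      have hpos2 := ihM _ htnn' hd' hbd' 2 f2 g2 hf2m hg2m hos2
      rw [det_fin_two] at hpos2
      simp only [submatrix_apply] at hpos2
      have e00 : win 0 hM0 (f2 0) = 0 := by rw [hf20]; simp [win, Fin.ext_iff]
      have e01 : win 0 hM0 (g2 0) = 0 := by rw [hg20]; simp [win, Fin.ext_iff]
      have e10 : win 0 hM0 (f2 1) = ⟨r+1, hr⟩ := by rw [hf21]; simp [win, Fin.ext_iff]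
      have e11 : win 0 hM0 (g2 1) = ⟨c+1, hc⟩ := by rw [hg21]; simp [win, Fin.ext_iff]
      rw [e00, e01, e10, e11] at hpos2
      linarith [hpos2]
    · -- at the boundary: r+1 = M or c+1 = M; use lemB
      have hM2 : 2 ≤ M := by
        rcases hrc with h' | h' <;> omega
      rcases hrc with h' | h'
      · -- r = c+1, so r+1 = M (c+1 = M impossible), rows (0,M), cols (0,M-1)
        have hrM : r + 1 = M := by omega
        have := lemB (x := xᵀ) hM2 (tnn_transpose htnn)
          (by rw [det_transpose]; exact hd)
          (by
            have := (hbd (M-1) (by omega)).2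
            show 0 < x ⟨M, by omega⟩ ⟨M-1, by omega⟩
            convert this using 2 <;> simp [Fin.ext_iff] <;> omega)
        simp only [transpose_apply] at this
        have er : (⟨r+1, hr⟩ : Fin (M+1)) = ⟨M, by omega⟩ := by simp [Fin.ext_iff]; omega
        have ec : (⟨c+1, hc⟩ : Fin (M+1)) = ⟨M-1, by omega⟩ := by simp [Fin.ext_iff]; omega
        rw [er, ec]
        linarith [this]
      · -- c = r+1, so c+1 = M, rows (0,M-1), cols (0,M)
        have hcM : c + 1 = M := by omega
        have := lemB (x := x) hM2 htnn hd
          (by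
            have := (hbd (M-1) (by omega)).1
            show 0 < x ⟨M-1, by omega⟩ ⟨M, by omega⟩
            convert this using 2 <;> simp [Fin.ext_iff] <;> omega)
        have er : (⟨r+1, hr⟩ : Fin (M+1)) = ⟨M-1, by omega⟩ := by simp [Fin.ext_iff]; omega
        have ec : (⟨c+1, hc⟩ : Fin (M+1)) = ⟨M, by omega⟩ := by simp [Fin.ext_iff]; omega
        rw [er, ec]
        linarith [this]
  -- Bidiag of the Schur complement
  have hybd : Bidiag (schur x) := by
    intro i hi
    have hs1 : schur x ⟨i, by omega⟩ ⟨i+1, hi⟩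
        = x ⟨i+1, by omega⟩ ⟨i+2, by omega⟩
          - x ⟨i+1, by omega⟩ 0 * x 0 ⟨i+2, by omega⟩ / x 0 0 := by
      show x (Fin.succ ⟨i, by omega⟩) (Fin.succ ⟨i+1, hi⟩)
          - x (Fin.succ ⟨i, by omega⟩) 0 * x 0 (Fin.succ ⟨i+1, hi⟩) / x 0 0 = _
      rw [fin_succ_mk, fin_succ_mk]
    have hs2 : schur x ⟨i+1, hi⟩ ⟨i, by omega⟩
        = x ⟨i+2, by omega⟩ ⟨i+1, by omega⟩
          - x ⟨i+2, by omega⟩ 0 * x 0 ⟨i+1, by omega⟩ / x 0 0 := by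
      show x (Fin.succ ⟨i+1, hi⟩) (Fin.succ ⟨i, by omega⟩)
          - x (Fin.succ ⟨i+1, hi⟩) 0 * x 0 (Fin.succ ⟨i, by omega⟩) / x 0 0 = _
      rw [fin_succ_mk, fin_succ_mk]
    constructor
    · rw [hs1]
      have h' := min2pos i (i+1) (by omega) (by omega) (Or.inr rfl)
      have e2 : (⟨i+1+1, by omega⟩ : Fin (M+1)) = ⟨i+2, by omega⟩ := by simp [Fin.ext_iff]
      rw [e2] at h'
      rw [sub_pos, div_lt_iff₀ h0]
      nlinarith [h']
    · rw [hs2]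
      have h' := min2pos (i+1) i (by omega) (by omega) (Or.inl rfl)
      have e2 : (⟨i+1+1, by omega⟩ : Fin (M+1)) = ⟨i+2, by omega⟩ := by simp [Fin.ext_iff]
      rw [e2] at h'
      rw [sub_pos, div_lt_iff₀ h0]
      nlinarith [h']
  -- decompose f and g
  have hfpos : ∀ t : Fin K, 1 ≤ ((f t.succ) : ℕ) := by
    intro t
    have := hf (show (0 : Fin (K+1)) < t.succ from t.succ_pos)
    rw [hf0] at this
    exact this
  have hgpos : ∀ t : Fin K, 1 ≤ ((g t.succ) : ℕ) := by
    intro t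
    have := hg (show (0 : Fin (K+1)) < t.succ from t.succ_pos)
    rw [hg0] at this
    exact this
  set f' : Fin K → Fin M := fun t => ⟨(f t.succ : ℕ) - 1, by
    have h1 := hfpos t; have h2 := (f t.succ).isLt; omega⟩ with hf'
  set g' : Fin K → Fin M := fun t => ⟨(g t.succ : ℕ) - 1, by
    have h1 := hgpos t; have h2 := (g t.succ).isLt; omega⟩ with hg'
  have hfd : f = Fin.cons 0 (Fin.succ ∘ f') := by
    funext t
    induction t using Fin.cases with
    | zero => simpa using hf0
    | succ i =>
      simp only [Fin.cons_succ, Function.comp_apply, hf', Fin.ext_iff, Fin.val_succ]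
      have := hfpos i
      omega
  have hgd : g = Fin.cons 0 (Fin.succ ∘ g') := by
    funext t
    induction t using Fin.cases with
    | zero => simpa using hg0
    | succ i =>
      simp only [Fin.cons_succ, Function.comp_apply, hg', Fin.ext_iff, Fin.val_succ]
      have := hgpos i
      omega
  have hf'm : StrictMono f' := by
    intro s t hst
    have := hf (Fin.succ_lt_succ_iff.mpr hst)
    simp only [hf', Fin.lt_def] at *
    have := hfpos s
    omega
  have hg'm : StrictMono g' := by
    intro s t hst
    have := hg (Fin.succ_lt_succ_iff.mpr hst)
    simp only [hg', Fin.lt_def] at *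
    have := hgpos s
    omega
  have hos' : OneStep f' g' := by
    constructor
    · intro t t' htt
      have := hos.1 t.succ t'.succ (by
        intro h'; exact htt (Fin.succ_injective _ h'))
      rcases this with h' | h'
      · left; simp only [hf', hg', Fin.ext_iff]; rw [h']
      · right; simp only [hf', hg', Fin.ext_iff]; rw [h']
    · intro t
      have h1 := (hos.2 t.succ).1
      have h2 := (hos.2 t.succ).2
      have h3 := hfpos t
      have h4 := hgpos t
      constructor <;> simp only [hf', hg'] <;> omega
  rw [hfd, hgd, bord x (ne_of_gt h0) f' g']
  have := ihM (schur x) hytnn hydet hybd K f' g' hf'm hg'm hos'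
  positivity


/-- Main theorem: elementary quasiprincipal minors of an invertible TNN matrix with
positive bidiagonal entries are positive. -/
theorem eqp : ∀ (n : ℕ) (x : Matrix (Fin n) (Fin n) ℝ), TotallyNonneg x → 0 < x.det →
    Bidiag x → ∀ (k : ℕ) (f g : Fin k → Fin n), StrictMono f → StrictMono g → OneStep f g →
    0 < (x.submatrix f g).det := by
  intro n
  induction n using Nat.strong_induction_on with
  | _ n ih =>
  intro x htnn hd hbd k f g hf hg hos
  rcases Nat.eq_zero_or_pos k with rfl | hk
  · rw [Matrix.det_isEmpty]; norm_num
  obtain ⟨K, rfl⟩ : ∃ K, k = K + 1 := ⟨k - 1, by omega⟩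
  rcases Nat.eq_zero_or_pos n with rfl | hn
  · exact absurd (f 0).isLt (by omega)
  obtain ⟨M, rfl⟩ : ∃ M, n = M + 1 := ⟨n - 1, by omega⟩
  have ihM : ∀ (y : Matrix (Fin M) (Fin M) ℝ), TotallyNonneg y → 0 < y.det → Bidiag y →
      ∀ (k : ℕ) (f g : Fin k → Fin M), StrictMono f → StrictMono g → OneStep f g →
        0 < (y.submatrix f g).det :=
    fun y hy hyd hybd k f g hf hg hos => ih M (by omega) y hy hyd hybd k f g hf hg hos
  by_cases hW1 : ∀ t, (f t : ℕ) < M ∧ (g t : ℕ) < M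
  · -- leading window
    have hM0 : 0 + M ≤ M + 1 := by omega
    set f' : Fin (K+1) → Fin M := fun t => ⟨f t, (hW1 t).1⟩ with hf'
    set g' : Fin (K+1) → Fin M := fun t => ⟨g t, (hW1 t).2⟩ with hg'
    have hsub : x.submatrix f g = (x.submatrix (win 0 hM0) (win 0 hM0)).submatrix f' g' := by
      ext s t
      simp only [submatrix_apply]
      congr 1 <;> simp [win, hf', hg', Fin.ext_iff]
    rw [hsub]
    refine ihM _ (tnn_submatrix htnn _ _ (win_strictMono _ _) (win_strictMono _ _))
      (contigPos htnn hd hM0) (bidiag_window hbd hM0) _ f' g' ?_ ?_ ?_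
    · intro s t hst
      have := hf hst
      simp only [hf', Fin.lt_def] at *
      omega
    · intro s t hst
      have := hg hst
      simp only [hg', Fin.lt_def] at *
      omega
    · constructor
      · intro t t' htt
        rcases hos.1 t t' htt with h | h
        · left; simp only [hf', hg', Fin.ext_iff]; rw [h]
        · right; simp only [hf', hg', Fin.ext_iff]; rw [h]
      · intro t
        have := hos.2 t
        simp only [hf', hg']
        omega
  by_cases hW2 : ∀ t, 0 < (f t : ℕ) ∧ 0 < (g t : ℕ)
  · -- trailing window
    have hM1 : 1 + M ≤ M + 1 := by omega
    set f' : Fin (K+1) → Fin M := fun t => ⟨(f t : ℕ) - 1, by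
      have := (f t).isLt; have := (hW2 t).1; omega⟩ with hf'
    set g' : Fin (K+1) → Fin M := fun t => ⟨(g t : ℕ) - 1, by
      have := (g t).isLt; have := (hW2 t).2; omega⟩ with hg'
    have hsub : x.submatrix f g = (x.submatrix (win 1 hM1) (win 1 hM1)).submatrix f' g' := by
      ext s t
      simp only [submatrix_apply]
      congr 1 <;> simp only [win, hf', hg', Fin.ext_iff] <;>
        [have := (hW2 s).1; have := (hW2 t).2] <;> omega
    rw [hsub]
    refine ihM _ (tnn_submatrix htnn _ _ (win_strictMono _ _) (win_strictMono _ _))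
      (contigPos htnn hd hM1) (bidiag_window hbd hM1) _ f' g' ?_ ?_ ?_
    · intro s t hst
      have h1 := hf hst
      have h2 := (hW2 s).1
      simp only [hf', Fin.lt_def] at *
      omega
    · intro s t hst
      have h1 := hg hst
      have h2 := (hW2 s).2
      simp only [hg', Fin.lt_def] at *
      omega
    · constructor
      · intro t t' htt
        rcases hos.1 t t' htt with h | h
        · left; simp only [hf', hg', Fin.ext_iff]; rw [h]
        · right; simp only [hf', hg', Fin.ext_iff]; rw [h]
      · intro t
        have h1 := hos.2 t
        have h2 := (hW2 t).1
        have h3 := (hW2 t).2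
        simp only [hf', hg']
        omega
  -- boundary case
  push_neg at hW1 hW2
  obtain ⟨t1, ht1⟩ := hW1
  obtain ⟨t0, ht0⟩ := hW2
  have hmax : (f t1 : ℕ) = M ∨ (g t1 : ℕ) = M := by
    have h1 := (f t1).isLt
    have h2 := (g t1).isLt
    by_cases h : (f t1 : ℕ) < M
    · have := ht1 h; omega
    · omega
  have hmin : (f t0 : ℕ) = 0 ∨ (g t0 : ℕ) = 0 := by
    by_cases h : 0 < (f t0 : ℕ)
    · have := ht0 h; omega
    · omega
  have hmin0 : (f 0 : ℕ) = 0 ∨ (g 0 : ℕ) = 0 := by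
    rcases hmin with h | h
    · left
      have := hf.monotone (Fin.zero_le t0)
      omega
    · right
      have := hg.monotone (Fin.zero_le t0)
      omega
  have hKlt : K < K + 1 := by omega
  have hmaxl : (f ⟨K, hKlt⟩ : ℕ) = M ∨ (g ⟨K, hKlt⟩ : ℕ) = M := by
    rcases hmax with h | h
    · left
      have h1 := hf.monotone (show t1 ≤ ⟨K, hKlt⟩ by
        rw [Fin.le_def]; exact Nat.lt_succ_iff.mp t1.isLt)
      have := (f ⟨K, hKlt⟩).isLt
      omega
    · right
      have h1 := hg.monotone (show t1 ≤ ⟨K, hKlt⟩ by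
        rw [Fin.le_def]; exact Nat.lt_succ_iff.mp t1.isLt)
      have := (g ⟨K, hKlt⟩).isLt
      omega
  by_cases hb : (f 0 : ℕ) = 0 ∧ (g 0 : ℕ) = 0
  · exact core_top ihM htnn hd hbd hf hg hos
      (by rw [Fin.ext_iff]; exact hb.1) (by rw [Fin.ext_iff]; exact hb.2)
  have hdiff : f 0 ≠ g 0 := by
    intro hc
    rcases hmin0 with h | h
    · exact hb ⟨h, by rw [← hc]; exact h⟩
    · exact hb ⟨by rw [hc]; exact h, h⟩
  have heqt : ∀ t : Fin (K+1), t ≠ 0 → f t = g t := by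
    intro t ht
    rcases hos.1 0 t (fun h => ht h.symm) with h | h
    · exact absurd h hdiff
    · exact h
  rcases Nat.eq_zero_or_pos K with rfl | hK
  · -- k = 1, forces n = 2 and the minor is a bidiagonal entry
    have h2 := hos.2 0
    have hM1 : M = 1 := by
      have e0 : (⟨0, hKlt⟩ : Fin 1) = 0 := rfl
      rw [e0] at hmaxl
      have h3 := (f 0).isLt
      have h4 := (g 0).isLt
      have h5 : (f 0 : ℕ) ≠ (g 0 : ℕ) := fun hc => hdiff (Fin.ext hc)
      rcases hmin0 with h | h <;> rcases hmaxl with h' | h' <;> omega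
    subst hM1
    have hdet1 : (x.submatrix f g).det = x (f 0) (g 0) := det_fin_one _
    rw [hdet1]
    have h5 : (f 0 : ℕ) ≠ (g 0 : ℕ) := fun hc => hdiff (Fin.ext hc)
    have h3 := (f 0).isLt
    have h4 := (g 0).isLt
    rcases hmin0 with h | h
    · have hg1 : (g 0 : ℕ) = 1 := by omega
      have ef : f 0 = ⟨0, by omega⟩ := Fin.ext h
      have eg : g 0 = ⟨1, by omega⟩ := Fin.ext hg1
      rw [ef, eg]
      exact (hbd 0 (by omega)).1
    · have hf1 : (f 0 : ℕ) = 1 := by omega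
      have ef : f 0 = ⟨1, by omega⟩ := Fin.ext hf1
      have eg : g 0 = ⟨0, by omega⟩ := Fin.ext h
      rw [ef, eg]
      exact (hbd 0 (by omega)).2
  · -- K ≥ 1 : bottom corner case, reduce by reversal to core_top
    have hlast : f ⟨K, hKlt⟩ = g ⟨K, hKlt⟩ := heqt _ (by
      intro hc
      have h' : K = ((0 : Fin (K+1)) : ℕ) := congrArg Fin.val hc
      rw [Fin.val_zero] at h'
      omega)
    have hlastM : (f ⟨K, hKlt⟩ : ℕ) = M := by
      rcases hmaxl with h | h
      · exact h
      · rw [hlast]; exact h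
    have hrev : (x.submatrix f g).det
        = ((revm x).submatrix (Fin.rev ∘ f ∘ Fin.rev) (Fin.rev ∘ g ∘ Fin.rev)).det := by
      rw [revm_minor]
      have hff : (Fin.rev ∘ (Fin.rev ∘ f ∘ Fin.rev) ∘ Fin.rev) = f := by
        funext t; simp [Fin.rev_rev]
      have hgg : (Fin.rev ∘ (Fin.rev ∘ g ∘ Fin.rev) ∘ Fin.rev) = g := by
        funext t; simp [Fin.rev_rev]
      rw [hff, hgg]
    rw [hrev]
    have hrev0 : (Fin.rev (0 : Fin (K+1))) = ⟨K, hKlt⟩ := by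
      rw [Fin.ext_iff, Fin.val_rev]
      simp
    refine core_top ihM (revm_tnn htnn) (by rw [revm_det]; exact hd) (bidiag_revm hbd)
      (rev_comp_strictMono hf) (rev_comp_strictMono hg) ?_ ?_ ?_
    · constructor
      · intro t t' htt
        rcases hos.1 (Fin.rev t) (Fin.rev t')
          (fun h => htt (Fin.rev_injective h)) with h | h
        · left; simp only [Function.comp_apply]; rw [h]
        · right; simp only [Function.comp_apply]; rw [h]
      · intro t
        have h1 := hos.2 (Fin.rev t)
        have h2 := (f (Fin.rev t)).isLt
        have h3 := (g (Fin.rev t)).isLt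
        simp only [Function.comp_apply, Fin.val_rev]
        omega
    · show Fin.rev (f (Fin.rev 0)) = 0
      rw [hrev0, Fin.ext_iff, Fin.val_rev, hlastM]
      simp
    · show Fin.rev (g (Fin.rev 0)) = 0
      rw [hrev0, Fin.ext_iff, Fin.val_rev, ← hlast, hlastM]
      simp

noncomputable def monoOf {k n : ℕ} (φ : Fin k → Fin n) : Fin k → Fin n :=
  if h : (Finset.univ.image φ).card = k then (Finset.univ.image φ).orderEmbOfFin h else φ

noncomputable def permOf {k n : ℕ} (φ : Fin k → Fin n) : Equiv.Perm (Fin k) :=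
  if h : ∃ ψ : Equiv.Perm (Fin k), φ = monoOf φ ∘ ψ then h.choose else Equiv.refl _

lemma monoOf_spec {k n : ℕ} {φ : Fin k → Fin n} (hφ : Function.Injective φ) :
    StrictMono (monoOf φ) ∧ φ = monoOf φ ∘ permOf φ := by
  have hcard : (Finset.univ.image φ).card = k := by
    rw [Finset.card_image_of_injective _ hφ, Finset.card_univ, Fintype.card_fin]
  have hmono : monoOf φ = (Finset.univ.image φ).orderEmbOfFin hcard := by
    rw [monoOf, dif_pos hcard]
  constructor
  · rw [hmono]; exact ((Finset.univ.image φ).orderEmbOfFin hcard).strictMono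
  · have hex : ∃ ψ : Equiv.Perm (Fin k), φ = monoOf φ ∘ ψ := by
      have hmem : ∀ i, φ i ∈ Finset.univ.image φ :=
        fun i => Finset.mem_image_of_mem φ (Finset.mem_univ i)
      set u : Fin k → Fin k :=
        fun i => ((Finset.univ.image φ).orderIsoOfFin hcard).symm ⟨φ i, hmem i⟩ with hu
      have huinj : Function.Injective u := by
        intro a b hab
        apply hφ
        have hab' : ((Finset.univ.image φ).orderIsoOfFin hcard).symm ⟨φ a, hmem a⟩
            = ((Finset.univ.image φ).orderIsoOfFin hcard).symm ⟨φ b, hmem b⟩ := hab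
        have := ((Finset.univ.image φ).orderIsoOfFin hcard).symm.injective hab'
        exact congrArg Subtype.val this
      have hubij : Function.Bijective u := (Finite.injective_iff_bijective).mp huinj
      refine ⟨Equiv.ofBijective u hubij, ?_⟩
      funext i
      simp only [Function.comp_apply, Equiv.ofBijective_apply, hmono, hu]
      rw [← Finset.coe_orderIsoOfFin_apply, OrderIso.apply_symm_apply]
    rw [permOf, dif_pos hex]
    exact hex.choose_spec

lemma monoOf_comp {k n : ℕ} (h : Fin k → Fin n) (σ : Equiv.Perm (Fin k))
    (hh : StrictMono h) : monoOf (h ∘ σ) = h ∧ permOf (h ∘ σ) = σ := by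
  have hinj : Function.Injective (h ∘ σ) := hh.injective.comp σ.injective
  have himg : Finset.univ.image (h ∘ σ) = Finset.univ.image h := by
    ext a
    simp only [Finset.mem_image, Finset.mem_univ, true_and, Function.comp_apply]
    constructor
    · rintro ⟨i, rfl⟩; exact ⟨σ i, rfl⟩
    · rintro ⟨i, rfl⟩; exact ⟨σ.symm i, by simp⟩
  have hcard : (Finset.univ.image (h ∘ σ)).card = k := by
    rw [Finset.card_image_of_injective _ hinj, Finset.card_univ, Fintype.card_fin]
  have hcard' : (Finset.univ.image h).card = k := by rw [← himg]; exact hcard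
  have h1 : monoOf (h ∘ σ) = h := by
    rw [monoOf, dif_pos hcard]
    have := Finset.orderEmbOfFin_unique hcard' (f := h)
      (fun x => Finset.mem_image_of_mem h (Finset.mem_univ x)) hh
    have he : (Finset.univ.image (h ∘ σ)).orderEmbOfFin hcard
        = (Finset.univ.image h).orderEmbOfFin hcard' := by
      congr 1
    rw [he, ← this]
  refine ⟨h1, ?_⟩
  have hex : ∃ ψ : Equiv.Perm (Fin k), h ∘ σ = monoOf (h ∘ σ) ∘ ψ := ⟨σ, by rw [h1]⟩
  rw [permOf, dif_pos hex]
  have hspec := hex.choose_spec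
  ext i
  have hsi := congrFun hspec i
  have h1i := congrFun h1 (hex.choose i)
  exact congrArg Fin.val (hh.injective ((hsi.trans h1i) : h (σ i) = h (hex.choose i))).symm

open Finset in
/-- Cauchy–Binet formula. -/
lemma cauchy_binet {k n : ℕ} (P : Matrix (Fin k) (Fin n) ℝ) (Q : Matrix (Fin n) (Fin k) ℝ) :
    (P * Q).det = ∑ h ∈ Finset.univ.filter (fun h : Fin k → Fin n => StrictMono h),
      (P.submatrix id h).det * (Q.submatrix h id).det := by
  classical
  -- Step 1: expand by multilinearity
  have hrow : (P * Q : Matrix (Fin k) (Fin k) ℝ) = fun i => ∑ t : Fin n, P i t • Q t := by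
    funext i j
    simp [Matrix.mul_apply, Finset.sum_apply]
  have h1 : (P * Q).det = ∑ φ : Fin k → Fin n,
      (∏ i, P i (φ i)) * (Q.submatrix φ id).det := by
    show detRowAlternating (P * Q) = _
    rw [hrow]
    calc detRowAlternating (fun i => ∑ t : Fin n, P i t • Q t)
        = ∑ φ : Fin k → Fin n, detRowAlternating (fun i => P i (φ i) • Q (φ i)) :=
          ((detRowAlternating : ((Fin k) → ℝ) [⋀^Fin k]→ₗ[ℝ] ℝ).toMultilinearMap.map_sum
            (g := fun i t => P i t • Q t) : _)
      _ = ∑ φ : Fin k → Fin n, (∏ i, P i (φ i)) * (Q.submatrix φ id).det := by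
          refine Finset.sum_congr rfl fun φ _ => ?_
          have := (detRowAlternating : ((Fin k) → ℝ) [⋀^Fin k]→ₗ[ℝ] ℝ).toMultilinearMap.map_smul_univ
            (fun i => P i (φ i)) (fun i => Q (φ i))
          rw [smul_eq_mul] at this
          exact this
  -- Step 2: drop non-injective terms
  have h2 : ∑ φ : Fin k → Fin n, (∏ i, P i (φ i)) * (Q.submatrix φ id).det
      = ∑ φ ∈ Finset.univ.filter (fun φ : Fin k → Fin n => Function.Injective φ),
          (∏ i, P i (φ i)) * (Q.submatrix φ id).det := by
    symm
    apply Finset.sum_filter_of_ne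
    intro φ _ hne
    by_contra hninj
    rw [Function.Injective] at hninj
    push_neg at hninj
    obtain ⟨a, b, hab, hne'⟩ := hninj
    have : (Q.submatrix φ id).det = 0 :=
      det_zero_of_row_eq hne' (by
        funext j
        simp [submatrix_apply, hab])
    rw [this, mul_zero] at hne
    exact hne rfl
  rw [h1, h2]
  -- Step 3: reindex injective maps by (strictly monotone map, permutation)
  have h3 : ∑ φ ∈ Finset.univ.filter (fun φ : Fin k → Fin n => Function.Injective φ),
        (∏ i, P i (φ i)) * (Q.submatrix φ id).det
      = ∑ p ∈ (Finset.univ.filter (fun h : Fin k → Fin n => StrictMono h)) ×ˢ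
          (Finset.univ : Finset (Equiv.Perm (Fin k))),
        (∏ i, P i (p.1 (p.2 i))) * (Q.submatrix (p.1 ∘ p.2) id).det := by
    refine Finset.sum_nbij' (fun φ => (monoOf φ, permOf φ)) (fun p => p.1 ∘ p.2)
      ?_ ?_ ?_ ?_ ?_
    · intro φ hφ
      rw [Finset.mem_filter] at hφ
      rw [Finset.mem_product, Finset.mem_filter]
      exact ⟨⟨Finset.mem_univ _, (monoOf_spec hφ.2).1⟩, Finset.mem_univ _⟩
    · intro p hp
      rw [Finset.mem_product, Finset.mem_filter] at hp
      rw [Finset.mem_filter]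
      exact ⟨Finset.mem_univ _, hp.1.2.injective.comp p.2.injective⟩
    · intro φ hφ
      rw [Finset.mem_filter] at hφ
      exact ((monoOf_spec hφ.2).2).symm
    · intro p hp
      rw [Finset.mem_product, Finset.mem_filter] at hp
      obtain ⟨h1', h2'⟩ := monoOf_comp p.1 p.2 hp.1.2
      exact Prod.ext h1' h2'
    · intro φ hφ
      rw [Finset.mem_filter] at hφ
      have hd := (monoOf_spec hφ.2).2
      congr 1
      · refine Finset.prod_congr rfl fun i _ => ?_
        rw [congrFun hd i]
        rfl
      · rw [← hd]
  rw [h3, Finset.sum_product]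
  -- Step 4: inner sum over permutations gives the minor of P
  refine Finset.sum_congr rfl fun h hh => ?_
  rw [Finset.mem_filter] at hh
  have h4 : ∀ σ : Equiv.Perm (Fin k),
      (Q.submatrix (h ∘ σ) id) = (Q.submatrix h id).submatrix σ id := fun σ => rfl
  calc ∑ σ : Equiv.Perm (Fin k), (∏ i, P i (h (σ i))) * (Q.submatrix (h ∘ σ) id).det
      = ∑ σ : Equiv.Perm (Fin k),
          ((Equiv.Perm.sign σ : ℤ) : ℝ) * (∏ i, P i (h (σ i))) * (Q.submatrix h id).det := by
        refine Finset.sum_congr rfl fun σ _ => ?_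
        rw [h4 σ, det_permute]
        ring
    _ = (∑ σ : Equiv.Perm (Fin k), ((Equiv.Perm.sign σ : ℤ) : ℝ) * ∏ i, P i (h (σ i)))
          * (Q.submatrix h id).det := by rw [Finset.sum_mul]
    _ = (P.submatrix id h).det * (Q.submatrix h id).det := by
        congr 1
        rw [← det_transpose (P.submatrix id h), det_apply']
        refine Finset.sum_congr rfl fun σ _ => ?_
        congr 1


lemma tnn_mul {n : ℕ} {A B : Matrix (Fin n) (Fin n) ℝ}
    (hA : TotallyNonneg A) (hB : TotallyNonneg B) : TotallyNonneg (A * B) := by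
  intro k f g hf hg
  have hAB : (A * B).submatrix f g = (A.submatrix f id) * (B.submatrix id g) := by
    ext i j
    simp [Matrix.mul_apply]
  rw [hAB, cauchy_binet]
  apply Finset.sum_nonneg
  intro h hh
  rw [Finset.mem_filter] at hh
  have e1 : (A.submatrix f id).submatrix id h = A.submatrix f h := by
    rw [submatrix_submatrix]; rfl
  have e2 : (B.submatrix id g).submatrix h id = B.submatrix h g := by
    rw [submatrix_submatrix]; rfl
  rw [e1, e2]
  exact mul_nonneg (hA k f h hf hh.2) (hB k h g hh.2 hg)

lemma tnn_pow {n : ℕ} {x : Matrix (Fin n) (Fin n) ℝ} (htnn : TotallyNonneg x) :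
    ∀ m, 1 ≤ m → TotallyNonneg (x ^ m) := by
  intro m
  induction m with
  | zero => omega
  | succ m ihm =>
    intro _
    rcases Nat.eq_zero_or_pos m with rfl | hm
    · rw [pow_one]; exact htnn
    · rw [pow_succ]
      exact tnn_mul (ihm hm) htnn

/-- ℕ-valued distance between two tuples. -/
def fdist {k n : ℕ} (f g : Fin k → Fin n) : ℕ := ∑ t, ((f t : ℤ) - (g t : ℤ)).natAbs

lemma onestep_of_dist_le_one {k n : ℕ} {f g : Fin k → Fin n} (h : fdist f g ≤ 1) :
    OneStep f g := by
  have hterm : ∀ t, ((f t : ℤ) - (g t : ℤ)).natAbs ≤ 1 := by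
    intro t
    have h5 : ((f t : ℤ) - (g t : ℤ)).natAbs ≤ ∑ s, ((f s : ℤ) - (g s : ℤ)).natAbs :=
      Finset.single_le_sum (f := fun s => ((f s : ℤ) - (g s : ℤ)).natAbs)
        (fun _ _ => Nat.zero_le _) (Finset.mem_univ t)
    exact le_trans h5 h
  constructor
  · intro t t' htt
    by_contra hcon
    push_neg at hcon
    obtain ⟨h1, h2⟩ := hcon
    have e1 : 1 ≤ ((f t : ℤ) - (g t : ℤ)).natAbs := by
      rcases Nat.eq_zero_or_pos (((f t : ℤ) - (g t : ℤ)).natAbs) with h' | h'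
      · exfalso; apply h1; apply Fin.ext; omega
      · omega
    have e2 : 1 ≤ ((f t' : ℤ) - (g t' : ℤ)).natAbs := by
      rcases Nat.eq_zero_or_pos (((f t' : ℤ) - (g t' : ℤ)).natAbs) with h' | h'
      · exfalso; apply h2; apply Fin.ext; omega
      · omega
    have ht' : t' ∈ Finset.univ.erase t :=
      Finset.mem_erase.mpr ⟨fun h' => htt h'.symm, Finset.mem_univ _⟩
    have h6 : ((f t' : ℤ) - (g t' : ℤ)).natAbs
        ≤ ∑ s ∈ Finset.univ.erase t, ((f s : ℤ) - (g s : ℤ)).natAbs :=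
      Finset.single_le_sum (f := fun s => ((f s : ℤ) - (g s : ℤ)).natAbs)
        (fun _ _ => Nat.zero_le _) ht'
    have h7 : fdist f g = ((f t : ℤ) - (g t : ℤ)).natAbs
        + ∑ s ∈ Finset.univ.erase t, ((f s : ℤ) - (g s : ℤ)).natAbs := by
      rw [fdist, ← Finset.add_sum_erase _ _ (Finset.mem_univ t)]
    omega
  · intro t
    have := hterm t
    omega

lemma fdist_update {k n : ℕ} (f g : Fin k → Fin n) (t₀ : Fin k) (v : Fin n) :
    fdist (Function.update f t₀ v) g + ((f t₀ : ℤ) - (g t₀ : ℤ)).natAbs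
      = fdist f g + ((v : ℤ) - (g t₀ : ℤ)).natAbs := by
  rw [fdist, fdist, ← Finset.add_sum_erase _ _ (Finset.mem_univ t₀),
    ← Finset.add_sum_erase _ _ (Finset.mem_univ t₀)]
  have hsame : ∀ s ∈ Finset.univ.erase t₀,
      ((Function.update f t₀ v s : ℤ) - (g s : ℤ)).natAbs
        = ((f s : ℤ) - (g s : ℤ)).natAbs := by
    intro s hs
    rw [Function.update_of_ne (Finset.mem_erase.mp hs).1]
  rw [Finset.sum_congr rfl hsame, Function.update_self]
  omega

/-- one elementary move towards the target. -/
lemma move {k n : ℕ} {f g : Fin k → Fin n} (hf : StrictMono f) (hg : StrictMono g)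
    (hne : f ≠ g) :
    ∃ f' : Fin k → Fin n, StrictMono f' ∧ OneStep f f' ∧ fdist f' g + 1 = fdist f g := by
  classical
  by_cases hA : ∃ t, (f t : ℕ) < (g t : ℕ)
  · set T := Finset.univ.filter (fun t => (f t : ℕ) < (g t : ℕ)) with hT
    have hTne : T.Nonempty := by
      obtain ⟨t, ht⟩ := hA
      exact ⟨t, by rw [hT, Finset.mem_filter]; exact ⟨Finset.mem_univ _, ht⟩⟩
    set t₀ := T.max' hTne with ht₀
    have ht₀T : t₀ ∈ T := T.max'_mem hTne
    have ht₀lt : (f t₀ : ℕ) < (g t₀ : ℕ) := by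
      rw [hT] at ht₀T
      exact (Finset.mem_filter.mp ht₀T).2
    have hgt : ∀ t, t₀ < t → (g t : ℕ) ≤ (f t : ℕ) := by
      intro t ht
      by_contra hcon
      push_neg at hcon
      have : t ∈ T := by rw [hT, Finset.mem_filter]; exact ⟨Finset.mem_univ _, hcon⟩
      exact absurd (T.le_max' t this) (not_le.mpr ht)
    set v : Fin n := ⟨(f t₀ : ℕ) + 1, by have := (g t₀).isLt; omega⟩ with hv
    refine ⟨Function.update f t₀ v, ?_, ?_, ?_⟩
    · intro s t hst
      by_cases hs : s = t₀ <;> by_cases ht : t = t₀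
      · rw [hs, ht] at hst; exact absurd hst (lt_irrefl _)
      · rw [hs, Function.update_self, Function.update_of_ne ht]
        have hst' : t₀ < t := by rw [← hs]; exact hst
        have h1 := hgt t hst'
        have h2 := hg hst'
        rw [Fin.lt_def] at *
        show (f t₀ : ℕ) + 1 < (f t : ℕ)
        omega
      · rw [ht, Function.update_self, Function.update_of_ne hs]
        have hst' : s < t₀ := by rw [← ht]; exact hst
        have := hf hst'
        rw [Fin.lt_def] at *
        show (f s : ℕ) < (f t₀ : ℕ) + 1
        omega
      · rw [Function.update_of_ne hs, Function.update_of_ne ht]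
        exact hf hst
    · constructor
      · intro t t' htt
        by_cases hs : t = t₀
        · right; rw [Function.update_of_ne (fun h => htt (hs.trans h.symm))]
        · left; rw [Function.update_of_ne hs]
      · intro t
        by_cases hs : t = t₀
        · rw [hs, Function.update_self]
          constructor
          · show (f t₀ : ℕ) ≤ ((f t₀ : ℕ) + 1) + 1; omega
          · show ((f t₀ : ℕ) + 1) ≤ (f t₀ : ℕ) + 1; omega
        · rw [Function.update_of_ne hs]; omega
    · have := fdist_update f g t₀ v
      have hvv : ((v : ℤ) - (g t₀ : ℤ)).natAbs + 1 = ((f t₀ : ℤ) - (g t₀ : ℤ)).natAbs := by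
        rw [hv]
        show (((f t₀ : ℕ) + 1 : ℕ) - (g t₀ : ℤ)).natAbs + 1 = _
        omega
      omega
  · push_neg at hA
    have hB : ∃ t, (g t : ℕ) < (f t : ℕ) := by
      by_contra hcon
      push_neg at hcon
      apply hne
      funext t
      exact Fin.ext (le_antisymm (hcon t) (hA t))
    set T := Finset.univ.filter (fun t => (g t : ℕ) < (f t : ℕ)) with hT
    have hTne : T.Nonempty := by
      obtain ⟨t, ht⟩ := hB
      exact ⟨t, by rw [hT, Finset.mem_filter]; exact ⟨Finset.mem_univ _, ht⟩⟩
    set t₀ := T.min' hTne with ht₀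
    have ht₀T : t₀ ∈ T := T.min'_mem hTne
    have ht₀lt : (g t₀ : ℕ) < (f t₀ : ℕ) := by
      rw [hT] at ht₀T
      exact (Finset.mem_filter.mp ht₀T).2
    have hlt : ∀ t, t < t₀ → (f t : ℕ) ≤ (g t : ℕ) := by
      intro t ht
      by_contra hcon
      push_neg at hcon
      have : t ∈ T := by rw [hT, Finset.mem_filter]; exact ⟨Finset.mem_univ _, hcon⟩
      exact absurd (T.min'_le t this) (not_le.mpr ht)
    set v : Fin n := ⟨(f t₀ : ℕ) - 1, by have := (f t₀).isLt; omega⟩ with hv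
    refine ⟨Function.update f t₀ v, ?_, ?_, ?_⟩
    · intro s t hst
      by_cases hs : s = t₀ <;> by_cases ht : t = t₀
      · rw [hs, ht] at hst; exact absurd hst (lt_irrefl _)
      · rw [hs, Function.update_self, Function.update_of_ne ht]
        have hst' : t₀ < t := by rw [← hs]; exact hst
        have h2 := hf hst'
        rw [Fin.lt_def] at *
        show (f t₀ : ℕ) - 1 < (f t : ℕ)
        omega
      · rw [ht, Function.update_self, Function.update_of_ne hs]
        have hst' : s < t₀ := by rw [← ht]; exact hst
        have h1 := hlt s hst'
        have h2 := hg hst'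
        rw [Fin.lt_def] at *
        show (f s : ℕ) < (f t₀ : ℕ) - 1
        omega
      · rw [Function.update_of_ne hs, Function.update_of_ne ht]
        exact hf hst
    · constructor
      · intro t t' htt
        by_cases hs : t = t₀
        · right; rw [Function.update_of_ne (fun h => htt (hs.trans h.symm))]
        · left; rw [Function.update_of_ne hs]
      · intro t
        by_cases hs : t = t₀
        · rw [hs, Function.update_self]
          constructor
          · show (f t₀ : ℕ) ≤ ((f t₀ : ℕ) - 1) + 1; omega
          · show ((f t₀ : ℕ) - 1) ≤ (f t₀ : ℕ) + 1; omega
        · rw [Function.update_of_ne hs]; omega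
    · have := fdist_update f g t₀ v
      have hvv : ((v : ℤ) - (g t₀ : ℤ)).natAbs + 1 = ((f t₀ : ℤ) - (g t₀ : ℤ)).natAbs := by
        rw [hv]
        show (((f t₀ : ℕ) - 1 : ℕ) - (g t₀ : ℤ)).natAbs + 1 = _
        omega
      omega


lemma chain {n : ℕ} {x : Matrix (Fin n) (Fin n) ℝ} (htnn : TotallyNonneg x)
    (hd : 0 < x.det) (hbd : Bidiag x) :
    ∀ m, 1 ≤ m → ∀ (k : ℕ) (f g : Fin k → Fin n), StrictMono f → StrictMono g →
      fdist f g ≤ m → 0 < ((x ^ m).submatrix f g).det := by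
  intro m
  induction m with
  | zero => omega
  | succ m ihm =>
    intro _ k f g hf hg hdist
    rcases Nat.eq_zero_or_pos m with rfl | hm
    · rw [pow_one]
      exact eqp n x htnn hd hbd k f g hf hg (onestep_of_dist_le_one hdist)
    · obtain ⟨f', hf', hos', hdist'⟩ :
          ∃ f', StrictMono f' ∧ OneStep f f' ∧ fdist f' g ≤ m := by
        by_cases hfg : f = g
        · refine ⟨f, hf, ⟨fun t t' _ => Or.inl rfl, fun t => by omega⟩, ?_⟩
          subst hfg
          have h0 : fdist f f = 0 := by
            rw [fdist]
            apply Finset.sum_eq_zero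
            intro t _
            omega
          omega
        · obtain ⟨f', h1, h2, h3⟩ := move hf hg hfg
          exact ⟨f', h1, h2, by omega⟩
      rw [pow_succ']
      have hAB : ((x * x ^ m).submatrix f g)
          = (x.submatrix f id) * ((x ^ m).submatrix id g) := by
        ext i j
        simp [Matrix.mul_apply]
      rw [hAB, cauchy_binet]
      have e1 : ∀ h : Fin k → Fin n, (x.submatrix f id).submatrix id h = x.submatrix f h := by
        intro h; rw [submatrix_submatrix]; rfl
      have e2 : ∀ h : Fin k → Fin n,
          ((x ^ m).submatrix id g).submatrix h id = (x ^ m).submatrix h g := by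
        intro h; rw [submatrix_submatrix]; rfl
      apply Finset.sum_pos'
      · intro h hh
        rw [Finset.mem_filter] at hh
        rw [e1 h, e2 h]
        exact mul_nonneg (htnn k f h hf hh.2) (tnn_pow htnn m hm k h g hh.2 hg)
      · refine ⟨f', Finset.mem_filter.mpr ⟨Finset.mem_univ _, hf'⟩, ?_⟩
        rw [e1 f', e2 f']
        exact mul_pos (eqp n x htnn hd hbd k f f' hf hf' hos')
          (ihm hm k f' g hf' hg hdist')

lemma osc_of_bidiag {n : ℕ} (hn : 2 ≤ n) {x : Matrix (Fin n) (Fin n) ℝ}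
    (htnn : TotallyNonneg x) (hd : 0 < x.det) (hbd : Bidiag x) : Oscillatory x := by
  refine ⟨n * n, by nlinarith, ?_⟩
  intro k f g hf hg
  apply chain htnn hd hbd (n * n) (by nlinarith) k f g hf hg
  have hk : k ≤ n := by
    have := Fintype.card_le_of_injective f hf.injective
    simpa using this
  calc fdist f g ≤ ∑ _t : Fin k, n := Finset.sum_le_sum (fun t _ => by
        have := (f t).isLt; have := (g t).isLt
        omega)
    _ = k * n := by rw [Finset.sum_const]; simp [mul_comm]
    _ ≤ n * n := Nat.mul_le_mul_right _ hk

lemma det_eq_zero_of_block {k : ℕ} (M : Matrix (Fin k) (Fin k) ℝ) (S T : Finset (Fin k))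
    (hzero : ∀ s ∈ S, ∀ t ∈ T, M s t = 0) (hcard : k < S.card + T.card) : M.det = 0 := by
  rw [det_apply']
  apply Finset.sum_eq_zero
  intro σ _
  have hex : ∃ i ∈ T, σ i ∈ S := by
    by_contra hcon
    push_neg at hcon
    have himg : T.image σ ⊆ Sᶜ := by
      intro a ha
      rw [Finset.mem_image] at ha
      obtain ⟨i, hi, rfl⟩ := ha
      rw [Finset.mem_compl]
      exact hcon i hi
    have h1 : (T.image σ).card = T.card := Finset.card_image_of_injective T σ.injective
    have h2 : (T.image σ).card ≤ Sᶜ.card := Finset.card_le_card himg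
    have h3 : Sᶜ.card = Fintype.card (Fin k) - S.card := Finset.card_compl S
    have h4 : S.card ≤ k := by
      have := Finset.card_le_card (Finset.subset_univ S)
      simpa using this
    rw [Fintype.card_fin] at h3
    omega
  obtain ⟨i, hiT, hiS⟩ := hex
  have hp : ∏ j : Fin k, M (σ j) j = 0 :=
    Finset.prod_eq_zero (f := fun j => M (σ j) j) (Finset.mem_univ i) (hzero _ hiS _ hiT)
  rw [hp, mul_zero]

lemma pow_block_zero {n : ℕ} {x : Matrix (Fin n) (Fin n) ℝ} {a : ℕ}
    (hblock : ∀ k l : Fin n, (k : ℕ) ≤ a → a < (l : ℕ) → x k l = 0) :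
    ∀ m, 1 ≤ m → ∀ k l : Fin n, (k : ℕ) ≤ a → a < (l : ℕ) → (x ^ m) k l = 0 := by
  intro m
  induction m with
  | zero => omega
  | succ m ihm =>
    intro _ k l hk hl
    rcases Nat.eq_zero_or_pos m with rfl | hm
    · rw [pow_one]; exact hblock k l hk hl
    rw [pow_succ']
    rw [Matrix.mul_apply]
    apply Finset.sum_eq_zero
    intro t _
    by_cases ht : (t : ℕ) ≤ a
    · rw [ihm hm t l ht hl, mul_zero]
    · rw [hblock k t hk (by omega), zero_mul]

lemma det_pos_of_unit {n : ℕ} {x : Matrix (Fin n) (Fin n) ℝ} (htnn : TotallyNonneg x)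
    (hx : IsUnit x) : 0 < x.det := by
  have h1 : IsUnit x.det := (Matrix.isUnit_iff_isUnit_det x).mp hx
  have h2 : x.det ≠ 0 := h1.ne_zero
  rcases (tnn_det htnn).lt_or_eq with h | h
  · exact h
  · exact absurd h.symm h2


lemma tp_entry {x : Matrix (Fin n) (Fin n) ℝ} (h : TotallyPos x) (i j : Fin n) :
    0 < x i j := by
  have := h 1 (fun _ => i) (fun _ => j)
    (by intro a b hab; fin_cases a <;> fin_cases b <;> simp_all)
    (by intro a b hab; fin_cases a <;> fin_cases b <;> simp_all)
  simpa [det_unique] using this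

lemma bidiag_of_osc {x : Matrix (Fin n) (Fin n) ℝ} (htnn : TotallyNonneg x)
    (hd : 0 < x.det) (hosc : Oscillatory x) : Bidiag x := by
  obtain ⟨m, hm, htp⟩ := hosc
  intro a ha
  constructor
  · by_contra hnp
    have h0 : x ⟨a, by omega⟩ ⟨a+1, ha⟩ = 0 :=
      le_antisymm (not_lt.mp hnp) (tnn_entry htnn _ _)
    have hprop := prop_zero htnn (fun t => diagPos htnn hd t) ha h0
    have := pow_block_zero hprop m hm ⟨a, by omega⟩ ⟨a+1, ha⟩ (le_refl _) (by simp)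
    have hpos := tp_entry htp ⟨a, by omega⟩ ⟨a+1, ha⟩
    rw [this] at hpos
    exact absurd hpos (lt_irrefl 0)
  · by_contra hnp
    have h0 : xᵀ ⟨a, by omega⟩ ⟨a+1, ha⟩ = 0 :=
      le_antisymm (not_lt.mp hnp) (tnn_entry (tnn_transpose htnn) _ _)
    have hdT : 0 < xᵀ.det := by rw [det_transpose]; exact hd
    have hprop := prop_zero (tnn_transpose htnn)
      (fun t => diagPos (tnn_transpose htnn) hdT t) ha h0
    have hb := pow_block_zero hprop m hm ⟨a, by omega⟩ ⟨a+1, ha⟩ (le_refl _) (by simp)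
    have hTpow : (xᵀ) ^ m = (x ^ m)ᵀ := (Matrix.transpose_pow x m).symm
    rw [hTpow] at hb
    have hpos := tp_entry htp ⟨a+1, ha⟩ ⟨a, by omega⟩
    rw [show (x ^ m) ⟨a+1, ha⟩ ⟨a, by omega⟩ = (x ^ m)ᵀ ⟨a, by omega⟩ ⟨a+1, ha⟩ from rfl,
      hb] at hpos
    exact absurd hpos (lt_irrefl 0)

end Osc


/-- The `i`-indicator minor `Δ_{j→i}(x)` (with `i, j` 1-indexed, `1 ≤ i, j ≤ n-1`).
If `j ≥ i`, it is the minor with (1-indexed) row set `{1,…,j+1} \ {i+1}` and column set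
`{1,…,j+1} \ {i}`; if `j < i`, it is the minor with row set `{1,…,j−1} ∪ {i}` and column
set `{1,…,j−1} ∪ {i+1}`. (Indices are converted to 0-indexed form; the `% n` is
a harmless clamp making the definition total, and it is the identity whenever
`1 ≤ i, j ≤ n-1`.) -/
noncomputable def Delta {n : ℕ} (hn : 0 < n) (i j : ℕ)
    (x : Matrix (Fin n) (Fin n) ℝ) : ℝ :=
  if i ≤ j then
    (Matrix.of fun k l : Fin j =>
      x ⟨(if (k : ℕ) < i then (k : ℕ) else (k : ℕ) + 1) % n, Nat.mod_lt _ hn⟩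
        ⟨(if (l : ℕ) < i - 1 then (l : ℕ) else (l : ℕ) + 1) % n, Nat.mod_lt _ hn⟩).det
  else
    (Matrix.of fun k l : Fin j =>
      x ⟨(if (k : ℕ) < j - 1 then (k : ℕ) else i - 1) % n, Nat.mod_lt _ hn⟩
        ⟨(if (l : ℕ) < j - 1 then (l : ℕ) else i) % n, Nat.mod_lt _ hn⟩).det

namespace Osc

lemma delta_pos {n : ℕ} (hn : 2 ≤ n) (hn0 : 0 < n) {i j : ℕ} (hi1 : 1 ≤ i) (hi2 : i ≤ n-1)
    (hj1 : 1 ≤ j) (hj2 : j ≤ n-1) {x : Matrix (Fin n) (Fin n) ℝ}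
    (htnn : TotallyNonneg x) (hd : 0 < x.det) (hbd : Bidiag x) :
    0 < Delta hn0 i j x := by
  rw [Delta]
  by_cases hij : i ≤ j
  · rw [if_pos hij]
    set F : Fin j → Fin n := fun k =>
      ⟨(if (k : ℕ) < i then (k : ℕ) else (k : ℕ) + 1) % n, Nat.mod_lt _ hn0⟩ with hF
    set G : Fin j → Fin n := fun l =>
      ⟨(if (l : ℕ) < i - 1 then (l : ℕ) else (l : ℕ) + 1) % n, Nat.mod_lt _ hn0⟩ with hG
    have hFval : ∀ k : Fin j, (F k : ℕ) = if (k : ℕ) < i then (k : ℕ) else (k : ℕ) + 1 := by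
      intro k
      have := k.isLt
      show (_ % n) = _
      apply Nat.mod_eq_of_lt
      split <;> omega
    have hGval : ∀ l : Fin j, (G l : ℕ) = if (l : ℕ) < i - 1 then (l : ℕ) else (l : ℕ) + 1 := by
      intro l
      have := l.isLt
      show (_ % n) = _
      apply Nat.mod_eq_of_lt
      split <;> omega
    have hFm : StrictMono F := by
      intro s t hst
      rw [Fin.lt_def] at hst ⊢
      rw [hFval s, hFval t]
      split_ifs <;> omega
    have hGm : StrictMono G := by
      intro s t hst
      rw [Fin.lt_def] at hst ⊢
      rw [hGval s, hGval t]
      split_ifs <;> omega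
    have heq : ∀ t : Fin j, (t : ℕ) ≠ i - 1 → F t = G t := by
      intro t ht
      rw [Fin.ext_iff, hFval t, hGval t]
      split_ifs <;> omega
    have hos : OneStep F G := by
      constructor
      · intro t t' htt
        by_cases ht : (t : ℕ) = i - 1
        · right
          apply heq
          intro hc
          exact htt (Fin.ext (ht.trans hc.symm))
        · left; exact heq t ht
      · intro t
        rw [hFval t, hGval t]
        constructor <;> split_ifs <;> omega
    have := eqp n x htnn hd hbd j F G hFm hGm hos
    exact this
  · rw [if_neg hij]
    have hji : j < i := not_le.mp hij
    set F : Fin j → Fin n := fun k =>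
      ⟨(if (k : ℕ) < j - 1 then (k : ℕ) else i - 1) % n, Nat.mod_lt _ hn0⟩ with hF
    set G : Fin j → Fin n := fun l =>
      ⟨(if (l : ℕ) < j - 1 then (l : ℕ) else i) % n, Nat.mod_lt _ hn0⟩ with hG
    have hFval : ∀ k : Fin j, (F k : ℕ) = if (k : ℕ) < j - 1 then (k : ℕ) else i - 1 := by
      intro k
      have := k.isLt
      show (_ % n) = _
      apply Nat.mod_eq_of_lt
      split <;> omega
    have hGval : ∀ l : Fin j, (G l : ℕ) = if (l : ℕ) < j - 1 then (l : ℕ) else i := by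
      intro l
      have := l.isLt
      show (_ % n) = _
      apply Nat.mod_eq_of_lt
      split <;> omega
    have hFm : StrictMono F := by
      intro s t hst
      have hs' := s.isLt
      have ht' := t.isLt
      rw [Fin.lt_def] at hst ⊢
      rw [hFval s, hFval t]
      split_ifs <;> omega
    have hGm : StrictMono G := by
      intro s t hst
      have hs' := s.isLt
      have ht' := t.isLt
      rw [Fin.lt_def] at hst ⊢
      rw [hGval s, hGval t]
      split_ifs <;> omega
    have heq : ∀ t : Fin j, (t : ℕ) < j - 1 → F t = G t := by
      intro t ht
      rw [Fin.ext_iff, hFval t, hGval t, if_pos ht, if_pos ht]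
    have hos : OneStep F G := by
      constructor
      · intro t t' htt
        by_cases ht : (t : ℕ) < j - 1
        · left; exact heq t ht
        · right
          apply heq
          have h1 := t.isLt
          have h2 := t'.isLt
          have h3 : (t : ℕ) ≠ (t' : ℕ) := fun hc => htt (Fin.ext hc)
          omega
      · intro t
        rw [hFval t, hGval t]
        constructor <;> split_ifs <;> omega
    exact eqp n x htnn hd hbd j F G hFm hGm hos

lemma entry_pos_of_delta {n : ℕ} (hn : 2 ≤ n) (hn0 : 0 < n) {i j : ℕ}
    (hi1 : 1 ≤ i) (hi2 : i ≤ n-1) (hj1 : 1 ≤ j) (hj2 : j ≤ n-1)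
    {x : Matrix (Fin n) (Fin n) ℝ} (htnn : TotallyNonneg x) (hd : 0 < x.det)
    (hΔ : 0 < Delta hn0 i j x) :
    0 < x ⟨i-1, by omega⟩ ⟨i-1+1, by omega⟩ := by
  by_contra hnp
  have h0 : x ⟨i-1, by omega⟩ ⟨i-1+1, by omega⟩ = 0 :=
    le_antisymm (not_lt.mp hnp) (tnn_entry htnn _ _)
  have hprop := prop_zero htnn (fun t => diagPos htnn hd t) (a := i-1) (by omega) h0
  have hzero : Delta hn0 i j x = 0 := by
    rw [Delta]
    by_cases hij : i ≤ j
    · rw [if_pos hij]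
      apply det_eq_zero_of_block _
        (Finset.univ.image (fun t : Fin i => (⟨(t : ℕ), by omega⟩ : Fin j)))
        (Finset.univ.image (fun t : Fin (j-i+1) => (⟨i-1+(t : ℕ), by
          have := t.isLt; omega⟩ : Fin j)))
      · intro s hs t ht
        rw [Finset.mem_image] at hs ht
        obtain ⟨s', _, rfl⟩ := hs
        obtain ⟨t', _, rfl⟩ := ht
        have hs1 : ((⟨(s' : ℕ), by omega⟩ : Fin j) : ℕ) < i := s'.isLt
        have ht1 : ¬ (((⟨i-1+(t' : ℕ), by have := t'.isLt; omega⟩ : Fin j)) : ℕ) < i - 1 := by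
          show ¬ (i-1+(t' : ℕ) < i - 1)
          omega
        show x _ _ = 0
        apply hprop
        · show (if (s' : ℕ) < i then (s' : ℕ) else (s' : ℕ) + 1) % n ≤ i - 1
          rw [if_pos hs1, Nat.mod_eq_of_lt (by have := s'.isLt; omega)]
          have := s'.isLt
          omega
        · show i - 1 < (if i-1+(t' : ℕ) < i - 1 then i-1+(t' : ℕ) else i-1+(t' : ℕ) + 1) % n
          rw [if_neg ht1, Nat.mod_eq_of_lt (by have := t'.isLt; omega)]
          omega
      · rw [Finset.card_image_of_injective _ (fun a b hab => by
            have h' : ((⟨(a : ℕ), by omega⟩ : Fin j) : ℕ) = ((⟨(b : ℕ), by omega⟩ : Fin j) : ℕ) :=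
              congrArg Fin.val hab
            exact Fin.ext (h' : (a : ℕ) = (b : ℕ))),
          Finset.card_image_of_injective _ (fun a b hab => by
            have h' : ((⟨i-1+(a : ℕ), by have := a.isLt; omega⟩ : Fin j) : ℕ)
                = ((⟨i-1+(b : ℕ), by have := b.isLt; omega⟩ : Fin j) : ℕ) :=
              congrArg Fin.val hab
            have h'' : i-1+(a : ℕ) = i-1+(b : ℕ) := h'
            exact Fin.ext (by omega))]
        simp only [Finset.card_univ, Fintype.card_fin]
        omega
    · rw [if_neg hij]
      apply det_eq_zero_of_block _ Finset.univ {⟨j-1, by omega⟩}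
      · intro s _ t ht
        rw [Finset.mem_singleton] at ht
        subst ht
        show x _ _ = 0
        apply hprop
        · show (if (s : ℕ) < j - 1 then (s : ℕ) else i - 1) % n ≤ i - 1
          have := s.isLt
          rw [Nat.mod_eq_of_lt (by split <;> omega)]
          split <;> omega
        · show i - 1 < (if (j-1 : ℕ) < j - 1 then (j-1 : ℕ) else i) % n
          rw [if_neg (by omega), Nat.mod_eq_of_lt (by omega)]
          omega
      · simp only [Finset.card_univ, Fintype.card_fin, Finset.card_singleton]
        omega
  rw [hzero] at hΔ
  exact absurd hΔ (lt_irrefl 0)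

end Osc

/-- Given arbitrary choices `j, j' : {1,…,n-1} → {1,…,n-1}` of indicator indices,
an invertible totally nonnegative matrix `x` is oscillatory iff for every
(1-indexed) `i ∈ {1,…,n-1}` the indicator minors `Δ_{j(i)→i}(x)` and
`Δ_{j'(i)→i}(xᵀ)` are positive. -/
theorem stmt9 (n : ℕ) (hn : 2 ≤ n) (j j' : ℕ → ℕ)
    (hj : ∀ i, 1 ≤ i → i ≤ n - 1 → 1 ≤ j i ∧ j i ≤ n - 1)
    (hj' : ∀ i, 1 ≤ i → i ≤ n - 1 → 1 ≤ j' i ∧ j' i ≤ n - 1)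
    (x : Matrix (Fin n) (Fin n) ℝ) (hx : IsUnit x) (htnn : TotallyNonneg x) :
    Oscillatory x ↔
      ∀ i, 1 ≤ i → i ≤ n - 1 →
        0 < Delta (by omega) i (j i) x ∧ 0 < Delta (by omega) i (j' i) xᵀ := by
  have hn0 : 0 < n := by omega
  have hd : 0 < x.det := Osc.det_pos_of_unit htnn hx
  have htnnT : TotallyNonneg xᵀ := Osc.tnn_transpose htnn
  have hdT : 0 < xᵀ.det := by rw [det_transpose]; exact hd
  constructor
  · intro hosc i h1 h2
    have hbd : Osc.Bidiag x := Osc.bidiag_of_osc htnn hd hosc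
    have hbdT : Osc.Bidiag xᵀ := Osc.bidiag_transpose hbd
    exact ⟨Osc.delta_pos hn hn0 h1 h2 (hj i h1 h2).1 (hj i h1 h2).2 htnn hd hbd,
           Osc.delta_pos hn hn0 h1 h2 (hj' i h1 h2).1 (hj' i h1 h2).2 htnnT hdT hbdT⟩
  · intro hΔ
    have hbd : Osc.Bidiag x := by
      intro a ha
      have h1 : 1 ≤ a + 1 := by omega
      have h2 : a + 1 ≤ n - 1 := by omega
      obtain ⟨hΔ1, hΔ2⟩ := hΔ (a+1) h1 h2
      have e1 := Osc.entry_pos_of_delta hn hn0 h1 h2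
        (hj (a+1) h1 h2).1 (hj (a+1) h1 h2).2 htnn hd hΔ1
      have e2 := Osc.entry_pos_of_delta hn hn0 h1 h2
        (hj' (a+1) h1 h2).1 (hj' (a+1) h1 h2).2 htnnT hdT hΔ2
      exact ⟨e1, e2⟩
    exact Osc.osc_of_bidiag hn htnn hd hbd
end

section
/- Let n ≥ 2 and set r = n−1. The word obtained by concatenating r−1 copies of the word (1, 2, …, r) does not contain, as a (not necessarily contiguous) subsequence, any reduced word for the longest element w₀ of the symmetric group S_n. -/
/-- The adjacent transposition `s_{k+1} = (k+1, k+2)` of `S_n` (0-indexed: it swaps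
positions `k` and `k+1`), for a letter `k : Fin (n-1)`. -/
def adjTransposition (n : ℕ) (k : Fin (n - 1)) : Equiv.Perm (Fin n) :=
  Equiv.swap ⟨k.val, by have := k.isLt; omega⟩ ⟨k.val + 1, by have := k.isLt; omega⟩

/-- A word in the letters `{1,…,n-1}` (encoded as `Fin (n-1)`) is a reduced word for the
longest element `w₀` of `S_n` (the reversal permutation) if the product of the
corresponding adjacent transpositions is `w₀` and its length is `ℓ(w₀) = n(n-1)/2`. -/
def IsReducedWordW0 (n : ℕ) (l : List (Fin (n - 1))) : Prop :=
  (l.map (adjTransposition n)).prod = (Fin.revPerm : Equiv.Perm (Fin n)) ∧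
    l.length = n * (n - 1) / 2

lemma aux_dec_sublist {α : Type*} [Preorder α] {c : ℕ} {b : List α}
    (hb : b.Pairwise (· < ·)) : ∀ {d : List α}, d.Pairwise (fun a b => b < a) →
    d.Sublist (List.replicate c b).flatten → d.length ≤ c := by
  induction c with
  | zero => intro d _ hs; simp at hs; simp [hs]
  | succ c ih =>
    intro d hd hs
    rw [List.replicate_succ, List.flatten_cons, List.sublist_append_iff] at hs
    obtain ⟨d1, d2, rfl, hs1, hs2⟩ := hs
    rw [List.pairwise_append] at hd
    have h1 : d1.length ≤ 1 := by
      match d1, hs1, hd.1 with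
      | [], _, _ => simp
      | [a], _, _ => simp
      | a :: b' :: t, hs1, hp =>
        have hlt : a < b' := (List.pairwise_cons.1 (List.Pairwise.sublist hs1 hb)).1 b' (by simp)
        have hgt : b' < a := (List.pairwise_cons.1 hp).1 b' (by simp)
        exact absurd hlt (lt_asymm hgt)
    have h2 : d2.length ≤ c := ih hd.2.1 hs2
    simp only [List.length_append]; omega

lemma aux_ivt {P : ℕ → Prop} : ∀ {m : ℕ}, ¬ P 0 → P m → ∃ k < m, ¬ P k ∧ P (k+1) := by
  intro m
  induction m with
  | zero => intro h0 hm; exact absurd hm h0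
  | succ m ih =>
    intro h0 hm
    by_cases hPm : P m
    · obtain ⟨k, hk, h⟩ := ih h0 hPm
      exact ⟨k, hk.trans (Nat.lt_succ_self m), h⟩
    · exact ⟨m, Nat.lt_succ_self m, hPm, hm⟩

lemma aux_swap_flip {n : ℕ} {AA BB u v : Fin n} (hAB : BB.val = AA.val + 1) (huv : u < v)
    (hflip : ¬ (Equiv.swap AA BB u < Equiv.swap AA BB v)) : u = AA ∧ v = BB := by
  have hABne : AA ≠ BB := by intro h; rw [h] at hAB; omega
  rw [Fin.lt_def] at huv
  by_cases h1 : u = AA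
  · subst h1
    by_cases h2 : v = BB
    · exact ⟨rfl, h2⟩
    · exfalso
      have hvA : v ≠ u := by intro h; rw [h] at huv; omega
      rw [Equiv.swap_apply_left, Equiv.swap_apply_of_ne_of_ne hvA h2] at hflip
      have : v.val ≠ BB.val := fun h => h2 (Fin.ext h)
      exact hflip (by rw [Fin.lt_def]; omega)
  · by_cases h1' : u = BB
    · exfalso
      subst h1'
      have hvA : v ≠ AA := by intro h; rw [h] at huv; omega
      have hvB : v ≠ u := by intro h; rw [h] at huv; omega
      rw [Equiv.swap_apply_right, Equiv.swap_apply_of_ne_of_ne hvA hvB] at hflip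
      exact hflip (by rw [Fin.lt_def]; omega)
    · exfalso
      by_cases h2 : v = AA
      · subst h2
        rw [Equiv.swap_apply_of_ne_of_ne h1 h1', Equiv.swap_apply_left] at hflip
        exact hflip (by rw [Fin.lt_def]; omega)
      · by_cases h2' : v = BB
        · subst h2'
          rw [Equiv.swap_apply_of_ne_of_ne h1 h1', Equiv.swap_apply_right] at hflip
          have : u.val ≠ AA.val := fun h => h1 (Fin.ext h)
          have : ¬ (u < AA) := hflip
          rw [Fin.lt_def] at this
          omega
        · rw [Equiv.swap_apply_of_ne_of_ne h1 h1', Equiv.swap_apply_of_ne_of_ne h2 h2'] at hflip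
          exact hflip (by rw [Fin.lt_def]; omega)

lemma aux_extract (n : ℕ) (hn : 2 ≤ n) (l : List (Fin (n-1)))
    (h1 : (l.map (adjTransposition n)).prod = (Fin.revPerm : Equiv.Perm (Fin n)))
    (h2 : l.length = n * (n - 1) / 2) :
    ∃ d : List (Fin (n-1)), d.Sublist l ∧ d.length = n - 1 ∧
      d.Pairwise (fun a b => b < a) := by
  set m := l.length with hm
  have hd0 : (0:ℕ) < n - 1 := by omega
  set d0 : Fin (n-1) := ⟨0, hd0⟩ with hd0def
  set z0 : Fin n := ⟨0, by omega⟩ with hz0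
  set j : ℕ → Fin (n-1) := fun k => l.getD k d0 with hj
  set A : ℕ → Fin n := fun k => ⟨(j k).val, by have := (j k).isLt; omega⟩ with hA
  set B : ℕ → Fin n := fun k => ⟨(j k).val + 1, by have := (j k).isLt; omega⟩ with hB
  set ρ : ℕ → Equiv.Perm (Fin n) := fun k => ((l.drop k).map (adjTransposition n)).prod with hρ
  set q : ℕ → Fin n := fun k => ρ k z0 with hq
  set g : ℕ → Sym2 (Fin n) := fun k => s((ρ (k+1))⁻¹ (A k), (ρ (k+1))⁻¹ (B k)) with hg
  have hABval : ∀ k, (B k).val = (A k).val + 1 := fun k => rfl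
  have hABne : ∀ k, A k ≠ B k := by
    intro k h
    have := congrArg Fin.val h
    simp [hA, hB] at this
  have hswap : ∀ k, adjTransposition n (j k) = Equiv.swap (A k) (B k) := fun k => rfl
  have hρstep : ∀ k, k < m → ρ k = Equiv.swap (A k) (B k) * ρ (k+1) := by
    intro k hk
    have : l.drop k = l[k] :: l.drop (k+1) := List.drop_eq_getElem_cons hk
    rw [hρ]
    simp only [this, List.map_cons, List.prod_cons]
    congr 1
    rw [← hswap, hj]
    congr 1
    exact (List.getD_eq_getElem l d0 hk).symm
  have hρm : ρ m = 1 := by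
    have hdm : l.drop m = [] := by rw [hm]; exact List.drop_length
    show ((l.drop m).map (adjTransposition n)).prod = 1
    rw [hdm]; simp
  have hρ0 : ρ 0 = (Fin.revPerm : Equiv.Perm (Fin n)) := by simpa [hρ] using h1
  have hstep : ∀ k, k < m → q k = Equiv.swap (A k) (B k) (q (k+1)) := by
    intro k hk
    rw [hq]
    simp only [hρstep k hk, Equiv.Perm.mul_apply]
  -- pair flipped at step k
  have hgdiag : ∀ k, ¬ (g k).IsDiag := by
    intro k h
    rw [hg] at h
    simp only [Sym2.mk_isDiag_iff] at h
    exact hABne k ((ρ (k+1))⁻¹.injective h)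
  -- surjectivity of g on non-diagonal pairs
  have key : ∀ a b : Fin n, a < b → ∃ k ∈ Finset.range m, g k = s(a, b) := by
    intro a b hab
    have h0 : ¬ (ρ 0 a < ρ 0 b) := by
      rw [hρ0]
      simp only [Fin.revPerm_apply]
      rw [Fin.rev_lt_rev]
      exact not_lt_of_gt hab
    have hmm : ρ m a < ρ m b := by rw [hρm]; simpa using hab
    obtain ⟨k, hk, hnot, hyes⟩ := aux_ivt (P := fun k => ρ k a < ρ k b) h0 hmm
    have hflip : ¬ (Equiv.swap (A k) (B k) (ρ (k+1) a) < Equiv.swap (A k) (B k) (ρ (k+1) b)) := by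
      intro h
      apply hnot
      rw [hρstep k hk]
      simpa using h
    obtain ⟨ha, hb⟩ := aux_swap_flip (hABval k) hyes hflip
    refine ⟨k, Finset.mem_range.2 hk, ?_⟩
    show s((ρ (k+1))⁻¹ (A k), (ρ (k+1))⁻¹ (B k)) = s(a, b)
    rw [← ha, ← hb]
    simp
  classical
  set P : Finset (Sym2 (Fin n)) := Finset.univ.filter (fun z => ¬ z.IsDiag) with hPdef
  have hPcard : P.card = m := by
    have h := Sym2.card_subtype_not_diag (α := Fin n)
    rw [Fintype.card_subtype] at h
    calc P.card = (Fintype.card (Fin n)).choose 2 := h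
    _ = n * (n-1)/2 := by rw [Fintype.card_fin, Nat.choose_two_right]
    _ = m := h2.symm
  have hgP : ∀ k, g k ∈ P := by
    intro k
    rw [hPdef, Finset.mem_filter]
    exact ⟨Finset.mem_univ _, hgdiag k⟩
  have hsurj : ∀ z ∈ P, ∃ k, ∃ _ : k ∈ Finset.range m, g k = z := by
    intro z hz
    induction z using Sym2.ind with
    | _ x y =>
      have hxy : x ≠ y := by
        rw [hPdef, Finset.mem_filter] at hz
        intro h
        exact hz.2 (Sym2.mk_isDiag_iff.2 h)
      rcases lt_or_gt_of_ne hxy with h | h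
      · obtain ⟨k, hk, hgk⟩ := key x y h
        exact ⟨k, hk, hgk⟩
      · obtain ⟨k, hk, hgk⟩ := key y x h
        exact ⟨k, hk, by rw [hgk]; exact Sym2.eq_swap⟩
  have hinj := Finset.inj_on_of_surj_on_of_card_le (s := Finset.range m) (t := P)
    (fun k _ => g k) (fun k _ => hgP k) hsurj (by rw [Finset.card_range, hPcard])
  set T : Finset ℕ := (Finset.range m).filter (fun k => z0 ∈ g k) with hTdef
  set Q : Finset (Sym2 (Fin n)) := P.filter (fun z => z0 ∈ z) with hQdef
  have hTQ : T.card = Q.card := by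
    apply Finset.card_bij (fun k _ => g k)
    · intro k hk
      rw [hTdef, Finset.mem_filter] at hk
      rw [hQdef, Finset.mem_filter]
      exact ⟨hgP k, hk.2⟩
    · intro a ha b hb h
      rw [hTdef, Finset.mem_filter] at ha hb
      exact hinj ha.1 hb.1 h
    · intro z hz
      rw [hQdef, Finset.mem_filter] at hz
      obtain ⟨k, hk, hgk⟩ := hsurj z hz.1
      refine ⟨k, ?_, hgk⟩
      rw [hTdef, Finset.mem_filter]
      exact ⟨hk, by rw [hgk]; exact hz.2⟩
  have hQcard : Q.card = n - 1 := by
    have hb : (Finset.univ.filter (fun b : Fin n => b ≠ z0)).card = Q.card := by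
      apply Finset.card_bij (fun b _ => s(z0, b))
      · intro b hb
        rw [Finset.mem_filter] at hb
        rw [hQdef, Finset.mem_filter, hPdef, Finset.mem_filter]
        refine ⟨⟨Finset.mem_univ _, ?_⟩, Sym2.mem_iff.2 (Or.inl rfl)⟩
        rw [Sym2.mk_isDiag_iff]
        exact fun h => hb.2 h.symm
      · intro a _ b _ h
        exact Sym2.congr_right.1 h
      · intro z hz
        rw [hQdef, Finset.mem_filter, hPdef, Finset.mem_filter] at hz
        induction z using Sym2.ind with
        | _ x y =>
          have hxy : x ≠ y := fun h => hz.1.2 (Sym2.mk_isDiag_iff.2 h)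
          rcases Sym2.mem_iff.1 hz.2 with h | h
          · refine ⟨y, Finset.mem_filter.2 ⟨Finset.mem_univ _, fun hy => hxy (h.symm.trans hy.symm)⟩, ?_⟩
            rw [h]
          · refine ⟨x, Finset.mem_filter.2 ⟨Finset.mem_univ _, fun hx => hxy (hx.trans h)⟩, ?_⟩
            rw [h]
            exact Sym2.eq_swap
    have hcard : (Finset.univ.filter (fun b : Fin n => b ≠ z0)).card = n - 1 := by
      rw [Finset.filter_ne', Finset.card_erase_of_mem (Finset.mem_univ _), Finset.card_univ,
        Fintype.card_fin]
    omega
  have hTcard : T.card = n - 1 := by omega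
  set c : ℕ → ℕ := fun k => (T.filter (fun i => k ≤ i)).card with hcdef
  have hmemT : ∀ i ∈ T, i < m := by
    intro i hi
    rw [hTdef, Finset.mem_filter, Finset.mem_range] at hi
    exact hi.1
  have hc0 : c 0 = n - 1 := by
    rw [hcdef]
    simp only
    rw [Finset.filter_true_of_mem (fun i _ => Nat.zero_le i)]
    exact hTcard
  have hcm : c m = 0 := by
    rw [hcdef]
    simp only
    rw [Finset.card_eq_zero, Finset.filter_eq_empty_iff]
    intro i hi hle
    exact absurd (hmemT i hi) (by omega)
  have hcrec : ∀ k, c k = c (k+1) + (if k ∈ T then 1 else 0) := by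
    intro k
    by_cases hk : k ∈ T
    · rw [if_pos hk]
      have hins : T.filter (fun i => k ≤ i) = insert k (T.filter (fun i => k+1 ≤ i)) := by
        ext i
        simp only [Finset.mem_filter, Finset.mem_insert]
        constructor
        · rintro ⟨hiT, hle⟩
          rcases Nat.eq_or_lt_of_le hle with h | h
          · exact Or.inl h.symm
          · exact Or.inr ⟨hiT, h⟩
        · rintro (rfl | ⟨hiT, hle⟩)
          · exact ⟨hk, le_rfl⟩
          · exact ⟨hiT, by omega⟩
      show (T.filter (fun i => k ≤ i)).card = (T.filter (fun i => k+1 ≤ i)).card + 1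
      rw [hins, Finset.card_insert_of_notMem (by simp)]
    · rw [if_neg hk, Nat.add_zero]
      show (T.filter (fun i => k ≤ i)).card = (T.filter (fun i => k+1 ≤ i)).card
      congr 1
      ext i
      simp only [Finset.mem_filter]
      constructor
      · rintro ⟨hiT, hle⟩
        refine ⟨hiT, ?_⟩
        rcases Nat.eq_or_lt_of_le hle with h | h
        · exact absurd (h ▸ hiT) hk
        · exact h
      · rintro ⟨hiT, hle⟩
        exact ⟨hiT, by omega⟩
  have htouch : ∀ k, k < m → (k ∈ T ↔ q (k+1) = A k ∨ q (k+1) = B k) := by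
    intro k hk
    have h1 : k ∈ T ↔ z0 ∈ g k := by
      rw [hTdef, Finset.mem_filter, Finset.mem_range]
      exact ⟨fun h => h.2, fun h => ⟨hk, h⟩⟩
    rw [h1]
    show z0 ∈ s((ρ (k+1))⁻¹ (A k), (ρ (k+1))⁻¹ (B k)) ↔ _
    rw [Sym2.mem_iff, Equiv.Perm.eq_inv_iff_eq, Equiv.Perm.eq_inv_iff_eq]
  have hqstep2 : ∀ k, k < m → (q k).val ≤ (q (k+1)).val + (if k ∈ T then 1 else 0) ∧
      (q (k+1)).val ≤ (q k).val + (if k ∈ T then 1 else 0) := by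
    intro k hk
    by_cases hkT : k ∈ T
    · rw [if_pos hkT]
      have hv := hABval k
      rcases (htouch k hk).1 hkT with h | h
      · have e1 : q k = B k := by rw [hstep k hk, h, Equiv.swap_apply_left]
        have e2 : (q k).val = (B k).val := by rw [e1]
        have e3 : (q (k+1)).val = (A k).val := by rw [h]
        omega
      · have e1 : q k = A k := by rw [hstep k hk, h, Equiv.swap_apply_right]
        have e2 : (q k).val = (A k).val := by rw [e1]
        have e3 : (q (k+1)).val = (B k).val := by rw [h]
        omega
    · rw [if_neg hkT]
      have e1 : q k = q (k+1) := by
        rw [hstep k hk]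
        apply Equiv.swap_apply_of_ne_of_ne
        · exact fun h => hkT ((htouch k hk).2 (Or.inl h))
        · exact fun h => hkT ((htouch k hk).2 (Or.inr h))
      have e2 : (q k).val = (q (k+1)).val := by rw [e1]
      omega
  have hqm : (q m).val = 0 := by
    show ((ρ m) z0).val = 0
    rw [hρm]
    rfl
  have hq0v : (q 0).val = n - 1 := by
    show ((ρ 0) z0).val = n - 1
    rw [hρ0, Fin.revPerm_apply, Fin.val_rev]
  have hI : ∀ k (hk : k ≤ m), (q k).val ≤ c k := by
    intro k hk
    induction hk using Nat.decreasingInduction with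
    | self => omega
    | of_succ k hkm ih =>
      have h := hqstep2 k hkm
      have hr := hcrec k
      omega
  have hII : ∀ k, k ≤ m → (q 0).val + c k ≤ (q k).val + c 0 := by
    intro k
    induction k with
    | zero => intro _; omega
    | succ k ih =>
      intro hk1
      have hkm : k < m := hk1
      have h := hqstep2 k hkm
      have hr := hcrec k
      have h2 := ih (Nat.le_of_lt hkm)
      omega
  have heq : ∀ k, k ≤ m → (q k).val = c k := by
    intro k hk
    have h1 := hI k hk
    have h2 := hII k hk
    omega
  have hletter : ∀ k, k ∈ T → (j k).val = c (k+1) := by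
    intro k hkT
    have hkm : k < m := hmemT k hkT
    have e1 := heq k (Nat.le_of_lt hkm)
    have e2 := heq (k+1) hkm
    have hr := hcrec k
    rw [if_pos hkT] at hr
    have hv := hABval k
    rcases (htouch k hkm).1 hkT with h | h
    · have e3 : (q (k+1)).val = (A k).val := by rw [h]
      have e4 : (A k).val = (j k).val := rfl
      omega
    · have e3 : (q (k+1)).val = (B k).val := by rw [h]
      have e5 : q k = A k := by rw [hstep k hkm, h, Equiv.swap_apply_right]
      have e6 : (q k).val = (A k).val := by rw [e5]
      omega
  have hdec : ∀ k1, k1 ∈ T → ∀ k2, k2 ∈ T → k1 < k2 → (j k2).val < (j k1).val := by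
    intro k1 h1T k2 h2T hlt
    rw [hletter k1 h1T, hletter k2 h2T]
    apply Finset.card_lt_card
    rw [Finset.ssubset_iff_of_subset (Finset.monotone_filter_right _ (fun i hi => by omega))]
    refine ⟨k2, Finset.mem_filter.2 ⟨h2T, by omega⟩, ?_⟩
    simp only [Finset.mem_filter]
    rintro ⟨_, hc⟩
    omega
  -- extract the decreasing sublist
  set L : List ℕ := T.sort (· ≤ ·) with hLdef
  have hLsort : L.Pairwise (· < ·) := (Finset.sortedLT_sort T).pairwise
  have hLmemT : ∀ k ∈ L, k ∈ T := fun k hk => (Finset.mem_sort _).1 hk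
  have hLmem : ∀ k ∈ L, k < l.length := fun k hk => hmemT k (hLmemT k hk)
  have hLlen : L.length = n - 1 := by
    rw [hLdef, Finset.length_sort]
    exact hTcard
  refine ⟨(L.pmap (fun k h => (⟨k, h⟩ : Fin l.length)) hLmem).map (fun x => l[x]), ?_, ?_, ?_⟩
  · apply List.map_getElem_sublist
    rw [List.pairwise_pmap]
    exact hLsort.imp_of_mem (fun _ _ h _ _ => Fin.mk_lt_mk.2 h)
  · rw [List.length_map, List.length_pmap, hLlen]
  · rw [List.pairwise_map, List.pairwise_pmap]
    apply hLsort.imp_of_mem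
    intro k1 k2 hk1 hk2 hlt h1 h2
    have e1 : l[(⟨k1, h1⟩ : Fin l.length)] = j k1 := by
      show l[k1] = j k1
      rw [hj]
      exact (List.getD_eq_getElem l d0 h1).symm
    have e2 : l[(⟨k2, h2⟩ : Fin l.length)] = j k2 := by
      show l[k2] = j k2
      rw [hj]
      exact (List.getD_eq_getElem l d0 h2).symm
    rw [e1, e2, Fin.lt_def]
    exact hdec k1 (hLmemT k1 hk1) k2 (hLmemT k2 hk2) hlt


/-- The concatenation of `n-2` copies of the word `(1, 2, …, n-1)` (encoded as
`List.finRange (n-1)`) contains no reduced word for the longest element `w₀` of `S_n`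
as a subsequence. -/
theorem stmt12 (n : ℕ) (hn : 2 ≤ n) :
    ¬ ∃ l : List (Fin (n - 1)), IsReducedWordW0 n l ∧
        l.Sublist (List.replicate (n - 2) (List.finRange (n - 1))).flatten := by
  rintro ⟨l, ⟨h1, h2⟩, hsub⟩
  obtain ⟨d, hdl, hdlen, hdpw⟩ := aux_extract n hn l h1 h2
  have hbig : d.Sublist (List.replicate (n - 2) (List.finRange (n - 1))).flatten :=
    hdl.trans hsub
  have hle : d.length ≤ n - 2 :=
    aux_dec_sublist (List.pairwise_lt_finRange (n - 1)) hdpw hbig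
  omega
end
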